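/- arXiv:2302.12741 — 13 statements merged into one kernel-verified Lean document; each statement's English description precedes it below -/
import Mathlib

section
/- For every n ≥ 2, the number of Catalan words of length n avoiding the consecutive pattern pair (≤, ≥) is exactly 2; the only such words are 01⋯(n−1) and 001⋯(n−2). -/
/-- A Catalan word: first letter is 0 and each letter is at most the previous plus one. -/
def IsCatalanWord (w : List ℕ) : Prop :=
  (0 < w.length → w.getD 0 0 = 0) ∧
  ∀ i, i + 1 < w.length → w.getD (i + 1) 0 ≤ w.getD i 0 + 1

/-- `w` avoids the consecutive pattern pair `(X, Y)`. -/
def AvoidsPair (X Y : ℕ → ℕ → Prop) (w : List ℕ) : Prop :=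
  ∀ i, i + 2 < w.length →
    ¬ (X (w.getD i 0) (w.getD (i + 1) 0) ∧ Y (w.getD (i + 1) 0) (w.getD (i + 2) 0))

/-- Number of descents of `w`. -/
def descents (w : List ℕ) : ℕ :=
  ((Finset.range (w.length - 1)).filter (fun i => w.getD (i + 1) 0 < w.getD i 0)).card

/-- Catalan words of length `n` avoiding `(X,Y)`. -/
def CW (n : ℕ) (X Y : ℕ → ℕ → Prop) : Set (List ℕ) :=
  {w | w.length = n ∧ IsCatalanWord w ∧ AvoidsPair X Y w}

private lemma getD_range' (n i : ℕ) : (List.range n).getD i 0 = if i < n then i else 0 := by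
  split
  · rw [List.getD_eq_getElem _ _ (by simpa)]; simp
  · rw [List.getD_eq_getElem?_getD, List.getElem?_eq_none (by simp; omega)]; rfl

private lemma gdc (n j : ℕ) :
    ((0 : ℕ) :: List.range n).getD (j + 1) 0 = if j < n then j else 0 := by
  rw [List.getD_cons_succ, getD_range']

private lemma mem1 (n : ℕ) (hn : 2 ≤ n) : List.range n ∈ CW n (· ≤ ·) (· ≥ ·) := by
  refine ⟨List.length_range, ⟨fun _ => by rw [getD_range']; simp, ?_⟩, ?_⟩
  · intro i hi
    rw [List.length_range] at hi
    rw [getD_range', getD_range', if_pos hi, if_pos (by omega)]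
  · intro i hi h
    rw [List.length_range] at hi
    rw [getD_range', getD_range', getD_range', if_pos (by omega), if_pos (by omega),
      if_pos (by omega)] at h
    omega

private lemma mem2 (n : ℕ) (hn : 2 ≤ n) : 0 :: List.range (n - 1) ∈ CW n (· ≤ ·) (· ≥ ·) := by
  have hlen : ((0 : ℕ) :: List.range (n - 1)).length = n := by simp; omega
  refine ⟨hlen, ⟨fun _ => rfl, ?_⟩, ?_⟩
  · intro i hi
    rw [hlen] at hi
    match i with
    | 0 => rw [gdc]; split_ifs <;> omega
    | (j + 1) =>
      rw [gdc, gdc]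
      split_ifs <;> omega
  · intro i hi h
    rw [hlen] at hi
    match i with
    | 0 =>
      rw [gdc, gdc] at h
      have : (0 : ℕ) :: List.range (n - 1) = 0 :: List.range (n - 1) := rfl
      simp only [show ((0:ℕ) :: List.range (n-1)).getD 0 0 = 0 from rfl] at h
      split_ifs at h <;> omega
    | (j + 1) =>
      rw [gdc, gdc, gdc] at h
      split_ifs at h <;> omega

theorem stmt_0 (n : ℕ) (hn : 2 ≤ n) :
    CW n (· ≤ ·) (· ≥ ·) = {List.range n, 0 :: List.range (n - 1)} ∧
    (CW n (· ≤ ·) (· ≥ ·)).ncard = 2 := by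
  have hne : List.range n ≠ 0 :: List.range (n - 1) := by
    intro h
    have := congrArg (fun l => l.getD 1 0) h
    simp only [getD_range', gdc] at this
    rw [if_pos (by omega), if_pos (by omega)] at this
    omega
  have heq : CW n (· ≤ ·) (· ≥ ·) = {List.range n, 0 :: List.range (n - 1)} := by
    ext w
    simp only [Set.mem_insert_iff, Set.mem_singleton_iff]
    constructor
    · rintro ⟨hlen, ⟨h0, hstep⟩, hav⟩
      rw [hlen] at hstep
      have h0' : w.getD 0 0 = 0 := h0 (by omega)
      have step : ∀ i, i + 2 < n → w.getD i 0 ≤ w.getD (i + 1) 0 →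
          w.getD (i + 2) 0 = w.getD (i + 1) 0 + 1 := by
        intro i hi hle
        have h2 : w.getD (i + 2) 0 ≤ w.getD (i + 1) 0 + 1 := hstep (i + 1) (by omega)
        have h3 : ¬ (w.getD (i + 1) 0 ≥ w.getD (i + 2) 0) :=
          fun hb => hav i (by omega) ⟨hle, hb⟩
        omega
      have h1le : w.getD 1 0 ≤ 1 := by
        have h := hstep 0 (by omega)
        have h' : w.getD 1 0 ≤ w.getD 0 0 + 1 := h
        omega
      interval_cases h1 : w.getD 1 0
      · -- f 1 = 0, word is 0 :: range (n-1)
        right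
        have inc : ∀ i, i + 1 < n → w.getD (i + 1) 0 = i := by
          intro i
          induction i using Nat.strong_induction_on with
          | _ i ih =>
            match i with
            | 0 => intro _; exact h1
            | 1 =>
              intro hi
              have h : w.getD 2 0 = w.getD 1 0 + 1 := step 0 (by omega) (by omega)
              show w.getD 2 0 = 1
              omega
            | (j + 2) =>
              intro hi
              have hj1 : w.getD (j + 1) 0 = j := ih j (by omega) (by omega)
              have hj2 : w.getD (j + 2) 0 = j + 1 := ih (j + 1) (by omega) (by omega)
              have h : w.getD (j + 3) 0 = w.getD (j + 2) 0 + 1 :=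
                step (j + 1) (by omega)
                  (show w.getD (j + 1) 0 ≤ w.getD (j + 2) 0 by omega)
              show w.getD (j + 3) 0 = j + 2
              omega
        apply List.ext_getElem (by simp [hlen]; omega)
        intro i hi1 hi2
        rw [hlen] at hi1
        match i with
        | 0 =>
          have h : w.getD 0 0 = w[0]'(by omega) := List.getD_eq_getElem w 0 (by omega)
          rw [← h, h0']
          rfl
        | (j + 1) =>
          have h : w.getD (j + 1) 0 = w[j + 1]'(by omega) :=
            List.getD_eq_getElem w 0 (by omega)
          rw [← h, inc j hi1]
          rw [List.getElem_cons_succ, List.getElem_range]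
      · -- f 1 = 1, word is range n
        left
        have inc : ∀ i, i < n → w.getD i 0 = i := by
          intro i
          induction i using Nat.strong_induction_on with
          | _ i ih =>
            match i with
            | 0 => intro _; exact h0'
            | 1 => intro _; exact h1
            | (j + 2) =>
              intro hi
              have hj1 : w.getD j 0 = j := ih j (by omega) (by omega)
              have hj2 : w.getD (j + 1) 0 = j + 1 := ih (j + 1) (by omega) (by omega)
              have h : w.getD (j + 2) 0 = w.getD (j + 1) 0 + 1 :=
                step j (by omega) (by omega)
              omega
        apply List.ext_getElem (by simp [hlen])
        intro i hi1 hi2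
        rw [hlen] at hi1
        have h : w.getD i 0 = w[i]'(by omega) := List.getD_eq_getElem w 0 (by omega)
        rw [← h, inc i hi1, List.getElem_range]
    · rintro (rfl | rfl)
      · exact mem1 n hn
      · exact mem2 n hn
  exact ⟨heq, by rw [heq]; exact Set.ncard_pair hne⟩
end

section
/- For every n ≥ 2, the number of Catalan words of length n avoiding the pattern pair (≤, ≠) is exactly 2; the only such words are 0ⁿ (n zeros) and 0 followed by n−1 ones. -/
lemma getD_rep (n i c : ℕ) : (List.replicate n c).getD i 0 = if i < n then c else 0 := by
  rcases lt_or_ge i n with h | h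
  · rw [List.getD_eq_getElem _ _ (by simpa using h)]; simp [h]
  · rw [List.getD_eq_default]; · simp [h, Nat.not_lt.2 h]
    · simpa using h

lemma mem_CW (n : ℕ) (hn : 2 ≤ n) (c : ℕ) (hc : c ≤ 1) :
    (0 :: List.replicate (n - 1) c) ∈ CW n (· ≤ ·) (· ≠ ·) := by
  have hget : ∀ i, (0 :: List.replicate (n - 1) c).getD i 0 =
      if i = 0 then 0 else if i < n then c else 0 := by
    intro i
    cases i with
    | zero => simp
    | succ j =>
      simp only [List.getD_cons_succ, getD_rep]
      have : j < n - 1 ↔ j + 1 < n := by omega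
      simp [this]
  refine ⟨by simp; omega, ⟨fun _ => by simp, ?_⟩, ?_⟩
  · intro i hi
    simp only [List.length_cons, List.length_replicate] at hi
    rw [hget, hget]
    split_ifs <;> omega
  · intro i hi
    simp only [List.length_cons, List.length_replicate] at hi
    rw [hget (i+1), hget (i+2)]
    have h1 : ¬ (i + 1 = 0) := by omega
    have h2 : i + 1 < n := by omega
    have h3 : i + 2 < n := by omega
    simp [h1, h2, h3]

theorem stmt_1 (n : ℕ) (hn : 2 ≤ n) :
    CW n (· ≤ ·) (· ≠ ·) = {List.replicate n 0, 0 :: List.replicate (n - 1) 1} ∧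
    (CW n (· ≤ ·) (· ≠ ·)).ncard = 2 := by
  have hrep0 : List.replicate n 0 = 0 :: List.replicate (n - 1) 0 := by
    cases n with
    | zero => omega
    | succ m => simp [List.replicate_succ]
  have hset : CW n (· ≤ ·) (· ≠ ·) = {List.replicate n 0, 0 :: List.replicate (n - 1) 1} := by
    ext w
    constructor
    · rintro ⟨hl, ⟨h0, hcat⟩, havoid⟩
      have h0' : w.getD 0 0 = 0 := h0 (by omega)
      -- all entries from index 1 equal w.getD 1 0
      have key : ∀ k, k + 2 ≤ n → w.getD (k + 1) 0 = w.getD 1 0 := by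
        intro k
        induction k using Nat.strong_induction_on with
        | _ k ih =>
          intro hk
          cases k with
          | zero => rfl
          | succ j =>
            have ihj : w.getD (j + 1) 0 = w.getD 1 0 := ih j (by omega) (by omega)
            have hle : w.getD j 0 ≤ w.getD (j + 1) 0 := by
              cases j with
              | zero => rw [h0']; omega
              | succ m =>
                rw [ihj, ih m (by omega) (by omega)]
            have hav := havoid j (by rw [hl]; omega)
            simp only [ne_eq, not_and, not_not] at hav
            have heq := hav hle
            rw [show j + 1 + 1 = j + 2 from rfl, ← heq, ihj]
      set c := w.getD 1 0 with hc
      have hc1 : c ≤ 1 := by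
        have := hcat 0 (by rw [hl]; omega)
        rw [Nat.zero_add, h0'] at this
        omega
      have hw : w = 0 :: List.replicate (n - 1) c := by
        apply List.ext_getElem (by simp [hl]; omega)
        intro i h1 h2
        rw [← List.getD_eq_getElem _ 0 h1, ← List.getD_eq_getElem _ 0 h2]
        cases i with
        | zero => simpa using h0'
        | succ j =>
          rw [List.getD_cons_succ, getD_rep]
          have hj : j < n - 1 := by rw [hl] at h1; omega
          rw [if_pos hj]
          cases j with
          | zero => rfl
          | succ m => exact key (m + 1) (by omega)
      interval_cases c
      · left; rw [hw, hrep0]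
      · right; exact hw
    · rintro (rfl | rfl)
      · rw [hrep0]; exact mem_CW n hn 0 (by omega)
      · exact mem_CW n hn 1 le_rfl
  refine ⟨hset, ?_⟩
  rw [hset, Set.ncard_pair]
  intro h
  have := congrArg (fun l => l.getD 1 0) h
  rw [hrep0] at this
  simp only [List.getD_cons_succ, getD_rep] at this
  have h1 : 0 < n - 1 := by omega
  simp [h1] at this
end

section
/- For every n ≥ 1, the number of Catalan words of length n avoiding the pattern pair (≤, ≤) equals 2 if n is even and 1 if n is odd. Explicitly, the words are (01)^{n/2} and (01)^{(n−2)/2}00 when n is even, and (01)^{(n−1)/2}0 when n is odd. -/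
lemma getD_alt (n i : ℕ) : ((List.range n).map (· % 2)).getD i 0
    = if i < n then i % 2 else 0 := by
  rcases lt_or_ge i n with h | h
  · simp [List.getD, h]
  · rw [List.getD, List.getElem?_eq_none (by simpa using h)]
    rw [if_neg (by omega)]
    rfl

lemma getD_b (n i : ℕ) :
    ((List.range (n - 2)).map (· % 2) ++ [0, 0]).getD i 0
      = if i < n - 2 then i % 2 else 0 := by
  rcases lt_or_ge i (n-2) with h | h
  · rw [List.getD, List.getElem?_append_left (by simpa using h)]
    simp [h, List.getElem?_map, List.getElem?_range h]
  · rw [List.getD, List.getElem?_append_right (by simpa using h)]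
    simp only [List.length_map, List.length_range]
    have : i - (n-2) = 0 ∨ i - (n-2) = 1 ∨ 2 ≤ i - (n-2) := by omega
    have hif : ¬ (i < n - 2) := by omega
    rcases this with h2 | h2 | h2 <;>
      [rw [h2]; rw [h2]; rw [List.getElem?_eq_none (by simpa using h2)]] <;> simp [hif]

lemma alt_mem (n : ℕ) : (List.range n).map (· % 2) ∈ CW n (· ≤ ·) (· ≤ ·) := by
  refine ⟨by simp, ⟨?_, ?_⟩, ?_⟩
  · intro h; rw [getD_alt]; split_ifs <;> simp
  · intro i h
    simp only [List.length_map, List.length_range] at h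
    rw [getD_alt, getD_alt]
    split_ifs <;> omega
  · intro i h
    simp only [List.length_map, List.length_range] at h
    rw [getD_alt, getD_alt, getD_alt]
    split_ifs <;> omega

lemma b_mem (n : ℕ) (h2 : 2 ≤ n) (he : n % 2 = 0) :
    (List.range (n - 2)).map (· % 2) ++ [0, 0] ∈ CW n (· ≤ ·) (· ≤ ·) := by
  have hlen : ((List.range (n - 2)).map (· % 2) ++ [0, 0]).length = n := by
    simp; omega
  refine ⟨hlen, ⟨?_, ?_⟩, ?_⟩
  · intro h; rw [getD_b]; split_ifs <;> omega
  · intro i h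
    rw [hlen] at h
    rw [getD_b, getD_b]
    split_ifs <;> omega
  · intro i h
    rw [hlen] at h
    rw [getD_b, getD_b, getD_b]
    split_ifs <;> omega

lemma key (n : ℕ) (w : List ℕ) (hlen : w.length = n) (hcat : IsCatalanWord w)
    (hav : AvoidsPair (· ≤ ·) (· ≤ ·) w) :
    ∀ j, j < n → (j + 1 < n ∨ j % 2 = 0) → w.getD j 0 = j % 2 := by
  intro j
  induction j using Nat.strong_induction_on with
  | _ j ih =>
    obtain _ | i := j
    · intro hj _
      simpa using hcat.1 (by omega)
    · intro hj hcond
      have hi : w.getD i 0 = i % 2 := ih i (by omega) (by omega) (Or.inl (by omega))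
      rcases Nat.even_or_odd i with hpar | hpar
      · -- i even, i+1 odd
        have hi0 : i % 2 = 0 := Nat.even_iff.mp hpar
        have hlt : i + 2 < n := by omega
        have h1 := hav i (by omega)
        have h2 := hcat.2 i (by omega)
        simp only [hi, hi0] at h1 h2
        push_neg at h1
        have := h1 (Nat.zero_le _)
        omega
      · -- i odd, so i = i'+1 with i' even
        have hi1 : i % 2 = 1 := Nat.odd_iff.mp hpar
        obtain _ | i' := i
        · simp at hi1
        · have hi' : w.getD i' 0 = i' % 2 := ih i' (by omega) (by omega) (Or.inr (by omega))
          have hi'0 : i' % 2 = 0 := by omega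
          have h1 := hav i' (by omega)
          simp only [hi', hi'0, hi, hi1] at h1
          push_neg at h1
          have := h1 (by omega)
          have e : i' + 1 + 1 = i' + 2 := by omega
          rw [e]
          omega

lemma forward (n : ℕ) (w : List ℕ) (hw : w ∈ CW n (· ≤ ·) (· ≤ ·)) :
    w = (List.range n).map (· % 2) ∨
      (Even n ∧ 2 ≤ n ∧ w = (List.range (n - 2)).map (· % 2) ++ [0, 0]) := by
  obtain ⟨hlen, hcat, hav⟩ := hw
  have hk := key n w hlen hcat hav
  rcases Nat.eq_zero_or_pos n with h0 | hpos
  · left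
    subst h0
    simpa using List.length_eq_zero_iff.mp hlen
  rcases Nat.even_or_odd n with he | ho
  swap
  · -- n odd: all indices determined
    left
    apply List.ext_get (by simp [hlen])
    intro i h1 h2
    rw [← List.getD_eq_get _ _ ⟨i, h1⟩, ← List.getD_eq_get _ _ ⟨i, h2⟩]; simp only [Fin.val_mk]
    rw [hlen] at h1
    rw [getD_alt, if_pos h1, hk i h1]
    rcases Nat.lt_or_ge (i+1) n with h | h
    · exact Or.inl h
    · right
      have : i = n - 1 := by omega
      have : i % 2 = 0 := by
        obtain ⟨m, hm⟩ := ho; omega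
      omega
  · -- n even
    have h2n : 2 ≤ n := by obtain ⟨m, hm⟩ := he; omega
    -- last value
    have hlast : w.getD (n-1) 0 = 0 ∨ w.getD (n-1) 0 = 1 := by
      have hpre : w.getD (n-2) 0 = (n-2) % 2 := hk (n-2) (by omega) (Or.inl (by omega))
      have hpe : (n-2) % 2 = 0 := by obtain ⟨m, hm⟩ := he; omega
      have := hcat.2 (n-2) (by omega)
      rw [show n - 2 + 1 = n - 1 by omega] at this
      omega
    rcases hlast with hl | hl
    · right
      refine ⟨he, h2n, ?_⟩
      apply List.ext_get (by simp [hlen]; omega)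
      intro i h1 h2
      rw [← List.getD_eq_get _ _ ⟨i, h1⟩, ← List.getD_eq_get _ _ ⟨i, h2⟩]; simp only [Fin.val_mk]
      rw [hlen] at h1
      rw [getD_b]
      rcases Nat.lt_or_ge i (n-2) with h | h
      · rw [if_pos h, hk i (by omega) (Or.inl (by omega))]
      · rw [if_neg (by omega)]
        rcases Nat.lt_or_ge (i+1) n with h3 | h3
        · have : i = n - 2 := by omega
          rw [hk i (by omega) (Or.inl (by omega))]
          obtain ⟨m, hm⟩ := he; omega
        · have : i = n - 1 := by omega
          rw [this]; exact hl
    · left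
      apply List.ext_get (by simp [hlen])
      intro i h1 h2
      rw [← List.getD_eq_get _ _ ⟨i, h1⟩, ← List.getD_eq_get _ _ ⟨i, h2⟩]; simp only [Fin.val_mk]
      rw [hlen] at h1
      rw [getD_alt, if_pos h1]
      rcases Nat.lt_or_ge (i+1) n with h3 | h3
      · exact hk i h1 (Or.inl h3)
      · have hi : i = n - 1 := by omega
        rw [hi, hl]
        obtain ⟨m, hm⟩ := he; omega

lemma ne_words (n : ℕ) (he : Even n) (h2 : 2 ≤ n) :
    (List.range n).map (· % 2) ≠ (List.range (n - 2)).map (· % 2) ++ [0, 0] := by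
  intro h
  have := congrArg (fun l => List.getD l (n-1) 0) h
  simp only [getD_alt, getD_b] at this
  rw [if_pos (by omega), if_neg (by omega)] at this
  obtain ⟨m, hm⟩ := he; omega

theorem stmt_2 (n : ℕ) (hn : 1 ≤ n) :
    (Even n →
      CW n (· ≤ ·) (· ≤ ·) =
        {(List.range n).map (· % 2), (List.range (n - 2)).map (· % 2) ++ [0, 0]} ∧
      (CW n (· ≤ ·) (· ≤ ·)).ncard = 2) ∧
    (Odd n →
      CW n (· ≤ ·) (· ≤ ·) = {(List.range n).map (· % 2)} ∧
      (CW n (· ≤ ·) (· ≤ ·)).ncard = 1) := by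
  constructor
  · intro he
    have h2 : 2 ≤ n := by obtain ⟨m, hm⟩ := he; omega
    have hset : CW n (· ≤ ·) (· ≤ ·) =
        {(List.range n).map (· % 2), (List.range (n - 2)).map (· % 2) ++ [0, 0]} := by
      ext w
      constructor
      · intro hw
        rcases forward n w hw with h | ⟨_, _, h⟩
        · exact Or.inl h
        · exact Or.inr h
      · rintro (rfl | rfl)
        · exact alt_mem n
        · exact b_mem n h2 (by obtain ⟨m, hm⟩ := he; omega)
    refine ⟨hset, ?_⟩
    rw [hset]
    exact Set.ncard_pair (ne_words n he h2)
  · intro ho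
    have hset : CW n (· ≤ ·) (· ≤ ·) = {(List.range n).map (· % 2)} := by
      ext w
      constructor
      · intro hw
        rcases forward n w hw with h | ⟨he, _, _⟩
        · exact h
        · exact absurd he (Nat.not_even_iff_odd.mpr ho)
      · rintro rfl
        exact alt_mem n
    exact ⟨hset, by rw [hset]; exact Set.ncard_singleton _⟩
end

section
/- For every n ≥ 0, the number of Catalan words of length n avoiding the pattern pair (≥, ≥) equals the number of Catalan words of length n avoiding the consecutive pattern (<, <) (i.e., having no strictly increasing factor of length 3). Moreover, there is a bijection between these two sets preserving the number of descents. -/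
open Polynomial Finset

noncomputable def G : ℕ → ℕ → Bool → ℕ → Bool → Polynomial ℕ
  | 0, h, u, k, v => if k = h ∧ v = u then 1 else 0
  | n+1, h, false, k, v => G n (h+1) true k v + G n h false k v
      + ∑ x ∈ Finset.range h, Polynomial.X * G n x false k v
  | n+1, h, true, k, v => G n h false k v
      + ∑ x ∈ Finset.range h, Polynomial.X * G n x false k v

lemma G_zero (h : ℕ) (u : Bool) (k : ℕ) (v : Bool) :
    G 0 h u k v = if k = h ∧ v = u then 1 else 0 := rfl

lemma G_sf (n h k : ℕ) (v : Bool) : G (n+1) h false k v = G n (h+1) true k v + G n h false k v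
      + ∑ x ∈ Finset.range h, Polynomial.X * G n x false k v := rfl

lemma G_st (n h k : ℕ) (v : Bool) : G (n+1) h true k v = G n h false k v
      + ∑ x ∈ Finset.range h, Polynomial.X * G n x false k v := rfl

lemma G_vanish : ∀ n h u k v, h + n < k → G n h u k v = 0 := by
  intro n
  induction n with
  | zero => intro h u k v hk; rw [G_zero, if_neg]; rintro ⟨rfl, -⟩; omega
  | succ n ih =>
    intro h u k v hk
    have h1 : G n (h+1) true k v = 0 := ih _ _ _ _ (by omega)
    have h2 : G n h false k v = 0 := ih _ _ _ _ (by omega)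
    have h3 : ∀ x ∈ Finset.range h, Polynomial.X * G n x false k v = 0 := by
      intro x hx; rw [Finset.mem_range] at hx; rw [ih _ _ _ _ (by omega), mul_zero]
    cases u
    · rw [G_sf, Finset.sum_congr rfl h3]; simp [h1, h2]
    · rw [G_st, Finset.sum_congr rfl h3]; simp [h2]

lemma G_S1 : ∀ n h u k, G (n+1) h u (k+1) true = G n h u k false := by
  intro n
  induction n with
  | zero =>
    intro h u k
    have hz : ∀ x ∈ Finset.range h, Polynomial.X * G 0 x false (k+1) true = 0 := by
      intro x hx; rw [G_zero, if_neg (by simp), mul_zero]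
    cases u
    · rw [G_sf, Finset.sum_congr rfl hz, G_zero, G_zero, G_zero]
      by_cases hkh : k = h <;> simp [hkh]
    · rw [G_st, Finset.sum_congr rfl hz, G_zero, G_zero]
      simp
  | succ n ih =>
    intro h u k
    cases u
    · rw [G_sf (n+1) h (k+1) true, G_sf n h k false, ih, ih,
        Finset.sum_congr rfl (fun x _ => by rw [ih])]
    · rw [G_st (n+1) h (k+1) true, G_st n h k false, ih,
        Finset.sum_congr rfl (fun x _ => by rw [ih])]

lemma G_S1z : ∀ n h u, G (n+1) h u 0 true = 0 := by
  intro n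
  induction n with
  | zero =>
    intro h u
    have hz : ∀ x ∈ Finset.range h, Polynomial.X * G 0 x false 0 true = 0 := by
      intro x hx; rw [G_zero, if_neg (by simp), mul_zero]
    cases u
    · rw [G_sf, Finset.sum_congr rfl hz, G_zero, G_zero]; simp
    · rw [G_st, Finset.sum_congr rfl hz, G_zero]; simp
  | succ n ih =>
    intro h u
    cases u
    · rw [G_sf, ih, ih, Finset.sum_congr rfl (fun x _ => by rw [ih, mul_zero])]; simp
    · rw [G_st, ih, Finset.sum_congr rfl (fun x _ => by rw [ih, mul_zero])]; simp

noncomputable def GG (n h : ℕ) (u : Bool) (j : ℕ) : Polynomial ℕ :=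
  G n h u j true + G n h u j false

lemma GG_vanish (n h : ℕ) (u : Bool) (j : ℕ) (hj : h + n < j) : GG n h u j = 0 := by
  rw [GG, G_vanish _ _ _ _ _ hj, G_vanish _ _ _ _ _ hj, add_zero]

lemma GG_zero (h : ℕ) (u : Bool) (j : ℕ) : GG 0 h u j = if j = h then 1 else 0 := by
  cases u <;> simp [GG, G_zero]

lemma GG_sf (n h j : ℕ) : GG (n+1) h false j = GG n (h+1) true j + GG n h false j
    + ∑ x ∈ Finset.range h, Polynomial.X * GG n x false j := by
  simp only [GG, G_sf, mul_add, Finset.sum_add_distrib]; ring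

lemma GG_st (n h j : ℕ) : GG (n+1) h true j = GG n h false j
    + ∑ x ∈ Finset.range h, Polynomial.X * GG n x false j := by
  simp only [GG, G_st, mul_add, Finset.sum_add_distrib]; ring

lemma sum_Icc_extend (k A B : ℕ) (hAB : A ≤ B) (f : ℕ → Polynomial ℕ)
    (hf : ∀ j, A < j → f j = 0) :
    ∑ j ∈ Finset.Icc k A, f j = ∑ j ∈ Finset.Icc k B, f j :=
  Finset.sum_subset (Finset.Icc_subset_Icc_right hAB)
    (fun x hx hnx => hf x (by simp only [Finset.mem_Icc] at hx hnx; omega))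

lemma G_S2 : ∀ n h u k, G (n+1) h u k false
    = ∑ j ∈ Finset.Icc k (h+n), (if k < j then (Polynomial.X : Polynomial ℕ) else 1) * GG n h u j := by
  intro n
  induction n with
  | zero =>
    intro h u k
    have hrhs : (∑ j ∈ Finset.Icc k (h+0), (if k < j then (Polynomial.X : Polynomial ℕ) else 1) * GG 0 h u j)
        = if k ≤ h then (if k < h then Polynomial.X else 1) else 0 := by
      rw [Finset.sum_congr rfl (fun j _ => by rw [GG_zero])]
      by_cases hkh : k ≤ h
      · rw [Finset.sum_eq_single h]
        · simp [hkh]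
        · intro b hb hbh; rw [if_neg hbh, mul_zero]
        · intro hh; exact absurd (Finset.mem_Icc.2 ⟨hkh, by omega⟩) hh
      · rw [if_neg hkh, Finset.Icc_eq_empty (by omega), Finset.sum_empty]
    rw [hrhs]
    have hsum : ∀ hh : ℕ, (∑ x ∈ Finset.range hh, Polynomial.X * G 0 x false k false)
        = if k < hh then Polynomial.X else 0 := by
      intro hh
      have : ∀ x ∈ Finset.range hh, Polynomial.X * G 0 x false k false
          = if x = k then Polynomial.X else 0 := by
        intro x _
        rw [G_zero]
        by_cases hxk : x = k
        · subst hxk; simp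
        · rw [if_neg (fun hc => hxk hc.1.symm), mul_zero, if_neg hxk]
      rw [Finset.sum_congr rfl this, Finset.sum_ite_eq' (Finset.range hh) k fun _ => Polynomial.X]
      simp [Finset.mem_range]
    cases u
    · rw [G_sf, hsum h, G_zero, G_zero]
      rcases lt_trichotomy k h with h1 | rfl | h1
      · simp [h1, Nat.le_of_lt h1, show ¬ k = h + 1 by omega, show ¬ k = h by omega]
      · simp
      · simp [show ¬ k < h by omega, show ¬ k ≤ h by omega, show ¬ k = h by omega,
          show (k = h + 1 ∧ (false:Bool) = true) = False by simp]
    · rw [G_st, hsum h, G_zero]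
      rcases lt_trichotomy k h with h1 | rfl | h1
      · simp [h1, Nat.le_of_lt h1, show ¬ k = h by omega]
      · simp
      · simp [show ¬ k < h by omega, show ¬ k ≤ h by omega, show ¬ k = h by omega]
  | succ n ih =>
    intro h u k
    have ext : ∀ (h' : ℕ) (u' : Bool), h' ≤ h + 1 →
        (∑ j ∈ Finset.Icc k (h'+n), (if k < j then (Polynomial.X : Polynomial ℕ) else 1) * GG n h' u' j)
        = ∑ j ∈ Finset.Icc k (h+(n+1)), (if k < j then (Polynomial.X : Polynomial ℕ) else 1) * GG n h' u' j := by
      intro h' u' hh'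
      exact sum_Icc_extend _ _ _ (by omega) _
        (fun j hj => by rw [GG_vanish n h' u' j (by omega), mul_zero])
    have hx3 : (∑ x ∈ Finset.range h, Polynomial.X * G (n+1) x false k false)
        = ∑ x ∈ Finset.range h, Polynomial.X *
            ∑ j ∈ Finset.Icc k (h+(n+1)), (if k < j then (Polynomial.X : Polynomial ℕ) else 1) * GG n x false j :=
      Finset.sum_congr rfl (fun x hx => by
        rw [ih x false k, ext x false (by simp only [Finset.mem_range] at hx; omega)])
    cases u
    · have hRHS : (∑ j ∈ Finset.Icc k (h+(n+1)), (if k < j then (Polynomial.X : Polynomial ℕ) else 1) * GG (n+1) h false j)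
          = ∑ j ∈ Finset.Icc k (h+(n+1)), (if k < j then (Polynomial.X : Polynomial ℕ) else 1) *
              (GG n (h+1) true j + GG n h false j + ∑ x ∈ Finset.range h, Polynomial.X * GG n x false j) :=
        Finset.sum_congr rfl fun j _ => by rw [GG_sf]
      rw [G_sf (n+1), ih (h+1) true k, ih h false k, hx3,
        ext (h+1) true (by omega), ext h false (by omega), hRHS]
      simp only [mul_add, Finset.sum_add_distrib, Finset.mul_sum]
      congr 1
      rw [Finset.sum_comm]
      exact Finset.sum_congr rfl fun j _ => Finset.sum_congr rfl fun x _ => by ring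
    · have hRHS : (∑ j ∈ Finset.Icc k (h+(n+1)), (if k < j then (Polynomial.X : Polynomial ℕ) else 1) * GG (n+1) h true j)
          = ∑ j ∈ Finset.Icc k (h+(n+1)), (if k < j then (Polynomial.X : Polynomial ℕ) else 1) *
              (GG n h false j + ∑ x ∈ Finset.range h, Polynomial.X * GG n x false j) :=
        Finset.sum_congr rfl fun j _ => by rw [GG_st]
      rw [G_st (n+1), ih h false k, hx3, ext h false (by omega), hRHS]
      simp only [mul_add, Finset.sum_add_distrib, Finset.mul_sum]
      congr 1
      rw [Finset.sum_comm]
      exact Finset.sum_congr rfl fun j _ => Finset.sum_congr rfl fun x _ => by ring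

noncomputable def MM (h k : ℕ) : Polynomial ℕ :=
  ∑ e ∈ Finset.range (h + 1), Polynomial.monomial e (h.choose e * k.choose e)

lemma MM_coeff (h k e : ℕ) : (MM h k).coeff e = h.choose e * k.choose e := by
  unfold MM
  rw [Polynomial.finset_sum_coeff]
  simp only [Polynomial.coeff_monomial]
  rw [Finset.sum_ite_eq' (Finset.range (h+1)) e]
  by_cases he : e ≤ h
  · rw [if_pos (Finset.mem_range.2 (Nat.lt_succ_of_le he))]
  · push_neg at he
    rw [if_neg (by simp; omega), Nat.choose_eq_zero_of_lt he, zero_mul]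

lemma MM_comm (h k : ℕ) : MM h k = MM k h := by
  ext e; rw [MM_coeff, MM_coeff, mul_comm]

lemma MM_zero_left (k : ℕ) : MM 0 k = 1 := by
  ext e
  rw [MM_coeff, Polynomial.coeff_one]
  cases e <;> simp [Nat.choose_zero_right, Nat.choose_eq_zero_of_lt]

lemma MM_zero_right (h : ℕ) : MM h 0 = 1 := by rw [MM_comm, MM_zero_left]

lemma hockey (b e : ℕ) : ∑ c ∈ Finset.range b, c.choose e = b.choose (e + 1) := by
  induction b with
  | zero => simp
  | succ b ih => rw [Finset.sum_range_succ, ih, Nat.choose_succ_succ, add_comm]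

lemma MM_succ (h j : ℕ) :
    MM (h + 1) j = MM h j + Polynomial.X * ∑ c ∈ Finset.range j, MM h c := by
  ext e
  rw [Polynomial.coeff_add, MM_coeff, MM_coeff]
  cases e with
  | zero => simp
  | succ e =>
    rw [Polynomial.coeff_X_mul, Polynomial.finset_sum_coeff]
    simp only [MM_coeff]
    rw [← Finset.mul_sum, hockey, Nat.choose_succ_succ]
    ring

noncomputable def FA : ℕ → ℕ → Bool → Polynomial ℕ
  | 0, _, _ => 1
  | n+1, h, true => FA n (h+1) false
  | n+1, h, false => FA n (h+1) false + FA n h true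
      + ∑ x ∈ Finset.range h, Polynomial.X * FA n x true

lemma FA_zero (h : ℕ) (s : Bool) : FA 0 h s = 1 := by cases s <;> rfl
lemma FA_st (n h : ℕ) : FA (n+1) h true = FA n (h+1) false := rfl
lemma FA_sf (n h : ℕ) : FA (n+1) h false = FA n (h+1) false + FA n h true
    + ∑ x ∈ Finset.range h, Polynomial.X * FA n x true := rfl

lemma tri_swap (N : ℕ) (f : ℕ → ℕ → Polynomial ℕ) :
    ∑ k ∈ Finset.range (N+2), ∑ j ∈ Finset.Icc k N, f k j
      = ∑ j ∈ Finset.range (N+1), ∑ k ∈ Finset.range (j+1), f k j := by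
  have h1 : ∀ k, ∑ j ∈ Finset.Icc k N, f k j
      = ∑ j ∈ Finset.range (N+1), if k ≤ j then f k j else 0 := by
    intro k
    rw [show Finset.Icc k N = (Finset.range (N+1)).filter (fun j => k ≤ j) by
      ext j; simp only [Finset.mem_Icc, Finset.mem_filter, Finset.mem_range]; omega]
    rw [Finset.sum_filter]
  have h2 : ∀ j ∈ Finset.range (N+1),
      (∑ k ∈ Finset.range (N+2), if k ≤ j then f k j else 0) = ∑ k ∈ Finset.range (j+1), f k j := by
    intro j hj
    rw [Finset.mem_range] at hj
    rw [show Finset.range (j+1) = (Finset.range (N+2)).filter (fun k => k ≤ j) by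
      ext k; simp only [Finset.mem_filter, Finset.mem_range]; omega]
    rw [Finset.sum_filter]
  rw [Finset.sum_congr rfl (fun k _ => h1 k), Finset.sum_comm, Finset.sum_congr rfl h2]

lemma inner_MM (h j : ℕ) :
    ∑ k ∈ Finset.range (j+1), (if k < j then (Polynomial.X : Polynomial ℕ) else 1) * MM h k
      = MM (h+1) j := by
  rw [Finset.sum_range_succ, if_neg (lt_irrefl j), one_mul,
    Finset.sum_congr rfl (fun k hk => by rw [if_pos (Finset.mem_range.1 hk)]),
    MM_succ, Finset.mul_sum]
  ring

theorem kernel (n : ℕ) : ∀ h,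
    (FA n h true = ∑ k ∈ Finset.range (n+1), MM h k * G n 0 false k false) ∧
    (FA n h false = ∑ k ∈ Finset.range (n+1), MM h k * (G n 0 false k false + G n 0 false k true)) := by
  induction n with
  | zero =>
    intro h
    constructor
    · rw [FA_zero, Finset.sum_range_one, G_zero, MM_zero_right]; simp
    · rw [FA_zero, Finset.sum_range_one, G_zero, G_zero, MM_zero_right]; simp
  | succ n ih =>
    intro h
    have hfalse : (∑ k ∈ Finset.range (n+2), MM h k * G (n+1) 0 false k false)
        = FA n (h+1) false := by
      rw [Finset.sum_congr rfl (fun k _ => by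
        rw [G_S2 n 0 false k, Nat.zero_add, Finset.mul_sum])]
      rw [tri_swap n (fun k j => MM h k * ((if k < j then (Polynomial.X:Polynomial ℕ) else 1) * GG n 0 false j))]
      have hin : ∀ j ∈ Finset.range (n+1),
          (∑ k ∈ Finset.range (j+1), MM h k * ((if k < j then (Polynomial.X:Polynomial ℕ) else 1) * GG n 0 false j))
          = MM (h+1) j * GG n 0 false j := by
        intro j _
        calc (∑ k ∈ Finset.range (j+1), MM h k * ((if k < j then (Polynomial.X:Polynomial ℕ) else 1) * GG n 0 false j))
            = ∑ k ∈ Finset.range (j+1), ((if k < j then (Polynomial.X:Polynomial ℕ) else 1) * MM h k) * GG n 0 false j :=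
              Finset.sum_congr rfl fun k _ => by ring
          _ = (∑ k ∈ Finset.range (j+1), (if k < j then (Polynomial.X:Polynomial ℕ) else 1) * MM h k) * GG n 0 false j := by
              rw [Finset.sum_mul]
          _ = MM (h+1) j * GG n 0 false j := by rw [inner_MM]
      rw [Finset.sum_congr rfl hin, (ih (h+1)).2]
      exact Finset.sum_congr rfl fun j _ => by rw [GG]; ring
    have htrue : (∑ k ∈ Finset.range (n+2), MM h k * G (n+1) 0 false k true)
        = FA n h true + ∑ x ∈ Finset.range h, Polynomial.X * FA n x true := by
      rw [Finset.sum_range_succ' (fun k => MM h k * G (n+1) 0 false k true) (n+1)]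
      rw [G_S1z n 0 false, mul_zero, add_zero,
        Finset.sum_congr rfl (fun j _ => by rw [G_S1 n 0 false j])]
      have expand : ∀ j ∈ Finset.range (n+1), MM h (j+1) * G n 0 false j false
          = MM h j * G n 0 false j false
            + ∑ c ∈ Finset.range h, Polynomial.X * (MM c j * G n 0 false j false) := by
        intro j _
        rw [MM_comm h (j+1), MM_succ j h, MM_comm j h]
        rw [add_mul, Finset.mul_sum, Finset.sum_mul]
        congr 1
        exact Finset.sum_congr rfl fun c _ => by rw [MM_comm j c]; ring
      rw [Finset.sum_congr rfl expand, Finset.sum_add_distrib, Finset.sum_comm]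
      congr 1
      · exact ((ih h).1).symm
      · exact Finset.sum_congr rfl fun c _ => by
          rw [(ih c).1, Finset.mul_sum]
    constructor
    · rw [FA_st]; exact hfalse.symm
    · rw [FA_sf, Finset.sum_congr rfl (fun k (_ : k ∈ Finset.range (n+2)) => by
        rw [mul_add]), Finset.sum_add_distrib, hfalse, htrue]
      ring

noncomputable def FBg (n h : ℕ) (s : Bool) : Polynomial ℕ :=
  ∑ k ∈ Finset.range (h + n + 1), GG n h s k

lemma sum_range_shrink (A B : ℕ) (hAB : A ≤ B) (f : ℕ → Polynomial ℕ)
    (hf : ∀ j, A ≤ j → f j = 0) :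
    ∑ j ∈ Finset.range B, f j = ∑ j ∈ Finset.range A, f j :=
  (Finset.sum_subset (Finset.range_subset_range.2 hAB)
    (fun x hx hnx => hf x (by simp only [Finset.mem_range] at hx hnx; omega))).symm

lemma FBg_zero (h : ℕ) (s : Bool) : FBg 0 h s = 1 := by
  unfold FBg
  rw [Finset.sum_congr rfl (fun k _ => GG_zero h s k),
    Finset.sum_ite_eq' (Finset.range (h+0+1)) h (fun _ => (1:Polynomial ℕ))]
  simp

lemma FBg_st (n h : ℕ) : FBg (n+1) h true = FBg n h false
    + ∑ x ∈ Finset.range h, Polynomial.X * FBg n x false := by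
  unfold FBg
  rw [Finset.sum_congr rfl (fun k (_ : k ∈ Finset.range (h+(n+1)+1)) => GG_st n h k),
    Finset.sum_add_distrib]
  congr 1
  · exact sum_range_shrink (h+n+1) (h+(n+1)+1) (by omega) _
      (fun j hj => GG_vanish n h false j (by omega))
  · rw [Finset.sum_comm]
    exact Finset.sum_congr rfl fun x hx => by
      rw [Finset.mem_range] at hx
      rw [← Finset.mul_sum, sum_range_shrink (x+n+1) (h+(n+1)+1) (by omega) _
        (fun j hj => GG_vanish n x false j (by omega))]

lemma FBg_sf (n h : ℕ) : FBg (n+1) h false = FBg n (h+1) true + FBg n h false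
    + ∑ x ∈ Finset.range h, Polynomial.X * FBg n x false := by
  unfold FBg
  rw [Finset.sum_congr rfl (fun k (_ : k ∈ Finset.range (h+(n+1)+1)) => GG_sf n h k),
    Finset.sum_add_distrib, Finset.sum_add_distrib]
  congr 1
  · congr 1
    · exact Finset.sum_congr (by congr 1; omega) fun _ _ => rfl
    · exact sum_range_shrink (h+n+1) (h+(n+1)+1) (by omega) _
        (fun j hj => GG_vanish n h false j (by omega))
  · rw [Finset.sum_comm]
    exact Finset.sum_congr rfl fun x hx => by
      rw [Finset.mem_range] at hx
      rw [← Finset.mul_sum, sum_range_shrink (x+n+1) (h+(n+1)+1) (by omega) _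
        (fun j hj => GG_vanish n x false j (by omega))]

theorem FA_eq_FBg (n : ℕ) : FA n 0 false = FBg n 0 false := by
  rw [(kernel n 0).2]
  unfold FBg
  rw [show (0:ℕ) + n + 1 = n + 1 by omega]
  exact Finset.sum_congr rfl fun k _ => by rw [MM_zero_left, one_mul, GG]; ring

def OkA : ℕ → Bool → List ℕ → Prop
  | _, _, [] => True
  | h, s, x :: r => x ≤ h + 1 ∧ (s = true → x = h + 1) ∧ OkA x (decide (x ≤ h)) r

def OkB : ℕ → Bool → List ℕ → Prop
  | _, _, [] => True
  | h, s, x :: r => x ≤ h + 1 ∧ (s = true → x ≤ h) ∧ OkB x (decide (x = h + 1)) r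

def desFrom : ℕ → List ℕ → ℕ
  | _, [] => 0
  | h, x :: r => (if x < h then 1 else 0) + desFrom x r

def CA : ℕ → ℕ → Bool → ℕ → Finset (List ℕ)
  | 0, _, _, d => if d = 0 then {([] : List ℕ)} else ∅
  | n+1, h, true, d => (CA n (h+1) false d).image (fun r => (h+1) :: r)
  | n+1, h, false, d =>
      ((CA n (h+1) false d).image (fun r => (h+1) :: r)
        ∪ (CA n h true d).image (fun r => h :: r))
      ∪ (if d = 0 then (∅ : Finset (List ℕ))
          else (Finset.range h).biUnion fun x => (CA n x true (d-1)).image (fun r => x :: r))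

def CB : ℕ → ℕ → Bool → ℕ → Finset (List ℕ)
  | 0, _, _, d => if d = 0 then {([] : List ℕ)} else ∅
  | n+1, h, true, d =>
      (CB n h false d).image (fun r => h :: r)
      ∪ (if d = 0 then (∅ : Finset (List ℕ))
          else (Finset.range h).biUnion fun x => (CB n x false (d-1)).image (fun r => x :: r))
  | n+1, h, false, d =>
      ((CB n (h+1) true d).image (fun r => (h+1) :: r)
        ∪ (CB n h false d).image (fun r => h :: r))
      ∪ (if d = 0 then (∅ : Finset (List ℕ))
          else (Finset.range h).biUnion fun x => (CB n x false (d-1)).image (fun r => x :: r))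

lemma CA_st (n h d : ℕ) : CA (n+1) h true d = (CA n (h+1) false d).image (fun r => (h+1) :: r) := rfl

lemma CA_sf (n h d : ℕ) : CA (n+1) h false d =
      ((CA n (h+1) false d).image (fun r => (h+1) :: r)
        ∪ (CA n h true d).image (fun r => h :: r))
      ∪ (if d = 0 then (∅ : Finset (List ℕ))
          else (Finset.range h).biUnion fun x => (CA n x true (d-1)).image (fun r => x :: r)) := rfl

lemma CB_st (n h d : ℕ) : CB (n+1) h true d =
      (CB n h false d).image (fun r => h :: r)
      ∪ (if d = 0 then (∅ : Finset (List ℕ))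
          else (Finset.range h).biUnion fun x => (CB n x false (d-1)).image (fun r => x :: r)) := rfl

lemma CB_sf (n h d : ℕ) : CB (n+1) h false d =
      ((CB n (h+1) true d).image (fun r => (h+1) :: r)
        ∪ (CB n h false d).image (fun r => h :: r))
      ∪ (if d = 0 then (∅ : Finset (List ℕ))
          else (Finset.range h).biUnion fun x => (CB n x false (d-1)).image (fun r => x :: r)) := rfl

lemma head_image_disj {s t : Finset (List ℕ)} {a b : ℕ} (hab : a ≠ b) :
    Disjoint (s.image (fun r => a :: r)) (t.image (fun r => b :: r)) := by
  rw [Finset.disjoint_left]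
  rintro w hw hw'
  simp only [Finset.mem_image] at hw hw'
  obtain ⟨r, -, rfl⟩ := hw
  obtain ⟨r', -, h2⟩ := hw'
  exact hab (List.cons.injEq .. ▸ h2).1.symm

lemma card_cons_image (s : Finset (List ℕ)) (a : ℕ) :
    (s.image (fun r => a :: r)).card = s.card :=
  Finset.card_image_of_injective _ (fun r r' h => (List.cons.injEq .. ▸ h).2)

lemma coeff_X_mul' (p : Polynomial ℕ) (d : ℕ) :
    (Polynomial.X * p).coeff d = if d = 0 then 0 else p.coeff (d-1) := by
  cases d with
  | zero => simp [Polynomial.mul_coeff_zero]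
  | succ d => rw [Polynomial.coeff_X_mul]; simp

lemma biUnion_card (n h d : ℕ) (C : ℕ → ℕ → Bool → ℕ → Finset (List ℕ))
    (s : Bool) :
    ((Finset.range h).biUnion fun x => ((C n x s (d-1)).image (fun r => x :: r))).card
      = ∑ x ∈ Finset.range h, (C n x s (d-1)).card := by
  rw [Finset.card_biUnion]
  · exact Finset.sum_congr rfl fun x _ => card_cons_image _ _
  · intro x _ y _ hxy
    exact head_image_disj hxy

lemma CA_card : ∀ n h s d, (CA n h s d).card = (FA n h s).coeff d := by
  intro n
  induction n with
  | zero =>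
    intro h s d
    rw [FA_zero, Polynomial.coeff_one]
    by_cases hd : d = 0 <;> simp [CA, hd]
  | succ n ih =>
    intro h s d
    cases s
    · rw [CA_sf]
      rw [Finset.card_union_of_disjoint, Finset.card_union_of_disjoint (head_image_disj (by omega)),
        card_cons_image, card_cons_image, FA_sf, Polynomial.coeff_add, Polynomial.coeff_add,
        Polynomial.finset_sum_coeff, ih, ih]
      · congr 1
        rw [Finset.sum_congr rfl (fun x (_ : x ∈ Finset.range h) => coeff_X_mul' (FA n x true) d)]
        by_cases hd : d = 0
        · simp [hd]
        · rw [if_neg hd, biUnion_card n h d CA true,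
            Finset.sum_congr rfl (fun x _ => ih x true (d-1)),
            Finset.sum_congr rfl (fun x (_ : x ∈ Finset.range h) => (if_neg hd : (if d = 0 then 0 else (FA n x true).coeff (d-1)) = _))]
      · -- disjointness of (U ∪ =) with the biUnion
        by_cases hd : d = 0
        · simp [hd]
        · rw [if_neg hd, Finset.disjoint_left]
          rintro w hw hw'
          simp only [Finset.mem_biUnion, Finset.mem_image, Finset.mem_union, Finset.mem_range] at hw hw'
          obtain ⟨x, hx, r, -, rfl⟩ := hw'
          rcases hw with ⟨r', -, h2⟩ | ⟨r', -, h2⟩ <;>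
            · have := (List.cons.injEq .. ▸ h2).1; omega
    · rw [CA_st, card_cons_image, FA_st, ih]

lemma CB_card : ∀ n h s d, (CB n h s d).card = (FBg n h s).coeff d := by
  intro n
  induction n with
  | zero =>
    intro h s d
    rw [FBg_zero, Polynomial.coeff_one]
    by_cases hd : d = 0 <;> simp [CB, hd]
  | succ n ih =>
    intro n' s d
    have hbi : ∀ h d, d ≠ 0 → ((if d = 0 then (∅ : Finset (List ℕ))
          else (Finset.range h).biUnion fun x => (CB n x false (d-1)).image (fun r => x :: r)).card)
        = ∑ x ∈ Finset.range h, (FBg n x false).coeff (d-1) := by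
      intro h d hd
      rw [if_neg hd, biUnion_card n h d CB false]
      exact Finset.sum_congr rfl fun x _ => ih x false (d-1)
    have hXsum : ∀ h d, (∑ x ∈ Finset.range h, Polynomial.X * FBg n x false).coeff d
        = if d = 0 then 0 else ∑ x ∈ Finset.range h, (FBg n x false).coeff (d-1) := by
      intro h d
      rw [Polynomial.finset_sum_coeff,
        Finset.sum_congr rfl (fun x (_ : x ∈ Finset.range h) => coeff_X_mul' (FBg n x false) d)]
      by_cases hd : d = 0 <;> simp [hd]
    have hdisj : ∀ (t : Finset (List ℕ)) (a : ℕ) (h d : ℕ), a ≥ h →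
        Disjoint (t.image (fun r => a :: r))
          (if d = 0 then (∅ : Finset (List ℕ))
            else (Finset.range h).biUnion fun x => (CB n x false (d-1)).image (fun r => x :: r)) := by
      intro t a h d ha
      by_cases hd : d = 0
      · simp [hd]
      · rw [if_neg hd, Finset.disjoint_left]
        rintro w hw hw'
        simp only [Finset.mem_biUnion, Finset.mem_image, Finset.mem_range] at hw hw'
        obtain ⟨x, hx, r, -, rfl⟩ := hw'
        obtain ⟨r', -, h2⟩ := hw
        have := (List.cons.injEq .. ▸ h2).1; omega
    cases s
    · rw [CB_sf, Finset.card_union_of_disjoint, Finset.card_union_of_disjoint (head_image_disj (by omega)),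
        card_cons_image, card_cons_image, FBg_sf, Polynomial.coeff_add, Polynomial.coeff_add,
        ih, ih, hXsum]
      · by_cases hd : d = 0
        · simp [hd]
        · rw [hbi n' d hd, if_neg hd]
      · rw [Finset.disjoint_union_left]
        exact ⟨hdisj _ _ _ _ (by omega), hdisj _ _ _ _ (by omega)⟩
    · rw [CB_st, Finset.card_union_of_disjoint (hdisj _ _ _ _ (by omega)),
        card_cons_image, FBg_st, Polynomial.coeff_add, ih, hXsum]
      by_cases hd : d = 0
      · simp [hd]
      · rw [hbi n' d hd, if_neg hd]

lemma CA_mem : ∀ n h s d w, w ∈ CA n h s d ↔ (w.length = n ∧ OkA h s w ∧ desFrom h w = d) := by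
  intro n
  induction n with
  | zero =>
    intro h s d w
    by_cases hd : d = 0 <;> cases w <;> simp [CA, hd, OkA, desFrom] <;> omega
  | succ n ih =>
    intro h s d w
    cases s
    · rw [CA_sf]
      cases w with
      | nil =>
        simp only [Finset.mem_union, Finset.mem_image, Finset.mem_biUnion, Finset.mem_range]
        constructor
        · rintro ((⟨r, -, h0⟩ | ⟨r, -, h0⟩) | h0)
          · exact absurd h0 (by simp)
          · exact absurd h0 (by simp)
          · by_cases hd : d = 0
            · rw [hd] at h0; simp at h0
            · rw [if_neg hd] at h0; simp only [Finset.mem_biUnion] at h0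
              obtain ⟨x, -, h0⟩ := h0
              simp at h0
        · rintro ⟨h0, -⟩; simp at h0
      | cons x r =>
        simp only [Finset.mem_union, Finset.mem_image, List.cons.injEq, List.length_cons,
          OkA, desFrom]
        constructor
        · rintro ((⟨r', hr', rfl, rfl⟩ | ⟨r', hr', rfl, rfl⟩) | hbi)
          · obtain ⟨hlen, hok, hdes⟩ := (ih _ _ _ _).1 hr'
            refine ⟨by omega, ⟨le_refl _, fun _ => rfl, ?_⟩, ?_⟩
            · rwa [show decide (h+1 ≤ h) = false by simp]
            · rw [if_neg (by omega)]; omega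
          · obtain ⟨hlen, hok, hdes⟩ := (ih _ _ _ _).1 hr'
            refine ⟨by omega, ⟨by omega, by simp, ?_⟩, ?_⟩
            · rwa [show decide (h ≤ h) = true by simp]
            · rw [if_neg (by omega)]; omega
          · by_cases hd : d = 0
            · rw [hd] at hbi; simp at hbi
            · rw [if_neg hd] at hbi
              simp only [Finset.mem_biUnion, Finset.mem_range, Finset.mem_image,
                List.cons.injEq] at hbi
              obtain ⟨x', hx', r', hr', rfl, rfl⟩ := hbi
              obtain ⟨hlen, hok, hdes⟩ := (ih _ _ _ _).1 hr'
              refine ⟨by omega, ⟨by omega, by simp, ?_⟩, ?_⟩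
              · rwa [show decide (x' ≤ h) = true by simp; omega]
              · rw [if_pos (by omega)]; omega
        · rintro ⟨hlen, ⟨hx1, -, hok⟩, hdes⟩
          rcases Nat.lt_or_ge x h with hx | hx
          · rw [if_pos hx] at hdes
            right
            rw [if_neg (by omega : ¬ d = 0)]
            simp only [Finset.mem_biUnion, Finset.mem_range, Finset.mem_image, List.cons.injEq]
            refine ⟨x, hx, r, (ih _ _ _ _).2 ⟨by omega, ?_, by omega⟩, rfl, rfl⟩
            rwa [show decide (x ≤ h) = true by simp; omega] at hok
          · left
            rcases Nat.eq_or_lt_of_le hx with hxh | hxh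
            · subst hxh
              rw [if_neg (by omega)] at hdes
              right
              refine ⟨r, (ih _ _ _ _).2 ⟨by omega, ?_, by omega⟩, rfl, rfl⟩
              rwa [show decide (h ≤ h) = true by simp] at hok
            · have hx1' : x = h + 1 := by omega
              subst hx1'
              rw [if_neg (by omega)] at hdes
              left
              refine ⟨r, (ih _ _ _ _).2 ⟨by omega, ?_, by omega⟩, rfl, rfl⟩
              rwa [show decide (h + 1 ≤ h) = false by simp] at hok
    · rw [CA_st]
      cases w with
      | nil =>
        simp only [Finset.mem_image]
        constructor
        · rintro ⟨r, -, h0⟩; exact absurd h0 (by simp)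
        · rintro ⟨h0, -⟩; simp at h0
      | cons x r =>
        simp only [Finset.mem_image, List.cons.injEq, List.length_cons, OkA, desFrom]
        constructor
        · rintro ⟨r', hr', rfl, rfl⟩
          obtain ⟨hlen, hok, hdes⟩ := (ih _ _ _ _).1 hr'
          refine ⟨by omega, ⟨le_refl _, fun _ => rfl, ?_⟩, ?_⟩
          · rwa [show decide (h+1 ≤ h) = false by simp]
          · rw [if_neg (by omega)]; omega
        · rintro ⟨hlen, ⟨hx1, hs, hok⟩, hdes⟩
          have hx : x = h + 1 := by first | exact hs rfl | exact hs trivial | simpa using hs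
          subst hx
          refine ⟨r, (ih _ _ _ _).2 ⟨by omega, ?_, ?_⟩, rfl, rfl⟩
          · rwa [show decide (h+1 ≤ h) = false by simp] at hok
          · rw [if_neg (by omega)] at hdes; omega

lemma CB_mem : ∀ n h s d w, w ∈ CB n h s d ↔ (w.length = n ∧ OkB h s w ∧ desFrom h w = d) := by
  intro n
  induction n with
  | zero =>
    intro h s d w
    by_cases hd : d = 0 <;> cases w <;> simp [CB, hd, OkB, desFrom] <;> omega
  | succ n ih =>
    intro h s d w
    have hbi_nil : ([] : List ℕ) ∉ (if d = 0 then (∅ : Finset (List ℕ))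
        else (Finset.range h).biUnion fun x => (CB n x false (d-1)).image (fun r => x :: r)) := by
      by_cases hd : d = 0
      · simp [hd]
      · rw [if_neg hd]
        simp only [Finset.mem_biUnion, Finset.mem_image, Finset.mem_range, not_exists]
        rintro x ⟨-, r, -, h0⟩; simp at h0
    have hbi_cons : ∀ (x : ℕ) (r : List ℕ), (x :: r) ∈ (if d = 0 then (∅ : Finset (List ℕ))
        else (Finset.range h).biUnion fun x => (CB n x false (d-1)).image (fun r => x :: r))
        ↔ (d ≠ 0 ∧ x < h ∧ r ∈ CB n x false (d-1)) := by
      intro x r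
      by_cases hd : d = 0
      · simp [hd]
      · rw [if_neg hd]
        simp only [Finset.mem_biUnion, Finset.mem_image, Finset.mem_range]
        constructor
        · rintro ⟨x', hx', r', hr', heq⟩
          obtain ⟨rfl, rfl⟩ : x' = x ∧ r' = r := by
            have := List.cons.injEq .. ▸ heq; exact ⟨this.1, this.2⟩
          exact ⟨hd, hx', hr'⟩
        · rintro ⟨-, hx, hr⟩
          exact ⟨x, hx, r, hr, rfl⟩
    cases s
    · rw [CB_sf]
      cases w with
      | nil =>
        simp only [Finset.mem_union, Finset.mem_image]
        constructor
        · rintro ((⟨r, -, h0⟩ | ⟨r, -, h0⟩) | h0)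
          · exact absurd h0 (by simp)
          · exact absurd h0 (by simp)
          · exact absurd h0 hbi_nil
        · rintro ⟨h0, -⟩; simp at h0
      | cons x r =>
        simp only [Finset.mem_union, Finset.mem_image, List.cons.injEq, List.length_cons,
          OkB, desFrom, hbi_cons]
        constructor
        · rintro ((⟨r', hr', rfl, rfl⟩ | ⟨r', hr', rfl, rfl⟩) | ⟨hd, hx, hr⟩)
          · obtain ⟨hlen, hok, hdes⟩ := (ih _ _ _ _).1 hr'
            refine ⟨by omega, ⟨le_refl _, by simp, ?_⟩, ?_⟩
            · rwa [show decide (h+1 = h+1) = true by simp]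
            · rw [if_neg (by omega)]; omega
          · obtain ⟨hlen, hok, hdes⟩ := (ih _ _ _ _).1 hr'
            refine ⟨by omega, ⟨by omega, by simp, ?_⟩, ?_⟩
            · rwa [show decide (h = h+1) = false by simp]
            · rw [if_neg (by omega)]; omega
          · obtain ⟨hlen, hok, hdes⟩ := (ih _ _ _ _).1 hr
            refine ⟨by omega, ⟨by omega, by simp, ?_⟩, ?_⟩
            · rwa [show decide (x = h+1) = false by simp; omega]
            · rw [if_pos (by omega)]; omega
        · rintro ⟨hlen, ⟨hx1, -, hok⟩, hdes⟩
          rcases Nat.lt_or_ge x h with hx | hx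
          · rw [if_pos hx] at hdes
            right
            refine ⟨by omega, hx, (ih _ _ _ _).2 ⟨by omega, ?_, by omega⟩⟩
            rwa [show decide (x = h+1) = false by simp; omega] at hok
          · left
            rcases Nat.eq_or_lt_of_le hx with hxh | hxh
            · subst hxh
              rw [if_neg (by omega)] at hdes
              right
              refine ⟨r, (ih _ _ _ _).2 ⟨by omega, ?_, by omega⟩, rfl, rfl⟩
              rwa [show decide (h = h+1) = false by simp] at hok
            · have hx1' : x = h + 1 := by omega
              subst hx1'
              rw [if_neg (by omega)] at hdes
              left
              refine ⟨r, (ih _ _ _ _).2 ⟨by omega, ?_, by omega⟩, rfl, rfl⟩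
              rwa [show decide (h+1 = h+1) = true by simp] at hok
    · rw [CB_st]
      cases w with
      | nil =>
        simp only [Finset.mem_union, Finset.mem_image]
        constructor
        · rintro (⟨r, -, h0⟩ | h0)
          · exact absurd h0 (by simp)
          · exact absurd h0 hbi_nil
        · rintro ⟨h0, -⟩; simp at h0
      | cons x r =>
        simp only [Finset.mem_union, Finset.mem_image, List.cons.injEq, List.length_cons,
          OkB, desFrom, hbi_cons]
        constructor
        · rintro (⟨r', hr', rfl, rfl⟩ | ⟨hd, hx, hr⟩)
          · obtain ⟨hlen, hok, hdes⟩ := (ih _ _ _ _).1 hr'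
            refine ⟨by omega, ⟨by omega, fun _ => le_refl _, ?_⟩, ?_⟩
            · rwa [show decide (h = h+1) = false by simp]
            · rw [if_neg (by omega)]; omega
          · obtain ⟨hlen, hok, hdes⟩ := (ih _ _ _ _).1 hr
            refine ⟨by omega, ⟨by omega, fun _ => by omega, ?_⟩, ?_⟩
            · rwa [show decide (x = h+1) = false by simp; omega]
            · rw [if_pos (by omega)]; omega
        · rintro ⟨hlen, ⟨hx1, hs, hok⟩, hdes⟩
          have hxh : x ≤ h := by
            first | exact hs rfl | exact hs trivial | simpa using hs
          rcases Nat.eq_or_lt_of_le hxh with hxe | hxe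
          · subst hxe
            rw [if_neg (by omega)] at hdes
            left
            refine ⟨r, (ih _ _ _ _).2 ⟨by omega, ?_, by omega⟩, rfl, rfl⟩
            rwa [show decide (x = x+1) = false by simp] at hok
          · rw [if_pos hxe] at hdes
            right
            refine ⟨by omega, hxe, (ih _ _ _ _).2 ⟨by omega, ?_, by omega⟩⟩
            rwa [show decide (x = h+1) = false by simp; omega] at hok

lemma cat_unfold (x : ℕ) (r : List ℕ) :
    (∀ i, i + 1 < (x::r).length → (x::r).getD (i+1) 0 ≤ (x::r).getD i 0 + 1)
    ↔ ((0 < r.length → r.getD 0 0 ≤ x + 1)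
        ∧ ∀ i, i + 1 < r.length → r.getD (i+1) 0 ≤ r.getD i 0 + 1) := by
  constructor
  · intro H
    constructor
    · intro h0
      have := H 0 (by simp; omega)
      simpa using this
    · intro i hi
      have := H (i+1) (by simp; omega)
      simpa using this
  · rintro ⟨H0, H⟩ i hi
    cases i with
    | zero => simpa using H0 (by simp at hi; omega)
    | succ i => simpa using H i (by simp at hi; omega)

lemma avoid_unfold (X Y : ℕ → ℕ → Prop) (x : ℕ) (r : List ℕ) :
    AvoidsPair X Y (x :: r) ↔ (AvoidsPair X Y r
      ∧ (2 ≤ r.length → ¬(X x (r.getD 0 0) ∧ Y (r.getD 0 0) (r.getD 1 0)))) := by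
  constructor
  · intro H
    constructor
    · intro i hi
      have := H (i+1) (by simp; omega)
      simpa using this
    · intro h2
      have := H 0 (by simp; omega)
      simpa using this
  · rintro ⟨H, H0⟩ i hi
    cases i with
    | zero => simpa using H0 (by simp at hi; omega)
    | succ i => simpa using H i (by simp at hi; omega)

lemma descents_cons (x : ℕ) (r : List ℕ) :
    descents (x :: r) = (if 0 < r.length ∧ r.getD 0 0 < x then 1 else 0) + descents r := by
  cases r with
  | nil => simp [descents]
  | cons y t =>
    unfold descents
    rw [Finset.card_filter, Finset.card_filter]
    have hlen1 : (x :: y :: t).length - 1 = t.length + 1 := by simp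
    have hlen2 : (y :: t).length - 1 = t.length := by simp
    rw [hlen1, hlen2, Finset.sum_range_succ']
    simp only [List.getD_cons_succ, List.getD_cons_zero, List.length_cons]
    rw [add_comm]
    congr 1
    simp

lemma desFrom_eq (r : List ℕ) : ∀ h, desFrom h r = descents (h :: r) := by
  induction r with
  | nil => intro h; simp [desFrom, descents]
  | cons x t ih =>
    intro h
    rw [show desFrom h (x :: t) = (if x < h then 1 else 0) + desFrom x t from rfl, ih x,
      descents_cons h (x :: t)]
    simp only [List.length_cons, List.getD_cons_zero]
    congr 1
    simp

lemma okA_iff : ∀ (r : List ℕ) (h : ℕ) (s : Bool),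
    OkA h s r ↔ ((∀ i, i + 1 < (h::r).length → (h::r).getD (i+1) 0 ≤ (h::r).getD i 0 + 1)
      ∧ AvoidsPair (· ≥ ·) (· ≥ ·) (h::r)
      ∧ (s = true → (0 < r.length → ¬ r.getD 0 0 ≤ h))) := by
  intro r
  induction r with
  | nil =>
    intro h s
    simp only [OkA, List.length_cons]
    constructor
    · intro _
      refine ⟨fun i hi => by simp at hi, fun i hi => by simp at hi, fun _ h0 => by simp at h0⟩
    · intro _; trivial
  | cons x t ih =>
    intro h s
    rw [show OkA h s (x :: t) = (x ≤ h + 1 ∧ (s = true → x = h + 1) ∧ OkA x (decide (x ≤ h)) t) from rfl,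
      ih x (decide (x ≤ h)), cat_unfold h (x :: t), avoid_unfold (· ≥ ·) (· ≥ ·) h (x :: t)]
    simp only [List.getD_cons_zero, List.getD_cons_succ, List.length_cons,
      decide_eq_true_eq, ge_iff_le]
    constructor
    · rintro ⟨hx1, hs, hC, hA, hst⟩
      refine ⟨⟨fun _ => hx1, hC⟩, ⟨hA, fun h2 hand => ?_⟩, fun hs' _ => by have := hs hs'; omega⟩
      exact hst hand.1 (by omega) hand.2
    · rintro ⟨⟨hx1, hC⟩, ⟨hA, hbd⟩, hs3⟩
      refine ⟨hx1 (by omega), fun hs' => by have := hs3 hs' (by omega); omega, hC, hA,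
        fun hxh hlen hle => hbd (by omega) ⟨hxh, hle⟩⟩

lemma okB_iff : ∀ (r : List ℕ) (h : ℕ) (s : Bool),
    OkB h s r ↔ ((∀ i, i + 1 < (h::r).length → (h::r).getD (i+1) 0 ≤ (h::r).getD i 0 + 1)
      ∧ AvoidsPair (· < ·) (· < ·) (h::r)
      ∧ (s = true → (0 < r.length → ¬ h < r.getD 0 0))) := by
  intro r
  induction r with
  | nil =>
    intro h s
    simp only [OkB, List.length_cons]
    constructor
    · intro _
      refine ⟨fun i hi => by simp at hi, fun i hi => by simp at hi, fun _ h0 => by simp at h0⟩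
    · intro _; trivial
  | cons x t ih =>
    intro h s
    rw [show OkB h s (x :: t) = (x ≤ h + 1 ∧ (s = true → x ≤ h) ∧ OkB x (decide (x = h + 1)) t) from rfl,
      ih x (decide (x = h + 1)), cat_unfold h (x :: t), avoid_unfold (· < ·) (· < ·) h (x :: t)]
    simp only [List.getD_cons_zero, List.getD_cons_succ, List.length_cons, decide_eq_true_eq]
    constructor
    · rintro ⟨hx1, hs, hC, hA, hst⟩
      refine ⟨⟨fun _ => hx1, hC⟩, ⟨hA, fun h2 hand => ?_⟩, fun hs' _ => by have := hs hs'; omega⟩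
      exact hst (by omega) (by omega) hand.2
    · rintro ⟨⟨hx1, hC⟩, ⟨hA, hbd⟩, hs3⟩
      refine ⟨hx1 (by omega), fun hs' => by have := hs3 hs' (by omega); omega, hC, hA,
        fun hxh hlen hlt => hbd (by omega) ⟨by omega, hlt⟩⟩

def finsetA : ℕ → ℕ → Finset (List ℕ)
  | 0, d => if d = 0 then {([] : List ℕ)} else ∅
  | n+1, d => (CA n 0 false d).image (fun r => 0 :: r)

def finsetB : ℕ → ℕ → Finset (List ℕ)
  | 0, d => if d = 0 then {([] : List ℕ)} else ∅
  | n+1, d => (CB n 0 false d).image (fun r => 0 :: r)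

lemma descents_nil : descents [] = 0 := by simp [descents]

lemma fiberA_eq (n d : ℕ) :
    {w : List ℕ | w ∈ CW n (· ≥ ·) (· ≥ ·) ∧ descents w = d} = ↑(finsetA n d) := by
  ext w
  simp only [Set.mem_setOf_eq, Finset.mem_coe, CW, IsCatalanWord]
  cases n with
  | zero =>
    show _ ↔ w ∈ (if d = 0 then ({([] : List ℕ)} : Finset (List ℕ)) else ∅)
    constructor
    · rintro ⟨⟨hlen, -, -⟩, hdes⟩
      have hw : w = [] := List.length_eq_zero_iff.1 hlen
      subst hw
      rw [descents_nil] at hdes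
      simp [← hdes]
    · intro hw
      by_cases hd : d = 0
      · rw [if_pos hd] at hw
        simp only [Finset.mem_singleton] at hw
        subst hw
        exact ⟨⟨rfl, ⟨fun h0 => by simp at h0, fun i hi => by simp at hi⟩,
          fun i hi => by simp at hi⟩, by rw [descents_nil, hd]⟩
      · rw [if_neg hd] at hw; simp at hw
  | succ n =>
    show _ ↔ w ∈ (CA n 0 false d).image (fun r => 0 :: r)
    rw [Finset.mem_image]
    constructor
    · rintro ⟨⟨hlen, ⟨hz, hchain⟩, hav⟩, hdes⟩
      cases w with
      | nil => simp at hlen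
      | cons x r =>
        have hx : x = 0 := by simpa using hz (by simp)
        subst hx
        refine ⟨r, (CA_mem n 0 false d r).2 ⟨by simpa using hlen,
          (okA_iff r 0 false).2 ⟨hchain, hav, by simp⟩, by rw [desFrom_eq]; exact hdes⟩, rfl⟩
    · rintro ⟨r, hr, rfl⟩
      obtain ⟨hlen, hok, hdes⟩ := (CA_mem n 0 false d r).1 hr
      obtain ⟨hchain, hav, -⟩ := (okA_iff r 0 false).1 hok
      exact ⟨⟨by simp [hlen], ⟨fun _ => by simp, hchain⟩, hav⟩, by rw [← desFrom_eq]; exact hdes⟩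

lemma fiberB_eq (n d : ℕ) :
    {w : List ℕ | w ∈ CW n (· < ·) (· < ·) ∧ descents w = d} = ↑(finsetB n d) := by
  ext w
  simp only [Set.mem_setOf_eq, Finset.mem_coe, CW, IsCatalanWord]
  cases n with
  | zero =>
    show _ ↔ w ∈ (if d = 0 then ({([] : List ℕ)} : Finset (List ℕ)) else ∅)
    constructor
    · rintro ⟨⟨hlen, -, -⟩, hdes⟩
      have hw : w = [] := List.length_eq_zero_iff.1 hlen
      subst hw
      rw [descents_nil] at hdes
      simp [← hdes]
    · intro hw
      by_cases hd : d = 0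
      · rw [if_pos hd] at hw
        simp only [Finset.mem_singleton] at hw
        subst hw
        exact ⟨⟨rfl, ⟨fun h0 => by simp at h0, fun i hi => by simp at hi⟩,
          fun i hi => by simp at hi⟩, by rw [descents_nil, hd]⟩
      · rw [if_neg hd] at hw; simp at hw
  | succ n =>
    show _ ↔ w ∈ (CB n 0 false d).image (fun r => 0 :: r)
    rw [Finset.mem_image]
    constructor
    · rintro ⟨⟨hlen, ⟨hz, hchain⟩, hav⟩, hdes⟩
      cases w with
      | nil => simp at hlen
      | cons x r =>
        have hx : x = 0 := by simpa using hz (by simp)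
        subst hx
        refine ⟨r, (CB_mem n 0 false d r).2 ⟨by simpa using hlen,
          (okB_iff r 0 false).2 ⟨hchain, hav, by simp⟩, by rw [desFrom_eq]; exact hdes⟩, rfl⟩
    · rintro ⟨r, hr, rfl⟩
      obtain ⟨hlen, hok, hdes⟩ := (CB_mem n 0 false d r).1 hr
      obtain ⟨hchain, hav, -⟩ := (okB_iff r 0 false).1 hok
      exact ⟨⟨by simp [hlen], ⟨fun _ => by simp, hchain⟩, hav⟩, by rw [← desFrom_eq]; exact hdes⟩

lemma cards_eq (n d : ℕ) : (finsetA n d).card = (finsetB n d).card := by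
  cases n with
  | zero => rfl
  | succ n =>
    show ((CA n 0 false d).image _).card = ((CB n 0 false d).image _).card
    rw [card_cons_image, card_cons_image, CA_card, CB_card, FA_eq_FBg]

def esub (p q : List ℕ → Prop) : {x : {w : List ℕ // p w} // q x.1} ≃ {w : List ℕ // p w ∧ q w} where
  toFun x := ⟨x.1.1, x.1.2, x.2⟩
  invFun y := ⟨⟨y.1, y.2.1⟩, y.2.2⟩
  left_inv _ := rfl
  right_inv _ := rfl

theorem stmt_5 (n : ℕ) :
    (CW n (· ≥ ·) (· ≥ ·)).ncard = (CW n (· < ·) (· < ·)).ncard ∧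
    ∃ e : CW n (· ≥ ·) (· ≥ ·) ≃ CW n (· < ·) (· < ·),
      ∀ w : CW n (· ≥ ·) (· ≥ ·), descents (e w : List ℕ) = descents (w : List ℕ) := by
  classical
  have hA : ∀ d (w : List ℕ), (w ∈ CW n (· ≥ ·) (· ≥ ·) ∧ descents w = d) ↔ w ∈ finsetA n d := by
    intro d w
    have := Set.ext_iff.mp (fiberA_eq n d) w
    simpa using this
  have hB : ∀ d (w : List ℕ), (w ∈ CW n (· < ·) (· < ·) ∧ descents w = d) ↔ w ∈ finsetB n d := by
    intro d w
    have := Set.ext_iff.mp (fiberB_eq n d) w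
    simpa using this
  have g : ∀ d : ℕ, {x : CW n (· ≥ ·) (· ≥ ·) // descents x.1 = d}
      ≃ {y : CW n (· < ·) (· < ·) // descents y.1 = d} := by
    intro d
    refine (esub _ _).trans (((Equiv.subtypeEquivRight (hA d)).trans
      ((Finset.equivOfCardEq (cards_eq n d)).trans
        (Equiv.subtypeEquivRight (hB d)).symm)).trans (esub _ _).symm)
  let e : CW n (· ≥ ·) (· ≥ ·) ≃ CW n (· < ·) (· < ·) :=
    (Equiv.sigmaFiberEquiv (fun x : CW n (· ≥ ·) (· ≥ ·) => descents x.1)).symm.trans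
      ((Equiv.sigmaCongrRight g).trans
        (Equiv.sigmaFiberEquiv (fun y : CW n (· < ·) (· < ·) => descents y.1)))
  have hpres : ∀ w : CW n (· ≥ ·) (· ≥ ·), descents (e w : List ℕ) = descents (w : List ℕ) := by
    intro w
    exact ((g (descents w.1)) ⟨w, rfl⟩).2
  refine ⟨?_, e, hpres⟩
  rw [← Nat.card_coe_set_eq, ← Nat.card_coe_set_eq]
  exact Nat.card_congr e
end

section
/- For every n ≥ 0, the number of Catalan words of length n avoiding the pattern pair (≤, <) equals the Fibonacci number F_{n+1} (with F_0 = 0, F_1 = 1). -/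
/-! ### Auxiliary development -/

/-- `r` starts with `0, 1` (as far as `getD` can see). -/
def BadW (r : List ℕ) : Prop := r.getD 0 0 = 0 ∧ r.getD 1 0 = 1

instance : DecidablePred BadW := fun r => by unfold BadW; infer_instance

lemma getD_cons_succ' (x k : ℕ) (r : List ℕ) : (x :: r).getD (k + 1) 0 = r.getD k 0 := rfl

lemma getD_cons_zero' (x : ℕ) (r : List ℕ) : (x :: r).getD 0 0 = x := rfl

/-- Generator of the relevant binary words. -/
def gen : ℕ → Finset (List ℕ)
  | 0 => {[]}
  | n + 1 =>
      ((gen n).image (fun r => 1 :: r)) ∪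
        (((gen n).filter (fun r => ¬ BadW r)).image (fun r => 0 :: r))

lemma gen_succ (n : ℕ) :
    gen (n + 1) =
      ((gen n).image (fun r => 1 :: r)) ∪
        (((gen n).filter (fun r => ¬ BadW r)).image (fun r => 0 :: r)) := rfl

lemma cons_inj (a : ℕ) : Function.Injective (fun r : List ℕ => a :: r) :=
  fun _ _ h => by injection h

lemma mem_gen_succ {n : ℕ} {w : List ℕ} :
    w ∈ gen (n + 1) ↔
      (∃ r ∈ gen n, w = 1 :: r) ∨ (∃ r ∈ gen n, ¬ BadW r ∧ w = 0 :: r) := by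
  rw [gen_succ]
  simp only [Finset.mem_union, Finset.mem_image, Finset.mem_filter]
  constructor
  · rintro (⟨r, hr, rfl⟩ | ⟨r, ⟨hr, hb⟩, rfl⟩)
    · exact Or.inl ⟨r, hr, rfl⟩
    · exact Or.inr ⟨r, hr, hb, rfl⟩
  · rintro (⟨r, hr, rfl⟩ | ⟨r, hr, hb, rfl⟩)
    · exact Or.inl ⟨r, hr, rfl⟩
    · exact Or.inr ⟨r, ⟨hr, hb⟩, rfl⟩

/-- The clean, unguarded characterization. -/
def GoodP (n : ℕ) (w : List ℕ) : Prop :=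
  w.length = n ∧ (∀ i, w.getD i 0 ≤ 1) ∧
    ∀ i, ¬ (w.getD i 0 ≤ w.getD (i + 1) 0 ∧ w.getD (i + 1) 0 < w.getD (i + 2) 0)

lemma goodP_cons {n : ℕ} {x : ℕ} {r : List ℕ} (hx : x ≤ 1)
    (hg : GoodP n r) (h0 : ¬ (x ≤ r.getD 0 0 ∧ r.getD 0 0 < r.getD 1 0)) :
    GoodP (n + 1) (x :: r) := by
  obtain ⟨hlen, hbin, hpat⟩ := hg
  refine ⟨by simp [hlen], ?_, ?_⟩
  · rintro (_ | i)
    · exact hx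
    · exact hbin i
  · rintro (_ | i)
    · exact h0
    · exact hpat i

lemma mem_gen {n : ℕ} {w : List ℕ} : w ∈ gen n ↔ GoodP n w := by
  induction n generalizing w with
  | zero =>
    simp only [gen, Finset.mem_singleton, GoodP]
    constructor
    · rintro rfl
      exact ⟨rfl, fun i => by simp, fun i => by simp⟩
    · rintro ⟨h, -, -⟩
      exact List.length_eq_zero_iff.mp h
  | succ n ih =>
    rw [mem_gen_succ]
    constructor
    · rintro (⟨r, hr, rfl⟩ | ⟨r, hr, hb, rfl⟩)
      · obtain ⟨hlen, hbin, hpat⟩ := ih.mp hr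
        refine goodP_cons le_rfl (ih.mp hr) ?_
        have h0 := hbin 0
        have h1 := hbin 1
        omega
      · obtain ⟨hlen, hbin, hpat⟩ := ih.mp hr
        refine goodP_cons (by omega) (ih.mp hr) ?_
        have h0 := hbin 0
        have h1 := hbin 1
        simp only [BadW, not_and] at hb
        omega
    · rintro ⟨hlen, hbin, hpat⟩
      match w with
      | [] => simp at hlen
      | x :: r =>
        have hrlen : r.length = n := by simpa using hlen
        have hrbin : ∀ i, r.getD i 0 ≤ 1 := fun i => hbin (i + 1)
        have hrpat : ∀ i, ¬ (r.getD i 0 ≤ r.getD (i + 1) 0 ∧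
            r.getD (i + 1) 0 < r.getD (i + 2) 0) := fun i => hpat (i + 1)
        have hrg : r ∈ gen n := ih.mpr ⟨hrlen, hrbin, hrpat⟩
        have hx : x ≤ 1 := hbin 0
        have hp0 : ¬ (x ≤ r.getD 0 0 ∧ r.getD 0 0 < r.getD 1 0) := hpat 0
        interval_cases x
        · refine Or.inr ⟨r, hrg, ?_, rfl⟩
          rintro ⟨hb0, hb1⟩
          rw [hb0, hb1] at hp0
          omega
        · exact Or.inl ⟨r, hrg, rfl⟩

lemma binary_of {w : List ℕ} (h1 : IsCatalanWord w)
    (h2 : AvoidsPair (· ≤ ·) (· < ·) w) : ∀ i, w.getD i 0 ≤ 1 := by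
  intro i
  induction i using Nat.strong_induction_on with
  | _ i ih =>
    rcases i with _ | _ | i
    · show w.getD 0 0 ≤ 1
      rcases Nat.lt_or_ge 0 w.length with h | h
      · rw [h1.1 h]; omega
      · rw [List.getD_eq_default _ _ h]; omega
    · show w.getD 1 0 ≤ 1
      rcases Nat.lt_or_ge 1 w.length with h | h
      · have hs : w.getD 1 0 ≤ w.getD 0 0 + 1 := h1.2 0 h
        have h0 : w.getD 0 0 = 0 := h1.1 (by omega)
        omega
      · rw [List.getD_eq_default _ _ h]; omega
    · show w.getD (i + 2) 0 ≤ 1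
      by_contra hc
      push_neg at hc
      have hlt : i + 2 < w.length := by
        by_contra h
        rw [List.getD_eq_default _ _ (by omega)] at hc
        omega
      have hstep : w.getD (i + 2) 0 ≤ w.getD (i + 1) 0 + 1 := h1.2 (i + 1) hlt
      have hi := ih i (by omega)
      have hi1 := ih (i + 1) (by omega)
      have hav := h2 i hlt
      simp only [not_and, not_lt] at hav
      omega

lemma CW_eq (n : ℕ) :
    CW n (· ≤ ·) (· < ·) = ↑((gen n).filter (fun w => w.getD 0 0 = 0)) := by
  ext w
  simp only [CW, Set.mem_setOf_eq, Finset.coe_filter, mem_gen, GoodP]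
  constructor
  · rintro ⟨hlen, hcat, hav⟩
    have hbin := binary_of hcat hav
    refine ⟨⟨hlen, hbin, ?_⟩, ?_⟩
    · intro i
      rcases Nat.lt_or_ge (i + 2) w.length with h | h
      · exact hav i h
      · rw [List.getD_eq_default _ _ h]
        simp
    · rcases Nat.lt_or_ge 0 w.length with h | h
      · exact hcat.1 h
      · rw [List.getD_eq_default _ _ h]
  · rintro ⟨⟨hlen, hbin, hpat⟩, h0⟩
    refine ⟨hlen, ⟨fun _ => h0, fun i _ => ?_⟩, fun i _ => hpat i⟩
    have := hbin (i + 1)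
    omega

/-! ### Counting -/

lemma disj_gen (n : ℕ) :
    Disjoint ((gen n).image (fun r => 1 :: r))
      (((gen n).filter (fun r => ¬ BadW r)).image (fun r => 0 :: r)) := by
  rw [Finset.disjoint_left]
  rintro a ha hb
  simp only [Finset.mem_image, Finset.mem_filter] at ha hb
  obtain ⟨r, -, rfl⟩ := ha
  obtain ⟨s, -, hs⟩ := hb
  exact absurd (congrArg (fun l => l.getD 0 0) hs) (by simp)

lemma card_gen_succ (n : ℕ) :
    (gen (n + 1)).card =
      (gen n).card + ((gen n).filter (fun r => ¬ BadW r)).card := by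
  rw [gen_succ, Finset.card_union_of_disjoint (disj_gen n),
    Finset.card_image_of_injective _ (cons_inj 1),
    Finset.card_image_of_injective _ (cons_inj 0)]

lemma filter_one (n : ℕ) :
    (gen (n + 1)).filter (fun w => w.getD 0 0 = 1) =
      (gen n).image (fun r => 1 :: r) := by
  ext w
  simp only [Finset.mem_filter, Finset.mem_image, mem_gen_succ]
  constructor
  · rintro ⟨⟨r, hr, rfl⟩ | ⟨r, hr, hb, rfl⟩, h0⟩
    · exact ⟨r, hr, rfl⟩
    · rw [getD_cons_zero'] at h0; omega
  · rintro ⟨r, hr, rfl⟩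
    exact ⟨Or.inl ⟨r, hr, rfl⟩, rfl⟩

lemma filter_zero (n : ℕ) :
    (gen (n + 1)).filter (fun w => w.getD 0 0 = 0) =
      ((gen n).filter (fun r => ¬ BadW r)).image (fun r => 0 :: r) := by
  ext w
  simp only [Finset.mem_filter, Finset.mem_image, mem_gen_succ]
  constructor
  · rintro ⟨⟨r, hr, rfl⟩ | ⟨r, hr, hb, rfl⟩, h0⟩
    · rw [getD_cons_zero'] at h0; omega
    · exact ⟨r, ⟨hr, hb⟩, rfl⟩
  · rintro ⟨r, ⟨hr, hb⟩, rfl⟩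
    exact ⟨Or.inr ⟨r, hr, hb, rfl⟩, rfl⟩

lemma filter_bad (n : ℕ) :
    (gen (n + 1)).filter BadW =
      ((gen n).filter (fun r => r.getD 0 0 = 1)).image (fun r => 0 :: r) := by
  ext w
  simp only [Finset.mem_filter, Finset.mem_image, mem_gen_succ]
  constructor
  · rintro ⟨⟨r, hr, rfl⟩ | ⟨r, hr, hb, rfl⟩, h0⟩
    · obtain ⟨ha, -⟩ := h0
      rw [getD_cons_zero'] at ha
      omega
    · obtain ⟨-, hb1⟩ := h0
      rw [getD_cons_succ'] at hb1
      exact ⟨r, ⟨hr, hb1⟩, rfl⟩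
  · rintro ⟨r, ⟨hr, h1⟩, rfl⟩
    have hnb : ¬ BadW r := by
      rintro ⟨hb0, -⟩
      rw [hb0] at h1
      omega
    exact ⟨Or.inr ⟨r, hr, hnb, rfl⟩, getD_cons_zero' 0 r, by rw [getD_cons_succ']; exact h1⟩

lemma fib_pos' (n : ℕ) : 1 ≤ Nat.fib (n + 1) := Nat.fib_pos.mpr (by omega)

theorem key_s6 : ∀ n : ℕ,
    (gen n).card = Nat.fib (n + 3) - 1 ∧
      ((gen n).filter BadW).card = Nat.fib (n + 1) - 1
  | 0 => by constructor <;> decide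
  | 1 => by constructor <;> decide
  | (n + 2) => by
    obtain ⟨t1, b1⟩ := key_s6 (n + 1)
    obtain ⟨t0, _⟩ := key_s6 n
    have t1' : (gen (n + 1)).card = Nat.fib (n + 4) - 1 := t1
    have b1' : ((gen (n + 1)).filter BadW).card = Nat.fib (n + 2) - 1 := b1
    have hsum := Finset.card_filter_add_card_filter_not
      (s := gen (n + 1)) (p := BadW)
    have hb2 : ((gen (n + 2)).filter BadW).card = (gen n).card := by
      rw [filter_bad, Finset.card_image_of_injective _ (cons_inj 0), filter_one,
        Finset.card_image_of_injective _ (cons_inj 1)]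
    have hc : (gen (n + 2)).card = (gen (n + 1)).card +
        ((gen (n + 1)).filter (fun r => ¬ BadW r)).card := card_gen_succ (n + 1)
    have f2 : 1 ≤ Nat.fib (n + 2) := fib_pos' (n + 1)
    have f3 : 1 ≤ Nat.fib (n + 3) := fib_pos' (n + 2)
    have e1 : Nat.fib (n + 4) = Nat.fib (n + 2) + Nat.fib (n + 3) := Nat.fib_add_two
    have e2 : Nat.fib (n + 5) = Nat.fib (n + 3) + Nat.fib (n + 4) := Nat.fib_add_two
    constructor
    · show (gen (n + 2)).card = Nat.fib (n + 5) - 1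
      omega
    · show ((gen (n + 2)).filter BadW).card = Nat.fib (n + 3) - 1
      omega

theorem stmt_6 (n : ℕ) :
    (CW n (· ≤ ·) (· < ·)).ncard = Nat.fib (n + 1) := by
  rw [CW_eq, Set.ncard_coe_finset]
  cases n with
  | zero => decide
  | succ m =>
    rw [filter_zero, Finset.card_image_of_injective _ (cons_inj 0)]
    obtain ⟨t0, b0⟩ := key_s6 m
    have hsum := Finset.card_filter_add_card_filter_not
      (s := gen m) (p := BadW)
    have f1 : 1 ≤ Nat.fib (m + 1) := fib_pos' m
    have e1 : Nat.fib (m + 3) = Nat.fib (m + 1) + Nat.fib (m + 2) := Nat.fib_add_two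
    show ((gen m).filter (fun r => ¬ BadW r)).card = Nat.fib (m + 2)
    omega
end

section
/- For every n ≥ 0, the number of Catalan words of length n avoiding the pattern pair (≥, ≤) equals the Fibonacci number F_{n+1}. -/
-- ## Auxiliary lemmas

lemma aux_chain'_iff_getElem {R : ℕ → ℕ → Prop} {l : List ℕ} :
    List.Chain' R l ↔ ∀ i (_ : i + 1 < l.length), R l[i] l[i+1] := by
  rw [List.Chain', List.isChain_iff_getElem]

lemma getD_range {k i : ℕ} (h : i < k) : (List.range k).getD i 0 = i := by
  rw [List.getD_eq_getElem _ _ (by simpa)]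
  simp

lemma uget_lt {k i : ℕ} {d : List ℕ} (h : i < k) :
    (List.range k ++ d).getD i 0 = i := by
  rw [List.getD_append _ _ _ _ (by simpa), getD_range h]

lemma uget_ge {k i : ℕ} {d : List ℕ} (h : k ≤ i) :
    (List.range k ++ d).getD i 0 = d.getD (i - k) 0 := by
  rw [List.getD_append_right _ _ _ _ (by simpa)]
  simp

lemma chain_head' {k : ℕ} {d : List ℕ} (h : List.Chain' (· > ·) (k :: d))
    (hd : 0 < d.length) : d.getD 0 0 < k := by
  rw [aux_chain'_iff_getElem] at h
  rw [List.getD_eq_getElem _ _ hd]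
  simpa using h 0 (by simpa using hd)

lemma chain_step' {k : ℕ} {d : List ℕ} (h : List.Chain' (· > ·) (k :: d))
    {j : ℕ} (hj : j + 1 < d.length) : d.getD (j+1) 0 < d.getD j 0 := by
  rw [aux_chain'_iff_getElem] at h
  rw [List.getD_eq_getElem _ _ hj, List.getD_eq_getElem _ _ (by omega)]
  exact h (j+1) (by simpa using hj)

lemma chain'_snoc : ∀ {d : List ℕ} {k x : ℕ},
    List.Chain' (· > ·) (k :: d) → x < d.getD (d.length - 1) k →
    List.Chain' (· > ·) (k :: (d ++ [x]))
  | [], k, x, _, hx => by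
    simp only [List.getD] at hx
    simp only [List.nil_append]
    exact List.isChain_cons_cons.mpr ⟨by simpa using hx, List.isChain_singleton x⟩
  | a :: d, k, x, h, hx => by
    rw [List.Chain', List.isChain_cons_cons] at h
    have hx' : x < d.getD (d.length - 1) a := by
      rcases d with _ | ⟨b, d'⟩
      · simpa using hx
      · have : ((a :: b :: d').getD ((a :: b :: d').length - 1) k)
            = (b :: d').getD ((b :: d').length - 1) a := by
          rw [List.getD_eq_getElem _ _ (by simp), List.getD_eq_getElem _ _ (by simp)]
          simp
        rwa [this] at hx
    have := chain'_snoc h.2 hx'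
    exact List.isChain_cons_cons.mpr ⟨h.1, this⟩

/-- The structural description: an increasing ramp `0,1,…,k-1` followed by a strictly
decreasing tail starting below `k`. -/
def Good (w : List ℕ) : Prop :=
  ∃ k d, List.Chain' (· > ·) (k :: d) ∧ w = List.range k ++ d

/-- Backward direction: a `Good` word is Catalan and avoids the pattern. -/
lemma good_catalan {w : List ℕ} (hw : Good w) :
    IsCatalanWord w ∧ AvoidsPair (· ≥ ·) (· ≤ ·) w := by
  obtain ⟨k, d, hc, rfl⟩ := hw
  have hlen : (List.range k ++ d).length = k + d.length := by simp
  refine ⟨⟨?_, ?_⟩, ?_⟩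
  · intro h0
    rw [hlen] at h0
    rcases Nat.eq_zero_or_pos k with hk | hk
    · subst hk
      have := chain_head' hc (by omega)
      omega
    · rw [uget_lt hk]
  · intro i hi
    rw [hlen] at hi
    rcases lt_or_ge (i+1) k with h | h
    · rw [uget_lt h, uget_lt (by omega)]
    · rw [uget_ge h]
      rcases lt_or_ge i k with h2 | h2
      · rw [uget_lt h2, show i + 1 - k = 0 by omega]
        have := chain_head' hc (by omega)
        omega
      · rw [uget_ge h2, show i + 1 - k = (i - k) + 1 by omega]
        have := chain_step' hc (j := i - k) (by omega)
        omega
  · intro i hi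
    rw [hlen] at hi
    rintro ⟨h1, h2⟩
    rcases lt_or_ge (i+1) k with h | h
    · rw [uget_lt h, uget_lt (by omega)] at h1
      simp only [ge_iff_le] at h1
      omega
    · rw [uget_ge h, uget_ge (by omega), show i + 2 - k = (i + 1 - k) + 1 by omega] at h2
      have := chain_step' hc (j := i + 1 - k) (by omega)
      omega

/-- Forward direction: every Catalan word avoiding the pattern is `Good`. -/
lemma catalan_good {w : List ℕ} (hw : IsCatalanWord w ∧ AvoidsPair (· ≥ ·) (· ≤ ·) w) :
    Good w := by
  induction w using List.reverseRecOn with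
  | nil => exact ⟨0, [], List.isChain_singleton _, by simp⟩
  | append_singleton u x ih =>
    obtain ⟨⟨hc0, hc1⟩, ha⟩ := hw
    have hlen : (u ++ [x]).length = u.length + 1 := by simp
    have hgetu : ∀ i, i < u.length → (u ++ [x]).getD i 0 = u.getD i 0 := by
      intro i h
      rw [List.getD_append _ _ _ _ h]
    have hgetx : (u ++ [x]).getD u.length 0 = x := by
      rw [List.getD_append_right _ _ _ _ (le_refl _)]
      simp
    have hu : Good u := by
      apply ih
      refine ⟨⟨?_, ?_⟩, ?_⟩
      · intro h0
        rw [← hgetu 0 h0]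
        exact hc0 (by omega)
      · intro i hi
        rw [← hgetu _ (by omega), ← hgetu _ (by omega)]
        exact hc1 i (by omega)
      · intro i hi
        rw [← hgetu _ (by omega), ← hgetu _ (by omega), ← hgetu _ (by omega)]
        exact ha i (by omega)
    obtain ⟨k, d, hchain, rfl⟩ := hu
    have hul : (List.range k ++ d).length = k + d.length := by simp
    rw [hul] at hgetx
    rcases Nat.eq_zero_or_pos d.length with hd | hd
    · -- d = [], u = range k
      have hdnil : d = [] := List.eq_nil_of_length_eq_zero hd
      subst hdnil
      rcases Nat.eq_zero_or_pos k with hk | hk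
      · subst hk
        have hx : x = 0 := by
          have h0 := hc0 (by simp)
          rw [show (0 + List.length ([] : List ℕ)) = 0 by simp] at hgetx
          rw [hgetx] at h0
          exact h0
        refine ⟨1, [], List.isChain_singleton _, ?_⟩
        simp [hx, List.range_succ]
      · have hxk : x ≤ k := by
          have h1 := hc1 (k - 1) (by rw [hlen, hul]; omega)
          rw [show (k + List.length ([] : List ℕ)) = k by simp] at hgetx
          rw [show k - 1 + 1 = k by omega] at h1
          rw [hgetx] at h1
          rw [hgetu (k-1) (by simp; omega), uget_lt (by omega)] at h1
          omega
        rcases eq_or_lt_of_le hxk with hxe | hxl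
        · refine ⟨k + 1, [], List.isChain_singleton _, ?_⟩
          simp [List.range_succ, hxe]
        · refine ⟨k, [x], ?_, by simp⟩
          exact List.isChain_cons_cons.mpr ⟨hxl, List.isChain_singleton x⟩
    · -- d nonempty
      have hk1 : 1 ≤ k := by
        have := chain_head' hchain hd
        omega
      set m := d.length with hm
      have eL : (List.range k ++ d).getD (k + m - 1) 0 = d.getD (m - 1) 0 := by
        rw [uget_ge (by omega), show k + m - 1 - k = m - 1 by omega]
      have hpen : (List.range k ++ d).getD (k + m - 2) 0 ≥ d.getD (m - 1) 0 := by
        rcases lt_or_ge (k + m - 2) k with h2 | h2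
        · have hm1 : m = 1 := by omega
          rw [uget_lt h2]
          have := chain_head' hchain hd
          rw [show m - 1 = 0 by omega]
          omega
        · rw [uget_ge h2, show k + m - 2 - k = m - 2 by omega]
          have := chain_step' hchain (j := m - 2) (by omega)
          rw [show m - 2 + 1 = m - 1 by omega] at this
          omega
      have hxlt : x < d.getD (m - 1) 0 := by
        have h3 := ha (k + m - 2) (by rw [hlen, hul]; omega)
        rw [show k + m - 2 + 1 = k + m - 1 by omega,
            show k + m - 2 + 2 = k + m by omega] at h3
        rw [hgetx] at h3
        rw [hgetu (k + m - 2) (by omega), hgetu (k + m - 1) (by omega)] at h3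
        rw [eL] at h3
        by_contra hcon
        exact h3 ⟨hpen, by omega⟩
      refine ⟨k, d ++ [x], ?_, by simp⟩
      apply chain'_snoc hchain
      rwa [List.getD_eq_getElem _ _ (by omega), ← List.getD_eq_getElem _ 0 (by omega)]

/-- Parameter space: pairs `(k, d)` with total length `n`. -/
def P (n : ℕ) : Set (ℕ × List ℕ) :=
  {p | p.1 + p.2.length = n ∧ List.Chain' (· > ·) (p.1 :: p.2)}

lemma CW_eq_image (n : ℕ) :
    CW n (· ≥ ·) (· ≤ ·) = (fun p : ℕ × List ℕ => List.range p.1 ++ p.2) '' P n := by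
  ext w
  constructor
  · rintro ⟨hlen, hcat, hav⟩
    obtain ⟨k, d, hc, rfl⟩ := catalan_good ⟨hcat, hav⟩
    exact ⟨(k, d), ⟨by simpa using hlen, hc⟩, rfl⟩
  · rintro ⟨⟨k, d⟩, ⟨hlen, hc⟩, rfl⟩
    have := good_catalan ⟨k, d, hc, rfl⟩
    exact ⟨by simpa using hlen, this.1, this.2⟩

lemma injOn_P (n : ℕ) :
    Set.InjOn (fun p : ℕ × List ℕ => List.range p.1 ++ p.2) (P n) := by
  have key : ∀ (a b : ℕ) (da db : List ℕ), a + da.length = n → b + db.length = n →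
      List.Chain' (· > ·) (a :: da) → List.range a ++ da = List.range b ++ db →
      a < b → False := by
    intro a b da db hla hlb hca heq2 hab
    have hda : 0 < da.length := by omega
    have h1 : (List.range a ++ da).getD a 0 = da.getD 0 0 := by
      rw [uget_ge (le_refl a)]
      simp
    have h2 : (List.range b ++ db).getD a 0 = a := uget_lt hab
    have := chain_head' hca hda
    rw [heq2, h2] at h1
    omega
  rintro ⟨k, d⟩ ⟨hk, hck⟩ ⟨k', d'⟩ ⟨hk', hck'⟩ heq
  simp only at heq
  rcases lt_trichotomy k k' with h | h | h
  · exact absurd (key k k' d d' hk hk' hck heq h) not_false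
  · subst h
    rw [List.append_cancel_left heq]
  · exact absurd (key k' k d' d hk' hk hck' heq.symm h) not_false

lemma P_zero : P 0 = {(0, [])} := by
  ext ⟨k, d⟩
  simp only [P, Set.mem_setOf_eq, Set.mem_singleton_iff, Prod.mk.injEq]
  constructor
  · rintro ⟨h1, _⟩
    exact ⟨by omega, List.eq_nil_of_length_eq_zero (by omega)⟩
  · rintro ⟨rfl, rfl⟩
    exact ⟨rfl, List.isChain_singleton _⟩

lemma P_one : P 1 = {(1, [])} := by
  ext ⟨k, d⟩
  simp only [P, Set.mem_setOf_eq, Set.mem_singleton_iff, Prod.mk.injEq]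
  constructor
  · rintro ⟨h1, h2⟩
    rcases Nat.eq_zero_or_pos k with hk | hk
    · subst hk
      have := chain_head' h2 (by omega)
      omega
    · exact ⟨by omega, List.eq_nil_of_length_eq_zero (by omega)⟩
  · rintro ⟨rfl, rfl⟩
    exact ⟨rfl, List.isChain_singleton _⟩

lemma mem_P {n k : ℕ} {d : List ℕ} :
    (k, d) ∈ P n ↔ k + d.length = n ∧ List.Chain' (· > ·) (k :: d) := Iff.rfl

def g1 (p : ℕ × List ℕ) : ℕ × List ℕ := (p.1 + 1, p.2)
def g2 (p : ℕ × List ℕ) : ℕ × List ℕ := (p.1 + 1, p.1 :: p.2)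

lemma P_succ_succ (n : ℕ) : P (n + 2) = g1 '' P (n + 1) ∪ g2 '' P n := by
  ext ⟨k, d⟩
  constructor
  · intro hmem
    rw [mem_P] at hmem
    obtain ⟨hlen, hc⟩ := hmem
    have hk : 1 ≤ k := by
      by_contra h
      have hk0 : k = 0 := by omega
      subst hk0
      have := chain_head' hc (by omega)
      omega
    obtain ⟨k', rfl⟩ : ∃ k', k = k' + 1 := ⟨k - 1, by omega⟩
    rcases hd : d with _ | ⟨a, d'⟩
    · subst hd
      left
      refine ⟨(k', []), ?_, rfl⟩
      rw [mem_P]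
      refine ⟨?_, List.isChain_singleton _⟩
      simp only [List.length_nil] at hlen ⊢
      omega
    · subst hd
      rcases eq_or_ne a k' with rfl | hne
      · right
        refine ⟨(a, d'), ?_, rfl⟩
        rw [mem_P]
        refine ⟨?_, (List.isChain_cons_cons.mp hc).2⟩
        simp only [List.length_cons] at hlen ⊢
        omega
      · left
        have hhd : a < k' + 1 := by
          have := chain_head' hc (by simp)
          simpa using this
        refine ⟨(k', a :: d'), ?_, rfl⟩
        rw [mem_P]
        refine ⟨?_, ?_⟩
        · simp only [List.length_cons] at hlen ⊢
          omega
        exact List.isChain_cons_cons.mpr ⟨by omega, (List.isChain_cons_cons.mp hc).2⟩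
  · rintro (⟨⟨k', d'⟩, hmem, heq⟩ | ⟨⟨k', d'⟩, hmem, heq⟩)
    · rw [mem_P] at hmem
      obtain ⟨hlen, hc⟩ := hmem
      rw [← heq, show g1 (k', d') = (k' + 1, d') from rfl, mem_P]
      refine ⟨by omega, ?_⟩
      rcases d' with _ | ⟨a, d''⟩
      · exact List.isChain_singleton _
      · rw [List.Chain', List.isChain_cons_cons] at hc ⊢
        exact ⟨by omega, hc.2⟩
    · rw [mem_P] at hmem
      obtain ⟨hlen, hc⟩ := hmem
      rw [← heq, show g2 (k', d') = (k' + 1, k' :: d') from rfl, mem_P]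
      refine ⟨by simp only [List.length_cons]; omega, ?_⟩
      exact List.isChain_cons_cons.mpr ⟨by omega, hc⟩

lemma g1_inj : Function.Injective g1 := by
  rintro ⟨a, b⟩ ⟨c, d⟩ h
  simp only [g1, Prod.mk.injEq] at h
  have : a = c := by omega
  simp [this, h.2]

lemma g2_inj : Function.Injective g2 := by
  rintro ⟨a, b⟩ ⟨c, d⟩ h
  simp only [g2, Prod.mk.injEq, List.cons.injEq] at h
  have : a = c := by omega
  simp [this, h.2.2]

lemma images_disjoint (n : ℕ) : Disjoint (g1 '' P (n + 1)) (g2 '' P n) := by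
  rw [Set.disjoint_left]
  rintro ⟨k, d⟩ ⟨⟨a, b⟩, ⟨_, hc⟩, heq1⟩ ⟨⟨c, e⟩, ⟨_, _⟩, heq2⟩
  simp only [g1, g2, Prod.mk.injEq] at heq1 heq2
  obtain ⟨rfl, rfl⟩ : k = a + 1 ∧ d = b := ⟨heq1.1.symm, heq1.2.symm⟩
  obtain ⟨h1, h2⟩ := heq2
  have hac : a = c := by omega
  subst hac
  rw [← h2] at hc
  have := chain_head' hc (by simp)
  simp at this

lemma P_card : ∀ n, (P n).Finite ∧ (P n).ncard = Nat.fib (n + 1) := by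
  intro n
  induction n using Nat.strong_induction_on with
  | _ n ih =>
    match n with
    | 0 => rw [P_zero]; exact ⟨Set.finite_singleton _, by simp⟩
    | 1 => rw [P_one]; exact ⟨Set.finite_singleton _, by simp⟩
    | (m + 2) =>
      obtain ⟨hf1, hc1⟩ := ih (m + 1) (by omega)
      obtain ⟨hf2, hc2⟩ := ih m (by omega)
      rw [P_succ_succ]
      refine ⟨(hf1.image g1).union (hf2.image g2), ?_⟩
      rw [Set.ncard_union_eq (images_disjoint m) (hf1.image g1) (hf2.image g2),
        Set.ncard_image_of_injective _ g1_inj, Set.ncard_image_of_injective _ g2_inj,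
        hc1, hc2]
      rw [show m + 2 + 1 = (m + 1) + 2 by omega]
      conv_rhs => rw [Nat.fib_add_two]
      omega

theorem stmt_7 (n : ℕ) :
    (CW n (· ≥ ·) (· ≤ ·)).ncard = Nat.fib (n + 1) := by
  rw [CW_eq_image, Set.ncard_image_of_injOn (injOn_P n)]
  exact (P_card n).2
end

section
/- For every n ≥ 1, the number of Catalan words of length n avoiding the pattern pair (≥, <) equals 2^{n−1}. -/
namespace Stmt8Aux

lemma card_le {m : ℕ} (S : Finset (Fin m)) : S.card ≤ m :=
  le_trans (Finset.card_le_univ S) (by simp)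

/-- value at position `r < S.card` of the increasing enumeration of `S`, as a natural. -/
noncomputable def emb {m : ℕ} (S : Finset (Fin m)) (r : ℕ) : ℕ :=
  if h : r < S.card then ((S.orderEmbOfFin rfl ⟨r, h⟩ : Fin m) : ℕ) else 0

lemma emb_lt {m : ℕ} (S : Finset (Fin m)) {r : ℕ} (h : r < S.card) : emb S r < m := by
  rw [emb, dif_pos h]; exact (S.orderEmbOfFin rfl ⟨r, h⟩).2

lemma emb_strict {m : ℕ} (S : Finset (Fin m)) {r : ℕ} (h : r + 1 < S.card) :
    emb S r < emb S (r + 1) := by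
  rw [emb, emb, dif_pos h, dif_pos (by omega)]
  exact_mod_cast (S.orderEmbOfFin rfl).strictMono (by simp [Fin.lt_def])

lemma emb_add_le {m : ℕ} (S : Finset (Fin m)) :
    ∀ (d r : ℕ), r + d < S.card → emb S r + d ≤ emb S (r + d) := by
  intro d
  induction d with
  | zero => intro r _; simp
  | succ d ih =>
    intro r h
    have h1 := ih r (by omega)
    have h2 := emb_strict S (r := r + d) (by omega)
    have : r + (d+1) = (r + d) + 1 := by omega
    rw [this]; omega

lemma emb_le {m : ℕ} (S : Finset (Fin m)) {r : ℕ} (h : r < S.card) :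
    emb S r + (S.card - r) ≤ m := by
  have h1 := emb_add_le S (S.card - 1 - r) r (by omega)
  have h2 := emb_lt S (r := r + (S.card - 1 - r)) (by omega)
  omega

lemma emb_ge {m : ℕ} (S : Finset (Fin m)) : ∀ {r : ℕ}, r < S.card → r ≤ emb S r := by
  intro r
  induction r with
  | zero => intro _; exact Nat.zero_le _
  | succ r ih => intro h; have := emb_strict S h; have := ih (by omega); omega

noncomputable def wfn (m : ℕ) (S : Finset (Fin m)) : ℕ → ℕ := fun i =>
  if m - S.card < i ∧ i ≤ m then emb S (m - i) - (m - i) else i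

noncomputable def wd (m : ℕ) (S : Finset (Fin m)) : List ℕ :=
  List.ofFn (n := m + 1) fun i => wfn m S i

lemma wd_length (m : ℕ) (S : Finset (Fin m)) : (wd m S).length = m + 1 := by
  simp [wd]

lemma wd_getD (m : ℕ) (S : Finset (Fin m)) {i : ℕ} (h : i ≤ m) :
    (wd m S).getD i 0 = wfn m S i := by
  have hl : i < (wd m S).length := by rw [wd_length]; omega
  rw [List.getD_eq_getElem _ _ hl]
  simp only [wd, List.getElem_ofFn]

lemma sub_lt_card {m : ℕ} (S : Finset (Fin m)) {i : ℕ} (h1 : m - S.card < i) (h2 : i ≤ m) :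
    m - i < S.card := by
  have := card_le S; omega

lemma wfn_low {m : ℕ} (S : Finset (Fin m)) {i : ℕ} (h : i ≤ m - S.card) :
    wfn m S i = i := by
  rw [wfn, if_neg]; omega

lemma wfn_high {m : ℕ} (S : Finset (Fin m)) {i : ℕ} (h1 : m - S.card < i) (h2 : i ≤ m) :
    wfn m S i = emb S (m - i) - (m - i) := by
  rw [wfn, if_pos ⟨h1, h2⟩]

lemma wfn_le_k {m : ℕ} (S : Finset (Fin m)) {i : ℕ} (h1 : m - S.card ≤ i) (h2 : i ≤ m) :
    wfn m S i ≤ m - S.card := by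
  rcases eq_or_lt_of_le h1 with h | h
  · rw [wfn_low S (le_of_eq h.symm)]; omega
  · rw [wfn_high S h h2]
    have hlt := emb_le S (sub_lt_card S h h2)
    have hc := card_le S
    omega

/-- the word is weakly decreasing from position `m - S.card` on. -/
lemma wfn_decr {m : ℕ} (S : Finset (Fin m)) {i : ℕ} (h1 : m - S.card ≤ i) (h2 : i + 1 ≤ m) :
    wfn m S (i + 1) ≤ wfn m S i := by
  have hc := card_le S
  rcases eq_or_lt_of_le h1 with h | h
  · -- i = k, step into the tail
    rw [wfn_low S (le_of_eq h.symm), wfn_high S (by omega) h2]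
    have hlt := emb_lt S (sub_lt_card S (i := i+1) (by omega) h2)
    omega
  · rw [wfn_high S h (by omega), wfn_high S (by omega) h2]
    have hr : m - i = (m - (i+1)) + 1 := by omega
    have hs := emb_strict S (r := m - (i+1)) (by rw [← hr]; exact sub_lt_card S h (by omega))
    have hg := emb_ge S (r := m - (i+1)) (by omega)
    rw [hr]
    omega

lemma wd_mem (m : ℕ) (S : Finset (Fin m)) : wd m S ∈ CW (m+1) (· ≥ ·) (· < ·) := by
  refine ⟨wd_length m S, ⟨?_, ?_⟩, ?_⟩
  · intro _
    rw [wd_getD m S (Nat.zero_le m), wfn_low S (Nat.zero_le _)]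
  · intro i hi
    rw [wd_length] at hi
    rw [wd_getD m S (by omega), wd_getD m S (by omega)]
    rcases le_or_gt (i+1) (m - S.card) with h | h
    · rw [wfn_low S h, wfn_low S (by omega)]
    · have := wfn_decr S (i := i) (by omega) (by omega)
      omega
  · intro i hi
    rw [wd_length] at hi
    rintro ⟨hxy, hyz⟩
    rw [wd_getD m S (by omega), wd_getD m S (by omega)] at hxy
    rw [wd_getD m S (by omega), wd_getD m S (by omega)] at hyz
    rcases le_or_gt (i+1) (m - S.card) with h | h
    · rw [wfn_low S h, wfn_low S (by omega)] at hxy; omega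
    · have hd := wfn_decr S (i := i + 1) (by omega) (by omega)
      have : i + 1 + 1 = i + 2 := rfl
      rw [this] at hd
      omega

lemma wd_inj (m : ℕ) : Function.Injective (wd m) := by
  intro S T hST
  have hfn : ∀ i, i ≤ m → wfn m S i = wfn m T i := by
    intro i hi
    have h2 : (wd m S).getD i 0 = (wd m T).getD i 0 := by rw [hST]
    rw [wd_getD m S hi, wd_getD m T hi] at h2
    exact h2
  have hcS := card_le S
  have hcT := card_le T
  -- first, the cards agree
  have hcard : S.card = T.card := by
    by_contra hne
    -- wlog via symmetry: derive contradiction from S.card < T.card (both cases)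
    have key : ∀ (A B : Finset (Fin m)), A.card < B.card →
        (∀ i, i ≤ m → wfn m A i = wfn m B i) → False := by
      intro A B hlt hfn
      have hcA := card_le A
      have hcB := card_le B
      set i : ℕ := m - B.card + 1 with hi
      have h1 : wfn m A i = i := wfn_low A (by omega)
      have h2 : wfn m B i ≤ m - B.card := wfn_le_k B (by omega) (by omega)
      have := hfn i (by omega)
      omega
    rcases lt_or_gt_of_ne hne with h | h
    · exact key S T h hfn
    · exact key T S h (fun i hi => (hfn i hi).symm)
  -- then the embeddings agree
  have hemb : ∀ r, r < S.card → emb S r = emb T r := by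
    intro r hr
    have hi1 : m - S.card < m - r := by omega
    have hi2 : m - r ≤ m := by omega
    have := hfn (m - r) hi2
    rw [wfn_high S hi1 hi2, wfn_high T (by omega) hi2] at this
    have hrr : m - (m - r) = r := by omega
    rw [hrr] at this
    have g1 := emb_ge S (r := r) hr
    have g2 := emb_ge T (r := r) (by omega)
    omega
  -- conclude S = T via range of orderEmbOfFin
  have : ∀ (x : Fin m), x ∈ S ↔ x ∈ T := by
    intro x
    constructor
    · intro hx
      have : x ∈ Set.range (S.orderEmbOfFin rfl) := by
        rw [Finset.range_orderEmbOfFin]; exact hx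
      obtain ⟨r, hr⟩ := this
      have h1 : emb S r = (x : ℕ) := by
        rw [emb, dif_pos r.2]; simp [Fin.eta, hr]
      have h2 : emb T r = (x : ℕ) := by rw [← hemb r r.2]; exact h1
      rw [emb, dif_pos (show (r : ℕ) < T.card by omega)] at h2
      have : (T.orderEmbOfFin rfl ⟨(r : ℕ), by omega⟩) = x := Fin.ext h2
      rw [← this]
      exact Finset.orderEmbOfFin_mem T rfl _
    · intro hx
      have : x ∈ Set.range (T.orderEmbOfFin rfl) := by
        rw [Finset.range_orderEmbOfFin]; exact hx
      obtain ⟨r, hr⟩ := this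
      have h1 : emb T r = (x : ℕ) := by
        rw [emb, dif_pos r.2]; simp [Fin.eta, hr]
      have h2 : emb S r = (x : ℕ) := by rw [hemb r (by omega)]; exact h1
      rw [emb, dif_pos (show (r : ℕ) < S.card by omega)] at h2
      have : (S.orderEmbOfFin rfl ⟨(r : ℕ), by omega⟩) = x := Fin.ext h2
      rw [← this]
      exact Finset.orderEmbOfFin_mem S rfl _
  exact Finset.ext this

open Classical in
lemma wd_surj (m : ℕ) (w : List ℕ) (hw : w ∈ CW (m+1) (· ≥ ·) (· < ·)) :
    ∃ S : Finset (Fin m), wd m S = w := by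
  obtain ⟨hlen, ⟨h0, hcat⟩, havd⟩ := hw
  set W : ℕ → ℕ := fun i => w.getD i 0 with hW
  have h0' : W 0 = 0 := h0 (by omega)
  have hcat' : ∀ i, i + 1 ≤ m → W (i+1) ≤ W i + 1 := fun i hi => hcat i (by omega)
  have havd' : ∀ i, i + 2 ≤ m → ¬ (W i ≥ W (i+1) ∧ W (i+1) < W (i+2)) :=
    fun i hi => havd i (by omega)
  have hex : ∃ i, (i + 1 ≤ m ∧ W (i+1) ≤ W i) ∨ i = m := ⟨m, Or.inr rfl⟩
  set k := Nat.find hex with hk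
  have hkspec := Nat.find_spec hex
  have hkm : k ≤ m := by
    by_contra h
    have := Nat.find_min hex (m := m) (by omega)
    simp at this
  have hmin : ∀ j, j < k → W j < W (j+1) := by
    intro j hj
    have := Nat.find_min hex hj
    push_neg at this
    have h2 := this.1 (by omega)
    omega
  have F1 : ∀ j, j ≤ k → W j = j := by
    intro j
    induction j with
    | zero => intro _; exact h0'
    | succ j ih =>
      intro hj
      have h1 := ih (by omega)
      have h2 := hmin j (by omega)
      have h3 := hcat' j (by omega)
      omega
  have F2 : ∀ i, k ≤ i → i + 1 ≤ m → W (i+1) ≤ W i := by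
    intro i hi
    induction i, hi using Nat.le_induction with
    | base =>
      intro h1
      rcases hkspec with h | h
      · exact h.2
      · omega
    | succ i hi ih =>
      intro h1
      have e : i + 1 + 1 = i + 2 := rfl
      rw [e]
      by_contra hno
      exact havd' i (by omega) ⟨by have := ih (by omega); omega, by omega⟩
  have F4 : ∀ i j, k ≤ i → i ≤ j → j ≤ m → W j ≤ W i := by
    intro i j hki hij
    induction j, hij using Nat.le_induction with
    | base => intro _; exact le_rfl
    | succ j hj ih =>
      intro h1
      have := F2 j (by omega) (by omega)
      have := ih (by omega)
      omega
  have F3 : ∀ i, k ≤ i → i ≤ m → W i ≤ k := by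
    intro i h1 h2
    have := F4 k i le_rfl h1 h2
    have := F1 k le_rfl
    omega
  set c := m - k with hc
  set f : Fin c → Fin m := fun r =>
    ⟨W (m - (r : ℕ)) + r, by
      have hr := r.2
      have h3 := F3 (m - (r : ℕ)) (by omega) (by omega)
      omega⟩ with hf
  have hmono : StrictMono f := by
    intro a b hab
    have hab' : (a : ℕ) < (b : ℕ) := hab
    have hb := b.2
    have h4 := F4 (m - (b : ℕ)) (m - (a : ℕ)) (by omega) (by omega) (by omega)
    simp only [hf, Fin.lt_def]
    omega
  set S : Finset (Fin m) := Finset.image f Finset.univ with hS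
  have hScard : S.card = c := by
    rw [hS, Finset.card_image_of_injective _ hmono.injective, Finset.card_univ,
      Fintype.card_fin]
  have hembS : ∀ r, (hr : r < S.card) → emb S r = W (m - r) + r := by
    intro r hr
    set f' : Fin S.card → Fin m := fun r => f ⟨(r : ℕ), by omega⟩ with hf'
    have hmono' : StrictMono f' := by
      intro a b hab
      exact hmono (show (⟨(a:ℕ),_⟩ : Fin c) < ⟨(b:ℕ),_⟩ from hab)
    have hfs : ∀ x, f' x ∈ S := by
      intro x
      rw [hS]
      exact Finset.mem_image_of_mem f (Finset.mem_univ _)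
    have hu : f' = S.orderEmbOfFin rfl := Finset.orderEmbOfFin_unique rfl hfs hmono'
    have := congrFun hu ⟨r, hr⟩
    rw [emb, dif_pos hr, ← this]
  refine ⟨S, ?_⟩
  apply List.ext_getElem (by rw [wd_length, hlen])
  intro i h1 h2
  rw [wd_length] at h1
  have hgd : (wd m S).getD i 0 = (wd m S)[i] := List.getD_eq_getElem _ _ (by rw [wd_length]; omega)
  have hgw : W i = w[i] := List.getD_eq_getElem _ _ h2
  rw [← hgd, ← hgw, wd_getD m S (by omega)]
  rcases le_or_gt i (m - S.card) with h | h
  · rw [wfn_low S h]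
    rw [hScard] at h
    exact (F1 i (by omega)).symm
  · rw [wfn_high S h (by omega)]
    have hr : m - i < S.card := sub_lt_card S h (by omega)
    rw [hembS (m - i) hr]
    have : m - (m - i) = i := by omega
    rw [this]
    omega

end Stmt8Aux

theorem stmt_8 (n : ℕ) (hn : 1 ≤ n) :
    (CW n (· ≥ ·) (· < ·)).ncard = 2 ^ (n - 1) := by
  obtain ⟨m, rfl⟩ : ∃ m, n = m + 1 := ⟨n - 1, by omega⟩
  have hset : CW (m+1) (· ≥ ·) (· < ·) = Set.range (Stmt8Aux.wd m) := by
    ext w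
    constructor
    · intro hw
      obtain ⟨S, hS⟩ := Stmt8Aux.wd_surj m w hw
      exact ⟨S, hS⟩
    · rintro ⟨S, rfl⟩
      exact Stmt8Aux.wd_mem m S
  rw [hset, ← Set.image_univ, Set.ncard_image_of_injective _ (Stmt8Aux.wd_inj m),
    Set.ncard_univ, Nat.card_eq_fintype_card, Fintype.card_finset, Fintype.card_fin]
  simp
end

section
/- For every n ≥ 1, the number of Catalan words of length n avoiding the pattern pair (≤, >) equals 2^{n−1}. -/
/-- Extend a start value `a` by a list of increment bits. -/
def ext (a : ℕ) : List Bool → List ℕ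
  | [] => []
  | b :: bs => (if b then a + 1 else a) :: ext (if b then a + 1 else a) bs

lemma ext_length (a : ℕ) (bs : List Bool) : (ext a bs).length = bs.length := by
  induction bs generalizing a with
  | nil => rfl
  | cons b bs ih => simp [ext, ih]

lemma ext_inj (a : ℕ) : ∀ bs cs : List Bool, ext a bs = ext a cs → bs = cs := by
  intro bs
  induction bs generalizing a with
  | nil =>
    intro cs h
    cases cs with
    | nil => rfl
    | cons c cs => simp [ext] at h
  | cons b bs ih =>
    intro cs h
    cases cs with
    | nil => simp [ext] at h
    | cons c cs =>
      simp only [ext, List.cons.injEq] at h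
      have hbc : b = c := by
        cases b <;> cases c <;> simp_all
      subst hbc
      exact congrArg _ (ih _ _ h.2)

/-- The step predicate: successive entries equal or go up by one. -/
def Step (w : List ℕ) : Prop :=
  ∀ i, i + 1 < w.length → w.getD (i + 1) 0 = w.getD i 0 ∨
    w.getD (i + 1) 0 = w.getD i 0 + 1

lemma step_ext (a : ℕ) (bs : List Bool) : Step (a :: ext a bs) := by
  induction bs generalizing a with
  | nil => intro i hi; simp [ext] at hi
  | cons b bs ih =>
    intro i hi
    cases i with
    | zero =>
      cases b <;> simp [ext]
    | succ i =>
      have := ih (if b then a + 1 else a) i (by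
        simpa [ext, ext_length] using hi)
      simpa [ext] using this

lemma exists_ext : ∀ (t : List ℕ) (a : ℕ), Step (a :: t) →
    ∃ bs : List Bool, bs.length = t.length ∧ t = ext a bs := by
  intro t
  induction t with
  | nil => intro a _; exact ⟨[], rfl, rfl⟩
  | cons c t ih =>
    intro a hs
    have h0 := hs 0 (by simp)
    simp at h0
    have hstep : Step (c :: t) := by
      intro i hi
      have := hs (i + 1) (by simpa using hi)
      simpa using this
    obtain ⟨bs, hlen, ht⟩ := ih c hstep
    rcases h0 with h0 | h0
    · refine ⟨false :: bs, by simp [hlen], ?_⟩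
      simp [ext, h0, ht]
    · refine ⟨true :: bs, by simp [hlen], ?_⟩
      simp [ext, h0, ht]

/-- A word in `CW n (≤) (>)` is weakly increasing. -/
lemma cw_mono (w : List ℕ) (hw : IsCatalanWord w) (ha : AvoidsPair (· ≤ ·) (· > ·) w) :
    ∀ i, i + 1 < w.length → w.getD i 0 ≤ w.getD (i + 1) 0 := by
  intro i
  induction i with
  | zero =>
    intro hi
    have := hw.1 (by omega)
    rw [this]
    exact Nat.zero_le _
  | succ j ih =>
    intro hi
    by_contra hlt
    push_neg at hlt
    have hj := ih (by omega)
    exact ha j (by omega) ⟨hj, hlt⟩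

lemma cw_step (w : List ℕ) (hw : IsCatalanWord w) (ha : AvoidsPair (· ≤ ·) (· > ·) w) :
    Step w := by
  intro i hi
  have h1 := cw_mono w hw ha i hi
  have h2 := hw.2 i hi
  omega

lemma CW_eq_s9 (n : ℕ) (hn : 1 ≤ n) :
    CW n (· ≤ ·) (· > ·) = (fun bs => (0 : ℕ) :: ext 0 bs) '' {bs | bs.length = n - 1} := by
  ext w
  constructor
  · rintro ⟨hlen, hcat, havoid⟩
    have hne : w ≠ [] := by intro h; simp [h] at hlen; omega
    obtain ⟨a, t, rfl⟩ := List.exists_cons_of_ne_nil hne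
    have ha0 : a = 0 := by
      have := hcat.1 (by simp)
      simpa using this
    subst ha0
    obtain ⟨bs, hbl, hbs⟩ := exists_ext t 0 (cw_step _ hcat havoid)
    refine ⟨bs, ?_, by rw [hbs]⟩
    simp only [Set.mem_setOf_eq, hbl]
    simp at hlen
    omega
  · rintro ⟨bs, hbs, rfl⟩
    have hstep := step_ext 0 bs
    show (0 :: ext 0 bs).length = n ∧ IsCatalanWord (0 :: ext 0 bs) ∧
      AvoidsPair (· ≤ ·) (· > ·) (0 :: ext 0 bs)
    refine ⟨?_, ⟨by simp, ?_⟩, ?_⟩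
    · simp [ext_length]
      simp only [Set.mem_setOf_eq] at hbs
      omega
    · intro i hi
      rcases hstep i hi with h | h <;> omega
    · intro i hi h
      rcases hstep (i + 1) (by omega) with h2 | h2 <;>
        · rw [show i + 1 + 1 = i + 2 by omega] at h2
          simp only [gt_iff_lt] at h
          omega

lemma ncard_length (m : ℕ) : ({bs : List Bool | bs.length = m}).ncard = 2 ^ m := by
  have hset : {bs : List Bool | bs.length = m} =
      Set.range (List.Vector.toList : List.Vector Bool m → List Bool) := by
    ext l
    constructor
    · intro hl; exact ⟨⟨l, hl⟩, rfl⟩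
    · rintro ⟨v, rfl⟩; exact v.2
  rw [hset, ← Nat.card_coe_set_eq,
    Nat.card_range_of_injective List.Vector.toList_injective,
    Nat.card_eq_fintype_card, card_vector]
  simp

theorem stmt_9 (n : ℕ) (hn : 1 ≤ n) :
    (CW n (· ≤ ·) (· > ·)).ncard = 2 ^ (n - 1) := by
  rw [CW_eq_s9 n hn]
  rw [Set.ncard_image_of_injOn (by
    intro x _ y _ h
    simp only [List.cons.injEq] at h
    exact ext_inj 0 x y h.2)]
  exact ncard_length (n - 1)
end

section
/- For every n ≥ 1, the number of Catalan words of length n avoiding the pattern pair (≥, ≠) equals binom(n, 2) + 1. Moreover, each such word is either of the form 01⋯(k−1)k^{n−k} for some 0 ≤ k ≤ n−1, or 01⋯(k−1)m^{n−k} for some k ≥ 1 and 0 ≤ m < k−1. -/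
/-! ### Auxiliary material -/

def fword (n k m : ℕ) : List ℕ := List.range k ++ List.replicate (n - k) m

lemma fword_length {n k : ℕ} (m : ℕ) (hk : k ≤ n) : (fword n k m).length = n := by
  simp [fword]; omega

lemma fword_getD_lt {n k m i : ℕ} (h : i < k) : (fword n k m).getD i 0 = i := by
  rw [fword, List.getD_append _ _ _ _ (by simpa using h),
    List.getD_eq_getElem _ _ (by simpa using h)]
  simp

lemma fword_getD_ge {n k m i : ℕ} (h1 : k ≤ i) (h2 : i < n) :
    (fword n k m).getD i 0 = m := by
  rw [fword, List.getD_append_right _ _ _ _ (by simpa using h1),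
    List.getD_eq_getElem _ _ (by simp; omega)]
  simp

lemma mem_CW_fword {n k m : ℕ} (hk1 : 1 ≤ k) (hkn : k ≤ n) (hm : m < k) :
    fword n k m ∈ CW n (· ≥ ·) (· ≠ ·) := by
  refine ⟨fword_length m hkn, ⟨?_, ?_⟩, ?_⟩
  · intro _
    rw [fword_getD_lt hk1]
  · intro i hi
    rw [fword_length m hkn] at hi
    by_cases h1 : i + 1 < k
    · rw [fword_getD_lt h1, fword_getD_lt (show i < k by omega)]
    · rw [fword_getD_ge (show k ≤ i + 1 by omega) hi]
      by_cases h2 : i < k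
      · rw [fword_getD_lt h2]; omega
      · rw [fword_getD_ge (show k ≤ i by omega) (show i < n by omega)]; omega
  · intro i hi hcon
    rw [fword_length m hkn] at hi
    obtain ⟨h1, h2⟩ := hcon
    by_cases hc : i + 1 < k
    · rw [fword_getD_lt hc, fword_getD_lt (show i < k by omega)] at h1; omega
    · rw [fword_getD_ge (show k ≤ i + 1 by omega) (show i + 1 < n by omega),
        fword_getD_ge (show k ≤ i + 2 by omega) (show i + 2 < n by omega)] at h2
      exact h2 rfl

lemma CW_forward {n : ℕ} (hn : 1 ≤ n) {w : List ℕ} (hw : w ∈ CW n (· ≥ ·) (· ≠ ·)) :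
    ∃ k m, 1 ≤ k ∧ k ≤ n ∧ m < k ∧ (k = n → m = n - 1) ∧ w = fword n k m := by
  obtain ⟨hlen, ⟨h0, hcat⟩, havoid⟩ := hw
  by_cases hall : ∀ i < n, w.getD i 0 = i
  · refine ⟨n, n - 1, hn, le_rfl, by omega, fun _ => rfl, ?_⟩
    apply List.ext_getElem (by rw [hlen, fword_length _ le_rfl])
    intro i h1 h2
    rw [hlen] at h1
    rw [← List.getD_eq_getElem w 0 (by omega), ← List.getD_eq_getElem _ 0 h2,
      hall i h1, fword_getD_lt h1]
  · push_neg at hall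
    have hex : ∃ i, i < n ∧ w.getD i 0 ≠ i := by
      obtain ⟨i, hi1, hi2⟩ := hall; exact ⟨i, hi1, hi2⟩
    obtain ⟨k, ⟨hkn, hkne⟩, hmin⟩ :
        ∃ k, (k < n ∧ w.getD k 0 ≠ k) ∧ ∀ j < k, ¬(j < n ∧ w.getD j 0 ≠ j) :=
      ⟨Nat.find hex, Nat.find_spec hex, fun j hj => Nat.find_min hex hj⟩
    have hprefix : ∀ j, j < k → w.getD j 0 = j := by
      intro j hj
      have := hmin j hj
      push_neg at this
      exact this (by omega)
    have hk1 : 1 ≤ k := by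
      rcases Nat.eq_zero_or_pos k with h | h
      · exfalso; apply hkne; rw [h]; exact h0 (by omega)
      · exact h
    have hm : w.getD k 0 < k := by
      have hc := hcat (k - 1) (by rw [hlen]; omega)
      rw [show k - 1 + 1 = k by omega, hprefix (k - 1) (by omega)] at hc
      omega
    set m := w.getD k 0 with hmdef
    have key : ∀ d, k + d < n → w.getD (k + d) 0 = m := by
      intro d
      induction d using Nat.strong_induction_on with
      | _ d ih =>
        intro hd
        match d with
        | 0 => rfl
        | 1 =>
          have hav := havoid (k - 1) (by rw [hlen]; omega)
          rw [show k - 1 + 1 = k by omega, show k - 1 + 2 = k + 1 by omega,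
            hprefix (k - 1) (by omega)] at hav
          by_cases hne : w.getD k 0 = w.getD (k + 1) 0
          · omega
          · exact absurd ⟨by omega, hne⟩ hav
        | e + 2 =>
          have i1 : w.getD (k + e) 0 = m := ih e (by omega) (by omega)
          have i2 : w.getD (k + e + 1) 0 = m := by
            have := ih (e + 1) (by omega) (by omega)
            rw [show k + (e + 1) = k + e + 1 by omega] at this
            exact this
          have hav := havoid (k + e) (by rw [hlen]; omega)
          by_cases hne : w.getD (k + e + 1) 0 = w.getD (k + e + 2) 0
          · rw [show k + (e + 2) = k + e + 2 by omega]
            omega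
          · exact absurd ⟨by omega, hne⟩ hav
    refine ⟨k, m, hk1, by omega, hm, by omega, ?_⟩
    apply List.ext_getElem (by rw [hlen, fword_length _ (by omega)])
    intro i h1 h2
    rw [hlen] at h1
    rw [← List.getD_eq_getElem w 0 (by omega), ← List.getD_eq_getElem _ 0 h2]
    by_cases hik : i < k
    · rw [fword_getD_lt hik, hprefix i hik]
    · rw [fword_getD_ge (by omega) h1, show i = k + (i - k) by omega]
      exact key (i - k) (by omega)

lemma fword_ne {n k k' m m' : ℕ} (hkk : k < k') (hk'n : k' ≤ n) (hm : m < k) :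
    fword n k m ≠ fword n k' m' := by
  intro h
  have := congrArg (fun l => l.getD k 0) h
  rw [fword_getD_ge le_rfl (by omega), fword_getD_lt hkk] at this
  omega

def Sset (n : ℕ) : Finset (ℕ × ℕ) :=
  insert (n, n - 1)
    ((Finset.Ico 1 n).biUnion (fun k => (Finset.range k).image (fun m => (k, m))))

lemma mem_Sset {n k m : ℕ} (hn : 1 ≤ n) :
    (k, m) ∈ Sset n ↔ 1 ≤ k ∧ k ≤ n ∧ m < k ∧ (k = n → m = n - 1) := by
  simp only [Sset, Finset.mem_insert, Finset.mem_biUnion, Finset.mem_Ico,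
    Finset.mem_image, Finset.mem_range, Prod.mk.injEq]
  constructor
  · rintro (⟨rfl, rfl⟩ | ⟨a, ⟨ha1, ha2⟩, b, hb, rfl, rfl⟩) <;> omega
  · rintro ⟨h1, h2, h3, h4⟩
    by_cases hk : k = n
    · exact Or.inl ⟨hk, by omega⟩
    · exact Or.inr ⟨k, ⟨h1, by omega⟩, m, h3, rfl, rfl⟩

lemma card_Sset {n : ℕ} (hn : 1 ≤ n) : (Sset n).card = n.choose 2 + 1 := by
  have hnotmem : (n, n - 1) ∉
      (Finset.Ico 1 n).biUnion (fun k => (Finset.range k).image (fun m => (k, m))) := by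
    simp only [Finset.mem_biUnion, Finset.mem_Ico, Finset.mem_image, Finset.mem_range,
      Prod.mk.injEq]
    rintro ⟨a, ⟨ha1, ha2⟩, b, hb, rfl, rfl⟩
    omega
  rw [Sset, Finset.card_insert_of_notMem hnotmem, Finset.card_biUnion]
  · have himg : ∀ k, ((Finset.range k).image (fun m => (k, m))).card = k := by
      intro k
      rw [Finset.card_image_of_injective _ (fun a b h => by simpa using h)]
      simp
    simp only [himg]
    congr 1
    have hins : Finset.range n = insert 0 (Finset.Ico 1 n) := by
      ext x; simp; omega
    rw [Nat.choose_two_right, ← Finset.sum_range_id, hins,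
      Finset.sum_insert (by simp)]
    omega
  · intro x hx y hy hxy
    simp only [Finset.disjoint_left, Finset.mem_image, Finset.mem_range]
    rintro ⟨a, b⟩ ⟨c, hc, he⟩ ⟨d, hd, he'⟩
    apply hxy
    simp only [Prod.mk.injEq] at he he'
    omega

theorem stmt_10 (n : ℕ) (hn : 1 ≤ n) :
    (CW n (· ≥ ·) (· ≠ ·)).ncard = n.choose 2 + 1 ∧
    ∀ w ∈ CW n (· ≥ ·) (· ≠ ·),
      (∃ k, k ≤ n - 1 ∧ w = List.range k ++ List.replicate (n - k) k) ∨
      (∃ k m, 1 ≤ k ∧ m < k - 1 ∧ w = List.range k ++ List.replicate (n - k) m) := by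
  constructor
  · have hset : CW n (· ≥ ·) (· ≠ ·) = ↑((Sset n).image (fun p => fword n p.1 p.2)) := by
      ext w
      simp only [Finset.coe_image, Set.mem_image, Finset.mem_coe]
      constructor
      · intro hw
        obtain ⟨k, m, h1, h2, h3, h4, h5⟩ := CW_forward hn hw
        exact ⟨(k, m), (mem_Sset hn).mpr ⟨h1, h2, h3, h4⟩, h5.symm⟩
      · rintro ⟨⟨k, m⟩, hp, rfl⟩
        obtain ⟨h1, h2, h3, _⟩ := (mem_Sset hn).mp hp
        exact mem_CW_fword h1 h2 h3
    have hinj : Set.InjOn (fun p : ℕ × ℕ => fword n p.1 p.2) ↑(Sset n) := by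
      rintro ⟨k, m⟩ hk ⟨k', m'⟩ hk' hfe
      simp only [Finset.mem_coe] at hk hk'
      obtain ⟨a1, a2, a3, a4⟩ := (mem_Sset hn).mp hk
      obtain ⟨b1, b2, b3, b4⟩ := (mem_Sset hn).mp hk'
      simp only at hfe
      have hkk : k = k' := by
        rcases lt_trichotomy k k' with h | h | h
        · exact absurd hfe (fword_ne h b2 a3)
        · exact h
        · exact absurd hfe.symm (fword_ne h a2 b3)
      subst hkk
      by_cases hkn : k < n
      · have := congrArg (fun l => l.getD k 0) hfe
        rw [fword_getD_ge le_rfl hkn, fword_getD_ge le_rfl hkn] at this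
        simp [this]
      · have hk : k = n := by omega
        simp [a4 hk, b4 hk]
    rw [hset, Set.ncard_coe_finset, Finset.card_image_of_injOn hinj, card_Sset hn]
  · intro w hw
    obtain ⟨k, m, h1, h2, h3, _, h5⟩ := CW_forward hn hw
    by_cases hm : m = k - 1
    · left
      refine ⟨k - 1, by omega, ?_⟩
      rw [h5, hm, fword]
      obtain ⟨j, rfl⟩ : ∃ j, k = j + 1 := ⟨k - 1, by omega⟩
      simp only [Nat.add_sub_cancel]
      rw [List.range_succ, show n - j = (n - (j + 1)) + 1 by omega, List.replicate_succ]
      simp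
    · right
      exact ⟨k, m, h1, by omega, h5⟩
end

section
/- For every n ≥ 1, the number of Catalan words of length n avoiding the pattern pair (<, ≥) equals n. -/
/-- The canonical word with `k` leading zeros then `1,2,...`. -/
def cwF (n k : ℕ) : List ℕ := (List.range n).map (fun i => i + 1 - k)

lemma cwF_length (n k : ℕ) : (cwF n k).length = n := by simp [cwF]

lemma cwF_getD (n k i : ℕ) (h : i < n) : (cwF n k).getD i 0 = i + 1 - k := by
  rw [List.getD_eq_getElem _ 0 (by simpa [cwF] using h)]
  simp [cwF]

theorem stmt_12 (n : ℕ) (hn : 1 ≤ n) :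
    (CW n (· < ·) (· ≥ ·)).ncard = n := by
  have hset : CW n (· < ·) (· ≥ ·) = ↑((Finset.Icc 1 n).image (cwF n)) := by
    ext w
    simp only [Finset.coe_image, Set.mem_image, Finset.mem_coe, Finset.mem_Icc, CW,
      Set.mem_setOf_eq]
    constructor
    · rintro ⟨hlen, ⟨h0, hstep⟩, havoid⟩
      set a : ℕ → ℕ := fun i => w.getD i 0 with ha
      have ha0 : a 0 = 0 := h0 (by omega)
      have hstep' : ∀ i, i + 1 < n → a (i+1) ≤ a i + 1 := fun i hi => hstep i (by omega)
      have havoid' : ∀ i, i + 2 < n → ¬ (a i < a (i+1) ∧ a (i+2) ≤ a (i+1)) :=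
        fun i hi => havoid i (by omega)
      -- non-ascent implies everything before is 0
      have hB : ∀ i, i + 1 < n → a (i+1) ≤ a i → a i = 0 ∧ a (i+1) = 0 := by
        intro i
        induction i with
        | zero => intro h1 hle; omega
        | succ j ih =>
          intro h1 hle
          have : ¬ (a j < a (j+1)) := fun hlt => havoid' j (by omega) ⟨hlt, hle⟩
          have := ih (by omega) (by omega)
          omega
      -- ascent is exactly +1 (Catalan), and propagates
      have hF2 : ∀ i, i + 1 < n → a i = a (i+1) - 1 := by
        intro i hi
        have hs := hstep' i (by omega)
        rcases le_or_gt (a (i+1)) (a i) with h | h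
        · have := hB i hi h; omega
        · omega
      -- downward determination from the last value
      have hlast : ∀ d, d ≤ n - 1 → a (n - 1 - d) = a (n-1) - d := by
        intro d
        induction d with
        | zero => simp
        | succ e ih =>
          intro hd
          have h1 : n - 1 - (e+1) + 1 = n - 1 - e := by omega
          have := hF2 (n - 1 - (e+1)) (by omega)
          rw [h1] at this
          rw [this, ih (by omega)]
          omega
      -- bound a (n-1) ≤ n-1
      have hbound : ∀ i, i < n → a i ≤ i := by
        intro i
        induction i with
        | zero => intro _; omega
        | succ j ih =>
          intro h
          have := hstep' j (by omega)
          have := ih (by omega)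
          omega
      have hb := hbound (n-1) (by omega)
      refine ⟨n - a (n-1), ⟨by omega, by omega⟩, ?_⟩
      apply List.ext_getElem (by simp [cwF_length, hlen])
      intro i h1 h2
      have hi : i < n := by simpa [hlen] using h2
      have hv : a i = a (n-1) - (n - 1 - i) := by
        have := hlast (n - 1 - i) (by omega)
        rw [show n - 1 - (n - 1 - i) = i by omega] at this
        exact this
      have e1 : (cwF n (n - a (n-1)))[i] = i + 1 - (n - a (n-1)) := by simp [cwF]
      have e2 : w[i] = a i := (List.getD_eq_getElem w 0 h2).symm
      rw [e1, e2, hv]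
      omega
    · rintro ⟨k, ⟨hk1, hkn⟩, rfl⟩
      refine ⟨cwF_length n k, ⟨?_, ?_⟩, ?_⟩
      · intro h
        rw [cwF_getD n k 0 (by omega)]; omega
      · intro i hi
        rw [cwF_length] at hi
        rw [cwF_getD n k _ (by omega), cwF_getD n k _ (by omega)]
        omega
      · intro i hi
        rw [cwF_length] at hi
        rw [cwF_getD n k _ (by omega), cwF_getD n k _ (by omega),
          cwF_getD n k _ (by omega)]
        rintro ⟨h1, h2⟩
        simp only [ge_iff_le] at h2
        omega
  rw [hset, Set.ncard_coe_finset, Finset.card_image_of_injOn, Nat.card_Icc]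
  · omega
  · intro k hk k' hk' he
    simp only [Finset.coe_Icc, Set.mem_Icc] at hk hk'
    have h1 := cwF_getD n k (n-1) (by omega)
    have h2 := cwF_getD n k' (n-1) (by omega)
    rw [he] at h1
    omega
end

section
/- For every n ≥ 1, the set of Catalan words of length n avoiding the pattern pair (<, ≥) equals the set of Catalan words of length n avoiding the pattern pair (≠, ≥); in particular, the number of Catalan words of length n avoiding (≠, ≥) equals n. -/
def cwd (n j : ℕ) : List ℕ := (List.range n).map (fun i => i - j)

lemma cwd_length (n j : ℕ) : (cwd n j).length = n := by simp [cwd]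

lemma cwd_getD (n j i : ℕ) (h : i < n) : (cwd n j).getD i 0 = i - j := by
  rw [List.getD_eq_getElem _ _ (by simp [cwd_length, h])]
  simp [cwd]

lemma cwd_mem (n j : ℕ) (hn : 1 ≤ n) : cwd n j ∈ CW n (· ≠ ·) (· ≥ ·) := by
  refine ⟨cwd_length n j, ⟨?_, ?_⟩, ?_⟩
  · intro _; rw [cwd_getD n j 0 hn]; omega
  · intro i hi
    rw [cwd_length] at hi
    rw [cwd_getD n j _ hi, cwd_getD n j i (by omega)]
    omega
  · intro i hi ⟨h1, h2⟩
    rw [cwd_length] at hi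
    rw [cwd_getD n j i (by omega), cwd_getD n j (i+1) (by omega)] at h1
    rw [cwd_getD n j (i+1) (by omega), cwd_getD n j (i+2) (by omega)] at h2
    omega

lemma cw_lt_struct (n : ℕ) (hn : 1 ≤ n) (w : List ℕ)
    (hw : w ∈ CW n (· < ·) (· ≥ ·)) : ∃ j < n, w = cwd n j := by
  obtain ⟨hlen, ⟨h0, hstep0⟩, hav0⟩ := hw
  have hstep : ∀ i, i + 1 < n → w.getD (i + 1) 0 ≤ w.getD i 0 + 1 := by
    intro i hi; exact hstep0 i (by omega)
  have hav : ∀ i, i + 2 < n → w.getD i 0 < w.getD (i + 1) 0 →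
      w.getD (i + 1) 0 < w.getD (i + 2) 0 := by
    intro i hi h
    by_contra hc
    exact hav0 i (by omega) ⟨h, by omega⟩
  have persist : ∀ k i, i + 1 + k < n → w.getD i 0 < w.getD (i + 1) 0 →
      w.getD (i + 1 + k) 0 = w.getD (i + 1) 0 + k := by
    intro k
    induction k with
    | zero => intro i _ _; simp
    | succ k ih =>
      intro i hik hasc
      have h2 := hav i (by omega) hasc
      have h3 := hstep (i + 1) (by omega)
      have h4 := ih (i + 1) (by omega) h2
      rw [show i + 1 + 1 + k = i + 2 + k by omega, show i + 1 + 1 = i + 2 by omega] at h4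
      rw [show i + 1 + 1 = i + 2 by omega] at h3
      rw [show i + 1 + (k + 1) = i + 2 + k by omega, h4]
      omega
  have hW0 : w.getD 0 0 = 0 := h0 (by omega)
  have hasAsc : ∀ i, i < n → 0 < w.getD i 0 →
      ∃ k, k + 1 ≤ i ∧ w.getD k 0 < w.getD (k + 1) 0 := by
    intro i
    induction i with
    | zero => intro _ h; omega
    | succ i ih =>
      intro hi hpos
      by_cases hc : w.getD i 0 < w.getD (i + 1) 0
      · exact ⟨i, le_refl _, hc⟩
      · obtain ⟨k, hk1, hk2⟩ := ih (by omega) (by omega)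
        exact ⟨k, by omega, hk2⟩
  have wle : ∀ i, i < n → w.getD i 0 ≤ i := by
    intro i
    induction i with
    | zero => intro _; omega
    | succ i ih =>
      intro hi
      have := hstep i (by omega)
      have := ih (by omega)
      omega
  have hmain : ∀ d i, i + d = n - 1 →
      w.getD i 0 = (i + w.getD (n - 1) 0) - (n - 1) := by
    intro d
    induction d with
    | zero =>
      intro i hi
      rw [show i = n - 1 by omega]
      omega
    | succ d ih =>
      intro i hi
      by_cases hc : w.getD i 0 < w.getD (i + 1) 0
      · have h1 := hstep i (by omega)
        have h2 := persist d i (by omega) hc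
        rw [show i + 1 + d = n - 1 by omega] at h2
        omega
      · by_cases hz : w.getD i 0 = 0
        · have h2 := ih (i + 1) (by omega)
          have h3 : w.getD (i + 1) 0 = 0 := by omega
          rw [h3] at h2
          omega
        · obtain ⟨k, hk1, hk2⟩ := hasAsc i (by omega) (by omega)
          have p1 := persist (i - (k + 1)) k (by omega) hk2
          have p2 := persist (i - k) k (by omega) hk2
          rw [show k + 1 + (i - (k + 1)) = i by omega] at p1
          rw [show k + 1 + (i - k) = i + 1 by omega] at p2
          omega
  refine ⟨(n - 1) - w.getD (n - 1) 0, by omega, ?_⟩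
  have hwn : w.getD (n - 1) 0 ≤ n - 1 := wle (n - 1) (by omega)
  apply List.ext_getElem (by rw [hlen, cwd_length])
  intro i hi1 hi2
  rw [hlen] at hi1
  have g1 : w[i] = w.getD i 0 := (List.getD_eq_getElem w 0 _).symm
  have g2 : (cwd n ((n - 1) - w.getD (n - 1) 0))[i]
      = i - ((n - 1) - w.getD (n - 1) 0) := by
    rw [← List.getD_eq_getElem _ 0, cwd_getD n _ i hi1]
  rw [g1, g2, hmain (n - 1 - i) i (by omega)]
  omega

theorem stmt_13 (n : ℕ) (hn : 1 ≤ n) :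
    CW n (· < ·) (· ≥ ·) = CW n (· ≠ ·) (· ≥ ·) ∧
    (CW n (· ≠ ·) (· ≥ ·)).ncard = n := by
  have hsub1 : CW n (· ≠ ·) (· ≥ ·) ⊆ CW n (· < ·) (· ≥ ·) := by
    rintro w ⟨hl, hc, ha⟩
    exact ⟨hl, hc, fun i hi ⟨h1, h2⟩ => ha i hi ⟨Nat.ne_of_lt h1, h2⟩⟩
  have hset : CW n (· ≠ ·) (· ≥ ·) = ↑((Finset.range n).image (cwd n)) := by
    ext w
    simp only [Finset.coe_image, Finset.coe_range, Set.mem_image, Set.mem_Iio]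
    constructor
    · intro hw
      obtain ⟨j, hj, hwj⟩ := cw_lt_struct n hn w (hsub1 hw)
      exact ⟨j, hj, hwj.symm⟩
    · rintro ⟨j, hj, rfl⟩
      exact cwd_mem n j hn
  have hinj : Set.InjOn (cwd n) ↑(Finset.range n) := by
    intro a ha b hb hab
    simp only [Finset.coe_range, Set.mem_Iio] at ha hb
    have h : (cwd n a).getD (n - 1) 0 = (cwd n b).getD (n - 1) 0 := by rw [hab]
    rw [cwd_getD n a (n - 1) (by omega), cwd_getD n b (n - 1) (by omega)] at h
    omega
  constructor
  · apply Set.Subset.antisymm _ hsub1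
    intro w hw
    obtain ⟨j, hj, rfl⟩ := cw_lt_struct n hn w hw
    exact cwd_mem n j hn
  · rw [hset, Set.ncard_coe_finset, Finset.card_image_of_injOn hinj, Finset.card_range]
end

section
/- For every n ≥ 1, the number of Catalan words of length n avoiding the pattern pair (=, ≠) equals ∑_{j=0}^{n−1} m_j, the partial sum of Motzkin numbers. -/
/-- Motzkin numbers via the binomial-Catalan formula. -/
def motzkin (n : ℕ) : ℕ :=
  ∑ k ∈ Finset.range (n / 2 + 1), n.choose (2 * k) * catalan k

/-! A Catalan word avoiding `(=, ≠)` either has no two equal adjacent letters (it is *strict*) or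
its first plateau propagates to the end. So for `n ≥ 1` the non-strict such words of length `n + 1`
are the words of length `n` with their last letter repeated, and the count is the sum of the
numbers of strict Catalan words of lengths `1, …, n`. A strict Catalan word of length `m + 2`
splits at its first return to `0` as `0 (u + 1) x` with `u` nonempty and `x` strict; this gives
the Motzkin recurrence, which the binomial formula defining `motzkin` also satisfies by an upper
Vandermonde identity. -/

open Finset

theorem Nat.sum_antidiagonal_choose_mul_choose (a b m : ℕ) :
    ∑ p ∈ antidiagonal m, p.1.choose a * p.2.choose b = (m + 1).choose (a + b + 1) := by
  induction m generalizing b with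
  | zero =>
    rcases a with _ | _ <;> rcases b with _ | _ <;> simp [Nat.choose_succ_succ, ← add_assoc]
  | succ m ih =>
    rw [Nat.sum_antidiagonal_succ']
    cases b with
    | zero =>
      simpa [Nat.choose_succ_succ (m + 1) a] using ih 0
    | succ b =>
      have hpascal : ∀ p ∈ antidiagonal m, p.1.choose a * (p.2 + 1).choose (b + 1)
          = p.1.choose a * p.2.choose b + p.1.choose a * p.2.choose (b + 1) :=
        fun p _ => by rw [Nat.choose_succ_succ, mul_add]
      rw [sum_congr rfl hpascal, sum_add_distrib, ih, ih, Nat.choose_zero_succ, mul_zero, zero_add]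
      exact (Nat.choose_succ_succ (m + 1) (a + b + 1)).symm

lemma motzkin_eq_sum_range {n N : ℕ} (h : n / 2 < N) :
    motzkin n = ∑ k ∈ range N, n.choose (2 * k) * catalan k := by
  refine sum_subset (range_subset_range.2 h) fun k _ hk => ?_
  rw [mem_range, not_lt] at hk
  rw [Nat.choose_eq_zero_of_lt (by omega), zero_mul]

lemma sum_antidiagonal_motzkin_mul_motzkin (m : ℕ) :
    ∑ p ∈ antidiagonal m, motzkin p.1 * motzkin p.2
      = ∑ j ∈ range (m + 1), (m + 1).choose (2 * j + 1) * catalan (j + 1) := by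
  calc ∑ p ∈ antidiagonal m, motzkin p.1 * motzkin p.2
      = ∑ p ∈ antidiagonal m, ∑ a ∈ range (m + 1), ∑ b ∈ range (m + 1),
          p.1.choose (2 * a) * catalan a * (p.2.choose (2 * b) * catalan b) := by
        refine sum_congr rfl fun p hp => ?_
        have hsum := HasAntidiagonal.mem_antidiagonal.1 hp
        rw [motzkin_eq_sum_range (N := m + 1) (by omega),
          motzkin_eq_sum_range (N := m + 1) (by omega), sum_mul_sum]
    _ = ∑ a ∈ range (m + 1), ∑ b ∈ range (m + 1), catalan a * catalan b *
          ∑ p ∈ antidiagonal m, p.1.choose (2 * a) * p.2.choose (2 * b) := by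
        rw [sum_comm]
        refine sum_congr rfl fun a _ => ?_
        rw [sum_comm]
        refine sum_congr rfl fun b _ => ?_
        rw [mul_sum]
        exact sum_congr rfl fun _ _ => by ring
    _ = ∑ a ∈ range (m + 1), ∑ b ∈ range (m + 1),
          catalan a * catalan b * (m + 1).choose (2 * (a + b) + 1) := by
        simp only [Nat.sum_antidiagonal_choose_mul_choose, mul_add]
    _ = ∑ a ∈ range (m + 1), ∑ b ∈ range (m + 1 - a),
          catalan a * catalan b * (m + 1).choose (2 * (a + b) + 1) := by
        refine sum_congr rfl fun a _ => (sum_subset (range_subset_range.2 (Nat.sub_le (m + 1) a))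
          fun b _ hb => ?_).symm
        rw [mem_range, not_lt] at hb
        rw [Nat.choose_eq_zero_of_lt (by omega), mul_zero]
    _ = ∑ j ∈ range (m + 1), (m + 1).choose (2 * j + 1) * catalan (j + 1) := by
        rw [← sum_range_diag_flip]
        refine sum_congr rfl fun j _ => ?_
        rw [catalan_succ',
          Nat.sum_antidiagonal_eq_sum_range_succ (fun a b => catalan a * catalan b), mul_sum]
        refine sum_congr rfl fun a ha => ?_
        rw [mem_range] at ha
        rw [Nat.add_sub_cancel' (by omega)]
        ring

theorem motzkin_succ_succ (m : ℕ) :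
    motzkin (m + 2) = motzkin (m + 1) + ∑ p ∈ antidiagonal m, motzkin p.1 * motzkin p.2 := by
  rw [sum_antidiagonal_motzkin_mul_motzkin, motzkin_eq_sum_range (N := m + 2) (by omega),
    motzkin_eq_sum_range (N := m + 2) (by omega),
    sum_range_succ' (fun j => (m + 2).choose (2 * j) * catalan j),
    sum_range_succ' (fun j => (m + 1).choose (2 * j) * catalan j)]
  have hpascal (j : ℕ) : (m + 2).choose (2 * (j + 1))
      = (m + 1).choose (2 * j + 1) + (m + 1).choose (2 * (j + 1)) :=
    Nat.choose_succ_succ (m + 1) (2 * j + 1)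
  simp only [hpascal, add_mul, sum_add_distrib, mul_zero, Nat.choose_zero_right]
  ring

theorem List.isChain_iff_getD {α : Type*} {R : α → α → Prop} {l : List α} (d : α) :
    l.IsChain R ↔ ∀ i, i + 1 < l.length → R (l.getD i d) (l.getD (i + 1) d) := by
  rw [List.isChain_iff_getElem]
  refine forall_congr' fun i => forall_congr' fun hi => ?_
  rw [List.getD_eq_getElem _ _ (by omega), List.getD_eq_getElem _ _ hi]

theorem List.getD_take_of_lt {α : Type*} {w : List α} {k i : ℕ} (d : α) (h : i < k) :
    (w.take k).getD i d = w.getD i d := by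
  simp [List.getD_eq_getElem?_getD, h]

theorem List.getD_append_getD {α : Type*} {v : List α} {n i : ℕ} {d : α}
    (hv : v.length = n + 1) (hi : i < n + 2) :
    (v ++ [v.getD n d]).getD i d = v.getD (min i n) d := by
  rcases Nat.lt_or_ge i (n + 1) with h | h
  · rw [List.getD_append _ _ _ _ (by omega), min_eq_left (by omega)]
  · rw [List.getD_append_right _ _ _ _ (by omega), min_eq_right (by omega),
      show i - v.length = 0 by omega]
    rfl

def StrictStep (a b : ℕ) : Prop := b ≤ a + 1 ∧ b ≠ a

lemma strictStep_succ_succ {a b : ℕ} : StrictStep (a + 1) (b + 1) ↔ StrictStep a b := by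
  simp only [StrictStep]
  omega

def IsStrictCatalanWord (w : List ℕ) : Prop := (∀ a ∈ w.head?, a = 0) ∧ w.IsChain StrictStep

lemma isStrictCatalanWord_iff {w : List ℕ} : IsStrictCatalanWord w ↔
    IsCatalanWord w ∧ ∀ i, i + 1 < w.length → w.getD (i + 1) 0 ≠ w.getD i 0 := by
  rw [IsStrictCatalanWord, IsCatalanWord, List.isChain_iff_getD 0]
  simp only [StrictStep, forall_and, and_assoc]
  refine and_congr ?_ Iff.rfl
  cases w <;> simp

lemma IsCatalanWord.getD_le {w : List ℕ} (hw : IsCatalanWord w) :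
    ∀ i < w.length, w.getD i 0 ≤ i
  | 0, h => (hw.1 h).le
  | i + 1, h => (hw.2 i h).trans (Nat.succ_le_succ (hw.getD_le i (by omega)))

lemma finite_setOf_isCatalanWord (n : ℕ) : {w | w.length = n ∧ IsCatalanWord w}.Finite := by
  refine ((List.finite_length_eq (Fin n) n).image (List.map Fin.val)).subset ?_
  rintro w ⟨hlen, hw⟩
  have hlt : ∀ a ∈ w, a < n := fun a ha => by
    obtain ⟨i, hi, rfl⟩ := List.getElem_of_mem ha
    have := hw.getD_le i hi
    rw [List.getD_eq_getElem _ _ hi] at this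
    omega
  exact ⟨w.pmap Fin.mk hlt, by simp [hlen], by simp [List.map_pmap]⟩

def strictCatalanWords (n : ℕ) : Set (List ℕ) := {w | w.length = n ∧ IsStrictCatalanWord w}

lemma strictCatalanWords_finite (n : ℕ) : (strictCatalanWords n).Finite :=
  (finite_setOf_isCatalanWord n).subset fun _ ⟨hlen, hw⟩ =>
    ⟨hlen, (isStrictCatalanWord_iff.1 hw).1⟩

lemma strictCatalanWords_zero : strictCatalanWords 0 = {[]} := by
  ext w
  constructor
  · exact fun h => List.length_eq_zero_iff.1 h.1
  · rintro rfl
    exact ⟨rfl, by simp, List.isChain_nil⟩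

lemma strictCatalanWords_one : strictCatalanWords 1 = {[0]} := by
  ext w
  constructor
  · rintro ⟨hlen, h0, -⟩
    obtain ⟨a, rfl⟩ := List.length_eq_one_iff.1 hlen
    simpa using h0
  · rintro rfl
    exact ⟨rfl, by simp, List.isChain_singleton 0⟩

def firstReturnJoin (p : List ℕ × List ℕ) : List ℕ := 0 :: (p.1.map (· + 1) ++ p.2)

def firstReturnSplit (w : List ℕ) : List ℕ × List ℕ :=
  ((w.tail.takeWhile (· != 0)).map (· - 1), w.tail.dropWhile (· != 0))

lemma firstReturnSplit_join {p : List ℕ × List ℕ} (hx : ∀ a ∈ p.2.head?, a = 0) :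
    firstReturnSplit (firstReturnJoin p) = p := by
  obtain ⟨u, x⟩ := p
  have hu : ∀ a ∈ u.map (· + 1), (a != 0) = true := by simp
  have hx' : x.takeWhile (· != 0) = [] ∧ x.dropWhile (· != 0) = x := by
    cases x with
    | nil => simp
    | cons c x => simp [show c = 0 from hx c rfl]
  simp only [firstReturnSplit, firstReturnJoin, List.tail_cons, List.takeWhile_append_of_pos hu,
    List.dropWhile_append_of_pos hu, hx', List.append_nil, List.map_map]
  simp [Function.comp_def]

lemma map_sub_one_map_add_one {l : List ℕ} (h : ∀ a ∈ l, a ≠ 0) :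
    (l.map (· - 1)).map (· + 1) = l := by
  rw [List.map_map]
  conv_rhs => rw [← List.map_id l]
  exact List.map_congr_left fun a ha => by have := h a ha; simp; omega

lemma firstReturnJoin_split {w : List ℕ} (hw : w.head? = some 0) :
    firstReturnJoin (firstReturnSplit w) = w := by
  obtain ⟨t, rfl⟩ : ∃ t, w = 0 :: t := by
    cases w <;> simp_all
  have hne : ∀ a ∈ t.takeWhile (· != 0), a ≠ 0 := fun a ha => by
    simpa using List.mem_takeWhile_imp ha
  simp [firstReturnJoin, firstReturnSplit, map_sub_one_map_add_one hne]

lemma isStrictCatalanWord_firstReturnJoin {u x : List ℕ} (hu : IsStrictCatalanWord u)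
    (hu₀ : u ≠ []) (hx : IsStrictCatalanWord x) : IsStrictCatalanWord (firstReturnJoin (u, x)) := by
  obtain ⟨a, u, rfl⟩ := List.exists_cons_of_ne_nil hu₀
  obtain ⟨ha, hu⟩ := hu
  obtain rfl : a = 0 := ha a rfl
  refine ⟨by simp [firstReturnJoin],
    List.isChain_cons.2 ⟨?_, List.isChain_append.2 ⟨?_, hx.2, ?_⟩⟩⟩
  · simp [StrictStep]
  · exact (List.isChain_map _).2 (hu.imp fun _ _ => strictStep_succ_succ.2)
  · intro a ha b hb
    rw [List.getLast?_map, Option.mem_map] at ha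
    obtain ⟨c, -, rfl⟩ := ha
    simp [hx.1 b hb, StrictStep]

lemma isStrictCatalanWord_firstReturnSplit {w : List ℕ} (hw : IsStrictCatalanWord w)
    (hlen : 2 ≤ w.length) :
    IsStrictCatalanWord (firstReturnSplit w).1 ∧ (firstReturnSplit w).1 ≠ [] ∧
      IsStrictCatalanWord (firstReturnSplit w).2 := by
  obtain ⟨a, b, t, rfl⟩ : ∃ a b t, w = a :: b :: t := by
    rcases w with _ | ⟨a, _ | ⟨b, t⟩⟩ <;> simp_all
  obtain ⟨ha, hchain⟩ := hw
  obtain rfl : a = 0 := ha a rfl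
  obtain ⟨⟨hb₁, hb₀⟩, hchain⟩ := List.isChain_cons_cons.1 hchain
  obtain rfl : b = 1 := by omega
  refine ⟨⟨by simp [firstReturnSplit], ?_⟩, by simp [firstReturnSplit], ?_, ?_⟩
  · refine (List.isChain_map _).2 ((hchain.prefix (List.takeWhile_prefix _)).imp_of_mem_imp ?_)
    intro c d hc hd h
    have hc := List.mem_takeWhile_imp hc
    have hd := List.mem_takeWhile_imp hd
    simp only [bne_iff_ne, ne_eq] at hc hd
    simp only [StrictStep] at h ⊢
    omega
  · intro c hc
    have := List.head?_dropWhile_not (· != 0) (1 :: t)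
    simp only [firstReturnSplit, List.tail_cons] at hc
    rw [hc] at this
    simpa using this
  · exact hchain.infix (List.dropWhile_suffix _).isInfix

lemma strictCatalanWords_add_two (n : ℕ) :
    strictCatalanWords (n + 2) = firstReturnJoin ''
      ⋃ p ∈ antidiagonal n, strictCatalanWords (p.1 + 1) ×ˢ strictCatalanWords p.2 := by
  ext w
  constructor
  · rintro ⟨hlen, hw⟩
    obtain ⟨hu, hu₀, hx⟩ := isStrictCatalanWord_firstReturnSplit hw (by omega)
    have hhead : w.head? = some 0 := by
      obtain ⟨a, t, rfl⟩ := List.exists_cons_of_length_pos (show 0 < w.length by omega)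
      simp [hw.1 a rfl]
    have hjoin := firstReturnJoin_split hhead
    have hlen' : (firstReturnSplit w).1.length + (firstReturnSplit w).2.length + 1 = n + 2 := by
      rw [← hlen]
      conv_rhs => rw [← hjoin]
      simp [firstReturnJoin]
    have hu_len := List.length_pos_iff.2 hu₀
    refine ⟨firstReturnSplit w, Set.mem_iUnion₂.2 ⟨((firstReturnSplit w).1.length - 1,
      (firstReturnSplit w).2.length), HasAntidiagonal.mem_antidiagonal.2 (by simp; omega),
      ⟨?_, hu⟩, rfl, hx⟩, hjoin⟩
    simp only
    omega
  · rintro ⟨⟨u, x⟩, hp, rfl⟩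
    obtain ⟨⟨i, j⟩, hij, ⟨hu_len, hu⟩, hx_len, hx⟩ := Set.mem_iUnion₂.1 hp
    rw [HasAntidiagonal.mem_antidiagonal] at hij
    refine ⟨?_, isStrictCatalanWord_firstReturnJoin hu ?_ hx⟩
    · simp only [firstReturnJoin, List.length_cons, List.length_append, List.length_map]
      simp only at hu_len hx_len hij
      omega
    · rw [← List.length_pos_iff]
      simp only at hu_len
      omega

lemma firstReturnJoin_injOn : Set.InjOn firstReturnJoin {p | ∀ a ∈ p.2.head?, a = 0} :=
  Set.LeftInvOn.injOn fun _ hp => firstReturnSplit_join hp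

lemma ncard_strictCatalanWords_add_two (n : ℕ) :
    (strictCatalanWords (n + 2)).ncard = ∑ p ∈ antidiagonal n,
      (strictCatalanWords (p.1 + 1)).ncard * (strictCatalanWords p.2).ncard := by
  have hinj : Set.InjOn firstReturnJoin
      (⋃ p ∈ antidiagonal n, strictCatalanWords (p.1 + 1) ×ˢ strictCatalanWords p.2) :=
    firstReturnJoin_injOn.mono fun w hw => by
      obtain ⟨p, -, -, -, hx⟩ := Set.mem_iUnion₂.1 hw
      exact hx.1
  have hdisj : (antidiagonal n : Set (ℕ × ℕ)).PairwiseDisjoint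
      fun p => strictCatalanWords (p.1 + 1) ×ˢ strictCatalanWords p.2 := by
    intro p _ q _ hpq
    refine Set.disjoint_left.2 fun w hp hq => hpq (Prod.ext ?_ (hp.2.1.symm.trans hq.2.1))
    have := hp.1.1
    have := hq.1.1
    omega
  rw [strictCatalanWords_add_two, hinj.ncard_image, ← Finset.set_biUnion_coe,
    (antidiagonal n).finite_toSet.ncard_biUnion
      (fun p _ => (strictCatalanWords_finite _).prod (strictCatalanWords_finite _)) hdisj,
    finsum_mem_coe_finset]
  simp_rw [Set.ncard_prod]

lemma ncard_strictCatalanWords (m : ℕ) : (strictCatalanWords (m + 1)).ncard = motzkin m := by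
  induction m using Nat.strong_induction_on with
  | _ m ih =>
    match m with
    | 0 => simp [strictCatalanWords_one, motzkin]
    | 1 =>
      simp [ncard_strictCatalanWords_add_two 0, strictCatalanWords_one, strictCatalanWords_zero,
        motzkin]
    | m + 2 =>
      rw [ncard_strictCatalanWords_add_two (m + 1), Nat.sum_antidiagonal_succ', motzkin_succ_succ,
        strictCatalanWords_zero, Set.ncard_singleton, mul_one, ih (m + 1) (by omega)]
      refine congrArg _ (sum_congr rfl fun p hp => ?_)
      have hsum := HasAntidiagonal.mem_antidiagonal.1 hp
      rw [ih p.1 (by omega), ih p.2 (by omega)]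

lemma IsCatalanWord.take {w : List ℕ} (hw : IsCatalanWord w) (k : ℕ) :
    IsCatalanWord (w.take k) := by
  refine ⟨fun h => ?_, fun i hi => ?_⟩
  · simp only [List.length_take] at h
    rw [List.getD_take_of_lt 0 (by omega)]
    exact hw.1 (by omega)
  · simp only [List.length_take] at hi
    rw [List.getD_take_of_lt 0 (by omega), List.getD_take_of_lt 0 (by omega)]
    exact hw.2 i (by omega)

lemma AvoidsPair.take {X Y : ℕ → ℕ → Prop} {w : List ℕ} (hw : AvoidsPair X Y w) (k : ℕ) :
    AvoidsPair X Y (w.take k) := by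
  intro i hi
  simp only [List.length_take] at hi
  rw [List.getD_take_of_lt 0 (by omega), List.getD_take_of_lt 0 (by omega),
    List.getD_take_of_lt 0 (by omega)]
  exact hw i (by omega)

lemma AvoidsPair.getD_eq_succ_of_le {w : List ℕ} (hw : AvoidsPair (· = ·) (· ≠ ·) w) {i j : ℕ}
    (hij : i ≤ j) (hj : j + 1 < w.length) (hi : w.getD i 0 = w.getD (i + 1) 0) :
    w.getD j 0 = w.getD (j + 1) 0 := by
  induction j, hij using Nat.le_induction with
  | base => exact hi
  | succ j _ ih => exact not_not.1 fun h => hw j hj ⟨ih (by omega), h⟩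

lemma CW_one (X Y : ℕ → ℕ → Prop) : CW 1 X Y = strictCatalanWords 1 := by
  ext w
  constructor
  · rintro ⟨hlen, hcat, -⟩
    exact ⟨hlen, isStrictCatalanWord_iff.2 ⟨hcat, fun i hi => by omega⟩⟩
  · rintro ⟨hlen, hw⟩
    exact ⟨hlen, (isStrictCatalanWord_iff.1 hw).1, fun i hi => by omega⟩

lemma strictCatalanWords_subset_CW (n : ℕ) : strictCatalanWords n ⊆ CW n (· = ·) (· ≠ ·) := by
  rintro w ⟨hlen, hw⟩
  obtain ⟨hcat, hstrict⟩ := isStrictCatalanWord_iff.1 hw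
  exact ⟨hlen, hcat, fun i hi h => hstrict i (by omega) h.1.symm⟩

lemma append_getD_mem_CW {n : ℕ} {v : List ℕ} (hv : v ∈ CW (n + 1) (· = ·) (· ≠ ·)) :
    v ++ [v.getD n 0] ∈ CW (n + 2) (· = ·) (· ≠ ·) := by
  obtain ⟨hlen, hcat, hav⟩ := hv
  have hget := fun i => List.getD_append_getD (i := i) (d := 0) hlen
  refine ⟨by simp [hlen], ⟨fun _ => ?_, fun i hi => ?_⟩, fun i hi h => ?_⟩
  · rw [hget 0 (by omega)]
    exact hcat.1 (by omega)
  · simp only [List.length_append, List.length_singleton, hlen] at hi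
    rw [hget i (by omega), hget (i + 1) (by omega)]
    rcases Nat.lt_or_ge i n with h | h
    · rw [min_eq_left h.le, min_eq_left h]
      exact hcat.2 i (by omega)
    · rw [min_eq_right h, min_eq_right (by omega)]
      omega
  · simp only [List.length_append, List.length_singleton, hlen] at hi
    rw [hget i (by omega), hget (i + 1) (by omega), hget (i + 2) (by omega)] at h
    rcases Nat.lt_or_ge (i + 2) (n + 1) with h' | h'
    · rw [min_eq_left (by omega), min_eq_left (by omega), min_eq_left (by omega)] at h
      exact hav i (by omega) h
    · rw [min_eq_right (show n ≤ i + 1 by omega), min_eq_right (show n ≤ i + 2 by omega)] at h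
      exact h.2 rfl

lemma CW_add_two (n : ℕ) : CW (n + 2) (· = ·) (· ≠ ·) =
    strictCatalanWords (n + 2) ∪ (fun w => w ++ [w.getD n 0]) '' CW (n + 1) (· = ·) (· ≠ ·) := by
  refine subset_antisymm ?_ (Set.union_subset (strictCatalanWords_subset_CW _)
    (Set.image_subset_iff.2 fun v hv => append_getD_mem_CW hv))
  rintro w ⟨hlen, hcat, hav⟩
  by_cases hstrict : ∀ i, i + 1 < w.length → w.getD (i + 1) 0 ≠ w.getD i 0
  · exact Or.inl ⟨hlen, isStrictCatalanWord_iff.2 ⟨hcat, hstrict⟩⟩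
  obtain ⟨i, hi, heq⟩ : ∃ i, i + 1 < w.length ∧ w.getD (i + 1) 0 = w.getD i 0 := by
    simpa using hstrict
  have hlast := hav.getD_eq_succ_of_le (j := n) (by omega) (by omega) heq.symm
  have hsplit : w = w.take (n + 1) ++ [w.getD (n + 1) 0] := by
    conv_lhs => rw [← List.take_append_drop (n + 1) w]
    rw [List.drop_eq_getElem_cons (by omega), List.drop_eq_nil_of_le (by omega),
      List.getD_eq_getElem]
  refine Or.inr ⟨w.take (n + 1), ⟨by simp; omega, hcat.take _, hav.take _⟩, ?_⟩
  dsimp only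
  rw [List.getD_take_of_lt 0 (by omega), hlast, ← hsplit]

lemma ncard_CW_add_two (n : ℕ) : (CW (n + 2) (· = ·) (· ≠ ·)).ncard =
    (strictCatalanWords (n + 2)).ncard + (CW (n + 1) (· = ·) (· ≠ ·)).ncard := by
  have hdisj : Disjoint (strictCatalanWords (n + 2))
      ((fun w => w ++ [w.getD n 0]) '' CW (n + 1) (· = ·) (· ≠ ·)) := by
    refine Set.disjoint_left.2 ?_
    rintro w hw ⟨v, ⟨hlen, -⟩, rfl⟩
    have := (isStrictCatalanWord_iff.1 hw.2).2 n (by rw [hw.1]; omega)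
    rw [List.getD_append_getD hlen (by omega), List.getD_append_getD hlen (by omega)] at this
    simp at this
  have hinj : Set.InjOn (fun w => w ++ [w.getD n 0]) (CW (n + 1) (· = ·) (· ≠ ·)) :=
    fun _ _ _ _ h => List.append_inj_left' h rfl
  have hfin : (CW (n + 1) (· = ·) (· ≠ ·)).Finite :=
    (finite_setOf_isCatalanWord (n + 1)).subset fun w hw => ⟨hw.1, hw.2.1⟩
  rw [CW_add_two, Set.ncard_union_eq hdisj (strictCatalanWords_finite _) (hfin.image _),
    hinj.ncard_image]

lemma ncard_CW_eq_ne (m : ℕ) :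
    (CW (m + 1) (· = ·) (· ≠ ·)).ncard = ∑ j ∈ range (m + 1), motzkin j := by
  induction m with
  | zero => simp [CW_one, ncard_strictCatalanWords 0]
  | succ m ih =>
    rw [ncard_CW_add_two, ih, ncard_strictCatalanWords, sum_range_succ _ (m + 1), add_comm]

theorem stmt_14 (n : ℕ) (hn : 1 ≤ n) :
    (CW n (· = ·) (· ≠ ·)).ncard = ∑ j ∈ Finset.range n, motzkin j := by
  obtain ⟨m, rfl⟩ := Nat.exists_eq_add_of_le' hn
  exact ncard_CW_eq_ne m
end

section
/- For every n ≥ 0, the number of Catalan words of length n avoiding the pattern pair (=, ≠) equals the number of Catalan words of length n avoiding (≠, =), and there is a bijection between the two sets preserving the number of descents. -/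
namespace Stmt15

/-! ### auxiliary definitions -/

def strip (a : ℕ) : List ℕ → List ℕ
  | [] => []
  | b :: t => if b = a then strip a t else b :: t

def fmapAux (n : ℕ) : List ℕ → List ℕ
  | [] => []
  | c :: t => List.replicate (n - ((c :: strip c t).reverse).length) 0 ++ (c :: strip c t).reverse

def fmap (w : List ℕ) : List ℕ := fmapAux w.length w.reverse

def gmap : List ℕ → List ℕ
  | [] => []
  | a :: t =>
      (a :: strip a t) ++
        List.replicate ((a :: t).length - (a :: strip a t).length) ((strip a t).getLastD a)

def Av (X Y : ℕ → ℕ → Prop) : List ℕ → Prop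
  | a :: b :: c :: t => ¬(X a b ∧ Y b c) ∧ Av X Y (b :: c :: t)
  | _ => True

def dcount : List ℕ → ℕ
  | a :: b :: t => (if b < a then 1 else 0) + dcount (b :: t)
  | _ => 0

theorem chain'_eq {R : ℕ → ℕ → Prop} {l : List ℕ} : List.Chain' R l = List.IsChain R l := rfl

/-! ### translation lemmas -/

theorem avoid_cons {X Y : ℕ → ℕ → Prop} {a : ℕ} {l : List ℕ} :
    AvoidsPair X Y (a :: l) ↔
      ((∀ b c t, l = b :: c :: t → ¬(X a b ∧ Y b c)) ∧ AvoidsPair X Y l) := by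
  constructor
  · intro h
    refine ⟨?_, ?_⟩
    · rintro b c t rfl
      have := h 0 (by simp)
      simpa using this
    · intro i hi
      have := h (i + 1) (by simp; omega)
      simpa [List.getD_cons_succ] using this
  · rintro ⟨h0, h1⟩ i hi
    cases i with
    | zero =>
        match l, hi with
        | b :: c :: t, _ => simpa using h0 b c t rfl
    | succ i =>
        have := h1 i (by simp at hi ⊢; omega)
        simpa [List.getD_cons_succ] using this

theorem av_iff (X Y : ℕ → ℕ → Prop) : ∀ w, AvoidsPair X Y w ↔ Av X Y w
  | [] => by
      constructor
      · intro _; trivial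
      · intro _ i hi; simp at hi
  | [a] => by
      constructor
      · intro _; trivial
      · intro _ i hi; simp at hi
  | [a, b] => by
      constructor
      · intro _; trivial
      · intro _ i hi; simp at hi
  | a :: b :: c :: t => by
      rw [avoid_cons, av_iff X Y (b :: c :: t)]
      constructor
      · rintro ⟨h0, h1⟩; exact ⟨h0 b c t rfl, h1⟩
      · rintro ⟨h0, h1⟩
        refine ⟨?_, h1⟩
        rintro b' c' t' h
        cases h
        exact h0

theorem cat_iff (w : List ℕ) :
    IsCatalanWord w ↔ ((∀ x ∈ w.head?, x = 0) ∧ List.Chain' (fun a b => b ≤ a + 1) w) := by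
  unfold IsCatalanWord
  constructor
  · rintro ⟨h0, h1⟩
    refine ⟨?_, ?_⟩
    · intro x hx
      cases w with
      | nil => simp at hx
      | cons a t =>
          simp at hx
          subst hx
          simpa using h0 (by simp)
    · rw [chain'_eq, List.isChain_iff_getElem]
      intro i hi
      have hi1 : i + 1 < w.length := by omega
      have := h1 i hi1
      rwa [List.getD_eq_getElem _ _ (by omega : i < w.length), List.getD_eq_getElem _ _ hi1] at this
  · rintro ⟨h0, h1⟩
    refine ⟨?_, ?_⟩
    · intro hw
      cases w with
      | nil => simp at hw
      | cons a t => simpa using h0 a (by simp)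
    · intro i hi
      rw [chain'_eq, List.isChain_iff_getElem] at h1
      have := h1 i (by omega)
      rwa [List.getD_eq_getElem _ _ (by omega : i < w.length), List.getD_eq_getElem _ _ hi]

theorem descents_eq : ∀ w, descents w = dcount w
  | [] => by simp [descents, dcount]
  | [a] => by simp [descents, dcount]
  | a :: b :: t => by
      have ih := descents_eq (b :: t)
      unfold descents at ih ⊢
      rw [Finset.card_filter] at ih ⊢
      simp only [List.length_cons] at ih ⊢
      rw [show t.length + 1 + 1 - 1 = t.length + 1 from rfl]
      rw [show t.length + 1 - 1 = t.length from rfl] at ih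
      rw [Finset.sum_range_succ']
      simp only [List.getD_cons_succ, List.getD_cons_zero]
      simp only [List.getD_cons_succ, List.getD_cons_zero] at ih
      rw [ih]
      show dcount (b :: t) + (if b < a then 1 else 0) = dcount (a :: b :: t)
      rw [show dcount (a :: b :: t) = (if b < a then 1 else 0) + dcount (b :: t) from rfl]
      omega

/-! ### small list facts -/

theorem head?_replicate_append {c : ℕ} (k : ℕ) (v : List ℕ)
    (h : ∀ x ∈ v.head?, x = c) : ∀ x ∈ (List.replicate k c ++ v).head?, x = c := by
  cases k with
  | zero => simpa using h
  | succ k => simp [List.replicate_succ]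

theorem replicate_eq_cons {j c b : ℕ} {l : List ℕ} (h : List.replicate j c = b :: l) :
    b = c := by
  cases j with
  | zero => simp at h
  | succ j => simp [List.replicate_succ] at h; exact h.1.symm

theorem chain'_replicate {R : ℕ → ℕ → Prop} {c : ℕ} (h : R c c) :
    ∀ j, List.Chain' R (List.replicate j c)
  | 0 => by simp [chain'_eq, List.isChain_nil]
  | 1 => by simp [chain'_eq, List.isChain_singleton]
  | (j+2) => by
      rw [show List.replicate (j+2) c = c :: List.replicate (j+1) c from rfl]
      rw [chain'_eq, List.isChain_cons]
      refine ⟨?_, chain'_replicate h (j+1)⟩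
      intro y hy
      rw [show List.replicate (j+1) c = c :: List.replicate j c from rfl] at hy
      simp at hy
      subst hy; exact h

theorem getLast?_replicate_eq {c : ℕ} (k : ℕ) : ∀ x ∈ (List.replicate k c).getLast?, x = c := by
  intro x hx
  rw [List.getLast?_replicate] at hx
  by_cases hk : k = 0 <;> simp [hk] at hx
  exact hx.symm

theorem chain'_and {R S : ℕ → ℕ → Prop} : ∀ {l : List ℕ}, List.Chain' R l → List.Chain' S l →
    List.Chain' (fun a b => R a b ∧ S a b) l
  | [], _, _ => by simp [chain'_eq, List.isChain_nil]
  | a :: t, h1, h2 => by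
      rw [chain'_eq, List.isChain_cons] at h1 h2 ⊢
      exact ⟨fun y hy => ⟨h1.1 y hy, h2.1 y hy⟩, chain'_and h1.2 h2.2⟩

/-! ### Av structural lemmas -/

theorem av_tail {X Y : ℕ → ℕ → Prop} {a : ℕ} : ∀ {l : List ℕ}, Av X Y (a :: l) → Av X Y l
  | [], _ => trivial
  | [_], _ => trivial
  | _ :: _ :: _, h => h.2

theorem av_cons {X Y : ℕ → ℕ → Prop} {a : ℕ} {l : List ℕ}
    (h : ∀ b c t, l = b :: c :: t → ¬(X a b ∧ Y b c)) (h2 : Av X Y l) : Av X Y (a :: l) := by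
  match l with
  | [] => trivial
  | [_] => trivial
  | b :: c :: t => exact ⟨h b c t rfl, h2⟩

theorem av_rep (c : ℕ) : ∀ j, Av (· = ·) (· ≠ ·) (List.replicate j c)
  | 0 => trivial
  | 1 => trivial
  | 2 => trivial
  | (j+3) => by
      show Av _ _ (c :: c :: c :: List.replicate j c)
      exact ⟨by simp, av_rep c (j+2)⟩

theorem av_mix1 (j c : ℕ) : ∀ (v : List ℕ), List.Chain' (· ≠ ·) v →
    (∀ x ∈ v.getLast?, x = c) → Av (· = ·) (· ≠ ·) (v ++ List.replicate j c)
  | [], _, _ => av_rep c j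
  | a :: v', hch, hl => by
      rw [chain'_eq, List.isChain_cons] at hch
      apply av_cons
      · rintro b c' t ht ⟨hab, hbc⟩
        cases v' with
        | nil =>
            have hac : a = c := by simpa using hl
            have hb : b = c := replicate_eq_cons ht
            have hc' : c' = c := by
              cases j with
              | zero => simp at ht
              | succ j =>
                  rw [List.replicate_succ] at ht
                  simp at ht
                  exact replicate_eq_cons ht.2
            exact hbc (by rw [hb, hc'])
        | cons b' t' =>
            have : b' = b := (List.cons_eq_cons.mp ht).1
            exact (hch.1 b (by simp [← this])) hab
      · apply av_mix1 j c v' hch.2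
        intro x hx
        apply hl
        cases v' with
        | nil => simp at hx
        | cons b' t' => rw [List.getLast?_cons_cons]; exact hx

theorem av_of_ne : ∀ (v : List ℕ), List.Chain' (· ≠ ·) v → Av (· ≠ ·) (· = ·) v
  | [], _ => trivial
  | [_], _ => trivial
  | [_, _], _ => trivial
  | a :: b :: c :: t, h => by
      have h2 := List.isChain_cons_cons.1 h
      have h3 := List.isChain_cons_cons.1 h2.2
      exact ⟨fun hh => h3.1 hh.2, av_of_ne (b :: c :: t) h2.2⟩

theorem av_mix2 (c : ℕ) (v : List ℕ) (hch : List.Chain' (· ≠ ·) v)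
    (hh : ∀ x ∈ v.head?, x = c) : ∀ k, Av (· ≠ ·) (· = ·) (List.replicate k c ++ v)
  | 0 => av_of_ne v hch
  | (k+1) => by
      show Av _ _ (c :: (List.replicate k c ++ v))
      apply av_cons
      · rintro b c' t ht ⟨hcb, _⟩
        apply hcb
        have := head?_replicate_append k v hh
        rw [ht] at this
        exact (this b (by simp)).symm
      · exact av_mix2 c v hch hh k

/-! ### structure of avoiding words -/

theorem const_of_av : ∀ (l : List ℕ) (a : ℕ), Av (· = ·) (· ≠ ·) (a :: l) →
    (∀ x ∈ l.head?, x = a) → l = List.replicate l.length a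
  | [], _, _, _ => rfl
  | b :: t, a, hav, hh => by
      have hba : b = a := hh b (by simp)
      have hd : ∀ x ∈ t.head?, x = b := by
        intro x hx
        match t, hx with
        | c :: t', hx =>
          simp at hx
          subst hx
          by_contra hne
          exact hav.1 ⟨hba.symm, fun h => hne h.symm⟩
      have ht : t = List.replicate t.length b := const_of_av t b (av_tail hav) hd
      rw [show (b :: t).length = t.length + 1 from rfl, List.replicate_succ, ← hba]
      exact congrArg (b :: ·) ht

theorem ne_chain_of_av : ∀ (l : List ℕ) (a : ℕ), Av (· ≠ ·) (· = ·) (a :: l) →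
    (∀ x ∈ l.head?, x ≠ a) → List.Chain' (· ≠ ·) (a :: l)
  | [], a, _, _ => List.isChain_singleton a
  | b :: t, a, hav, hh => by
      have hab : a ≠ b := fun h => hh b (by simp) h.symm
      refine List.isChain_cons_cons.2 ⟨hab, ?_⟩
      apply ne_chain_of_av t b (av_tail hav)
      intro x hx
      match t, hx with
      | c :: t', hx =>
        simp at hx
        subst hx
        intro hcb
        exact hav.1 ⟨hab, hcb.symm⟩

theorem reprS : ∀ (w : List ℕ), w ≠ [] → List.Chain' (fun a b => b ≤ a + 1) w →
    Av (· = ·) (· ≠ ·) w →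
    ∃ v₀ c j, w = v₀ ++ List.replicate (j + 1) c ∧
      List.Chain' (fun a b => b ≤ a + 1 ∧ a ≠ b) (v₀ ++ [c]) ∧
      (v₀ ++ [c]).head? = w.head?
  | [], h, _, _ => absurd rfl h
  | [a], _, _, _ => ⟨[], a, 0, by simp, by simp [chain'_eq, List.isChain_singleton], by simp⟩
  | a :: b :: t, _, hcat, hav => by
      by_cases hab : a = b
      · have hconst : b :: t = List.replicate (b :: t).length a :=
          const_of_av (b :: t) a hav (by simp [hab.symm])
        refine ⟨[], a, (b :: t).length, ?_, by simp [chain'_eq, List.isChain_singleton], by simp⟩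
        rw [List.nil_append, List.replicate_succ, ← hconst]
      · obtain ⟨v₀, c, j, hw, hgc, hhd⟩ :=
          reprS (b :: t) (by simp) (List.isChain_cons_cons.1 hcat).2 (av_tail hav)
        refine ⟨a :: v₀, c, j, by rw [List.cons_append, ← hw], ?_, by simp⟩
        rw [List.cons_append, chain'_eq, List.isChain_cons]
        refine ⟨?_, hgc⟩
        intro x hx
        rw [hhd] at hx
        simp at hx
        subst hx
        exact ⟨(List.isChain_cons_cons.1 hcat).1, hab⟩

theorem reprT : ∀ (w : List ℕ) (a : ℕ), Av (· ≠ ·) (· = ·) (a :: w) →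
    ∃ k u, a :: w = List.replicate (k + 1) a ++ u ∧ List.Chain' (· ≠ ·) (a :: u)
  | [], a, _ => ⟨0, [], by simp, List.isChain_singleton a⟩
  | b :: t, a, hav => by
      by_cases hab : a = b
      · obtain ⟨k, u, hw, hch⟩ := reprT t b (av_tail hav)
        refine ⟨k + 1, u, ?_, ?_⟩
        · rw [show List.replicate (k + 1 + 1) a = a :: List.replicate (k + 1) a from rfl,
            List.cons_append, hab, ← hw]
        · rw [hab]; exact hch
      · refine ⟨0, b :: t, by simp, ?_⟩
        apply ne_chain_of_av (b :: t) a hav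
        intro x hx
        simp at hx
        subst hx
        exact fun h => hab h.symm

/-! ### strip computation -/

theorem strip_eq_of_head (a : ℕ) : ∀ (l : List ℕ), (∀ x ∈ l.head?, x ≠ a) → strip a l = l
  | [], _ => rfl
  | b :: t, h => by
      have : b ≠ a := h b (by simp)
      simp [strip, this]

theorem strip_replicate_append (a : ℕ) (l : List ℕ) :
    ∀ k, strip a (List.replicate k a ++ l) = strip a l
  | 0 => by simp
  | k + 1 => by
      rw [List.replicate_succ, List.cons_append]
      show strip a (a :: (List.replicate k a ++ l)) = strip a l
      rw [show strip a (a :: (List.replicate k a ++ l)) =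
        if a = a then strip a (List.replicate k a ++ l) else a :: (List.replicate k a ++ l) from rfl]
      rw [if_pos rfl]
      exact strip_replicate_append a l k

/-! ### computing fmap and gmap on normal forms -/

theorem compute_f (v₀ : List ℕ) (c j : ℕ) (hgc : List.Chain' (· ≠ ·) (v₀ ++ [c])) :
    fmap (v₀ ++ List.replicate (j + 1) c) = List.replicate j 0 ++ (v₀ ++ [c]) := by
  have hlast : ∀ x ∈ v₀.getLast?, x ≠ c := by
    intro x hx
    have := (List.isChain_append.1 hgc).2.2 x hx c (by simp)
    exact this
  have hrev : (v₀ ++ List.replicate (j + 1) c).reverse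
      = c :: (List.replicate j c ++ v₀.reverse) := by
    rw [List.reverse_append, List.reverse_replicate]
    rw [show List.replicate (j + 1) c = c :: List.replicate j c from rfl, List.cons_append]
  have hstrip : strip c (List.replicate j c ++ v₀.reverse) = v₀.reverse := by
    rw [strip_replicate_append]
    apply strip_eq_of_head
    intro x hx
    apply hlast
    rwa [← List.head?_reverse]
  unfold fmap
  rw [hrev]
  show List.replicate ((v₀ ++ List.replicate (j + 1) c).length
      - ((c :: strip c (List.replicate j c ++ v₀.reverse)).reverse).length) 0
      ++ (c :: strip c (List.replicate j c ++ v₀.reverse)).reverse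
    = List.replicate j 0 ++ (v₀ ++ [c])
  rw [hstrip]
  have h1 : (c :: v₀.reverse).reverse = v₀ ++ [c] := by simp
  rw [h1]
  congr 1
  simp
  omega

theorem compute_g (u : List ℕ) (k : ℕ) (hh : ∀ x ∈ u.head?, x ≠ 0) :
    gmap (List.replicate (k + 1) 0 ++ u)
      = (0 :: u) ++ List.replicate k (u.getLastD 0) := by
  have hw : List.replicate (k + 1) 0 ++ u = 0 :: (List.replicate k 0 ++ u) := by
    rw [show List.replicate (k + 1) 0 = 0 :: List.replicate k 0 from rfl, List.cons_append]
  rw [hw]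
  have hstrip : strip 0 (List.replicate k 0 ++ u) = u := by
    rw [strip_replicate_append]
    exact strip_eq_of_head 0 u hh
  show (0 :: strip 0 (List.replicate k 0 ++ u)) ++
      List.replicate ((0 :: (List.replicate k 0 ++ u)).length
        - (0 :: strip 0 (List.replicate k 0 ++ u)).length)
        ((strip 0 (List.replicate k 0 ++ u)).getLastD 0)
    = (0 :: u) ++ List.replicate k (u.getLastD 0)
  rw [hstrip]
  congr 2
  simp

/-! ### dcount lemmas -/

theorem dcount_rep (c : ℕ) : ∀ j, dcount (List.replicate j c) = 0
  | 0 => rfl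
  | 1 => rfl
  | j + 2 => by
      show dcount (c :: c :: List.replicate j c) = 0
      rw [show dcount (c :: c :: List.replicate j c)
        = (if c < c then 1 else 0) + dcount (c :: List.replicate j c) from rfl]
      rw [if_neg (lt_irrefl c)]
      simpa [List.replicate_succ] using dcount_rep c (j + 1)

theorem dcount_append_rep : ∀ (v : List ℕ) (c j : ℕ), (∀ x ∈ v.getLast?, x = c) →
    dcount (v ++ List.replicate j c) = dcount v
  | [], c, j, _ => dcount_rep c j
  | [a], c, j, h => by
      have hac : a = c := by simpa using h
      subst hac
      show dcount (a :: List.replicate j a) = dcount [a]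
      rw [show dcount [a] = 0 from rfl]
      exact dcount_rep a (j + 1)
  | a :: b :: t, c, j, h => by
      show dcount (a :: b :: (t ++ List.replicate j c)) = dcount (a :: b :: t)
      rw [show dcount (a :: b :: (t ++ List.replicate j c))
        = (if b < a then 1 else 0) + dcount (b :: (t ++ List.replicate j c)) from rfl]
      rw [show dcount (a :: b :: t) = (if b < a then 1 else 0) + dcount (b :: t) from rfl]
      have := dcount_append_rep (b :: t) c j (by rwa [List.getLast?_cons_cons] at h)
      rw [show (b :: t) ++ List.replicate j c = b :: (t ++ List.replicate j c) from rfl] at this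
      rw [this]

theorem dcount_rep_zero_append : ∀ (k : ℕ) (v : List ℕ),
    dcount (List.replicate k 0 ++ v) = dcount v
  | 0, v => by simp
  | k + 1, v => by
      show dcount (0 :: (List.replicate k 0 ++ v)) = dcount v
      cases hk : List.replicate k 0 ++ v with
      | nil =>
          have hv : v = [] := by
            rcases List.append_eq_nil_iff.1 hk with ⟨_, h2⟩
            exact h2
          subst hv
          rfl
      | cons b t =>
          rw [show dcount (0 :: b :: t) = (if b < 0 then 1 else 0) + dcount (b :: t) from rfl]
          rw [if_neg (Nat.not_lt_zero b)]
          rw [← hk]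
          simpa using dcount_rep_zero_append k v

/-! ### membership lemmas -/

theorem convT (u : List ℕ) (k : ℕ)
    (hgc : List.Chain' (fun a b => b ≤ a + 1 ∧ a ≠ b) (0 :: u)) :
    IsCatalanWord (List.replicate (k + 1) 0 ++ u) ∧
      AvoidsPair (· ≠ ·) (· = ·) (List.replicate (k + 1) 0 ++ u) := by
  have hrw : List.replicate (k + 1) 0 ++ u = List.replicate k 0 ++ (0 :: u) := by
    rw [List.replicate_succ', List.append_assoc, List.singleton_append]
  constructor
  · rw [cat_iff, hrw]
    refine ⟨?_, ?_⟩
    · exact head?_replicate_append k (0 :: u) (by simp)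
    · rw [chain'_eq, List.isChain_append]
      refine ⟨chain'_replicate (by omega) k, hgc.imp fun a b h => h.1, ?_⟩
      intro x hx y hy
      have hx0 : x = 0 := getLast?_replicate_eq k x hx
      have hy0 : 0 = y := by simpa using hy
      omega
  · rw [av_iff, hrw]
    exact av_mix2 0 (0 :: u) (hgc.imp fun a b h => h.2) (by simp) k

theorem convS (u : List ℕ) (j : ℕ)
    (hgc : List.Chain' (fun a b => b ≤ a + 1 ∧ a ≠ b) (0 :: u)) :
    IsCatalanWord ((0 :: u) ++ List.replicate j (u.getLastD 0)) ∧
      AvoidsPair (· = ·) (· ≠ ·) ((0 :: u) ++ List.replicate j (u.getLastD 0)) := by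
  set c := u.getLastD 0 with hc
  have hlast : (0 :: u).getLast? = some c := by
    rw [List.getLast?_cons]
    simp [hc, List.getLastD_eq_getLast?]
  constructor
  · rw [cat_iff]
    refine ⟨?_, ?_⟩
    · intro x hx
      rw [List.head?_append] at hx
      simp at hx
      omega
    · rw [chain'_eq, List.isChain_append]
      refine ⟨hgc.imp fun a b h => h.1, chain'_replicate (by omega) j, ?_⟩
      intro x hx y hy
      rw [hlast] at hx
      simp at hx
      have hy0 : y = c := getLast?_replicate_eq j y (by
        rw [List.getLast?_replicate]
        rwa [List.head?_replicate] at hy)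
      omega
  · rw [av_iff]
    apply av_mix1 j c (0 :: u) (hgc.imp fun a b h => h.2)
    intro x hx
    rw [hlast] at hx
    simp at hx
    omega

/-! ### main lemmas -/

theorem rep_shift (j : ℕ) (u : List ℕ) :
    List.replicate j 0 ++ (0 :: u) = List.replicate (j + 1) 0 ++ u := by
  rw [List.replicate_succ', List.append_assoc, List.singleton_append]

theorem main_f {w : List ℕ} (hcat : IsCatalanWord w) (hav : AvoidsPair (· = ·) (· ≠ ·) w) :
    (fmap w).length = w.length ∧ IsCatalanWord (fmap w) ∧
      AvoidsPair (· ≠ ·) (· = ·) (fmap w) ∧ gmap (fmap w) = w ∧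
      descents (fmap w) = descents w := by
  rcases eq_or_ne w [] with rfl | hne
  · exact ⟨rfl, hcat, by rw [av_iff]; trivial, rfl, rfl⟩
  · rw [cat_iff] at hcat
    rw [av_iff] at hav
    obtain ⟨v₀, c, j, hw, hgc, hhd⟩ := reprS w hne hcat.2 hav
    have hh : ∀ x ∈ (v₀ ++ [c]).head?, x = 0 := by
      rw [hhd]; exact hcat.1
    obtain ⟨u₂, hu⟩ : ∃ u₂, v₀ ++ [c] = 0 :: u₂ := by
      cases v₀ with
      | nil => exact ⟨[], by simpa using hh c (by simp)⟩
      | cons a t =>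
          refine ⟨t ++ [c], ?_⟩
          have : a = 0 := hh a (by simp)
          rw [List.cons_append, this]
    have hgc2 : List.Chain' (fun a b => b ≤ a + 1 ∧ a ≠ b) (0 :: u₂) := hu ▸ hgc
    have hcgl : c = u₂.getLastD 0 := by
      have h1 : (v₀ ++ [c]).getLast? = some c := List.getLast?_concat (l := v₀)
      rw [hu, List.getLast?_cons] at h1
      rw [List.getLastD_eq_getLast?]
      exact (Option.some_injective _ h1).symm
    have hfw : fmap w = List.replicate j 0 ++ (0 :: u₂) := by
      rw [hw, compute_f v₀ c j (hgc.imp fun a b h => h.2), hu]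
    have hu₂head : ∀ x ∈ u₂.head?, x ≠ 0 := by
      intro x hx
      have := (List.isChain_cons.1 hgc2).1 x hx
      exact fun h0 => this.2 h0.symm
    have hwform : w = (0 :: u₂) ++ List.replicate j c := by
      rw [hw, show List.replicate (j + 1) c = c :: List.replicate j c from rfl]
      rw [← List.singleton_append, ← List.append_assoc, hu]
    refine ⟨?_, ?_, ?_, ?_, ?_⟩
    · rw [hfw, hwform]
      simp only [List.length_append, List.length_replicate, List.length_cons]
      omega
    · rw [hfw, rep_shift]; exact (convT u₂ j hgc2).1
    · rw [hfw, rep_shift]; exact (convT u₂ j hgc2).2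
    · rw [hfw, rep_shift, compute_g u₂ j hu₂head, hwform, hcgl]
    · rw [hfw, hwform, descents_eq, descents_eq, dcount_rep_zero_append]
      have : (0 :: u₂).getLast? = some c := by
        rw [← hu]; exact List.getLast?_concat (l := v₀)
      rw [dcount_append_rep (0 :: u₂) c j (by intro x hx; rw [this] at hx; simp at hx; omega)]

theorem main_g {w : List ℕ} (hcat : IsCatalanWord w) (hav : AvoidsPair (· ≠ ·) (· = ·) w) :
    (gmap w).length = w.length ∧ IsCatalanWord (gmap w) ∧
      AvoidsPair (· = ·) (· ≠ ·) (gmap w) ∧ fmap (gmap w) = w := by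
  rcases eq_or_ne w [] with rfl | hne
  · exact ⟨rfl, hcat, by rw [av_iff]; trivial, rfl⟩
  · rw [cat_iff] at hcat
    rw [av_iff] at hav
    obtain ⟨a, t, rfl⟩ : ∃ a t, w = a :: t := by
      cases w with
      | nil => exact absurd rfl hne
      | cons a t => exact ⟨a, t, rfl⟩
    have ha0 : a = 0 := hcat.1 a (by simp)
    subst ha0
    obtain ⟨k, u, hw, hch⟩ := reprT t 0 hav
    have hcatu : List.Chain' (fun a b => b ≤ a + 1) (0 :: u) := by
      have := hcat.2
      rw [hw, ← rep_shift, chain'_eq, List.isChain_append] at this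
      exact this.2.1
    have hgc : List.Chain' (fun a b => b ≤ a + 1 ∧ a ≠ b) (0 :: u) := chain'_and hcatu hch
    have hu₂head : ∀ x ∈ u.head?, x ≠ 0 := by
      intro x hx
      have := (List.isChain_cons.1 hch).1 x hx
      exact fun h0 => this h0.symm
    have hgw : gmap (0 :: t) = (0 :: u) ++ List.replicate k (u.getLastD 0) := by
      rw [hw]; exact compute_g u k hu₂head
    obtain ⟨v₀, c, hvc⟩ : ∃ v₀ c, (0 : ℕ) :: u = v₀ ++ [c] := by
      rcases List.eq_nil_or_concat ((0 : ℕ) :: u) with h | ⟨L, b, h⟩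
      · simp at h
      · exact ⟨L, b, by rw [h, List.concat_eq_append]⟩
    have hcgl : c = u.getLastD 0 := by
      have h1 : (v₀ ++ [c]).getLast? = some c := List.getLast?_concat (l := v₀)
      rw [← hvc, List.getLast?_cons] at h1
      rw [List.getLastD_eq_getLast?]
      exact (Option.some_injective _ h1).symm
    have hgw2 : gmap (0 :: t) = v₀ ++ List.replicate (k + 1) c := by
      rw [hgw, ← hcgl, hvc, show List.replicate (k + 1) c = c :: List.replicate k c from rfl,
        ← List.singleton_append, ← List.append_assoc]
      simp
    have hgc' : List.Chain' (fun a b => b ≤ a + 1 ∧ a ≠ b) (v₀ ++ [c]) := by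
      rw [← hvc]; exact hgc
    refine ⟨?_, ?_, ?_, ?_⟩
    · rw [hgw, hw, ← rep_shift]
      simp only [List.length_append, List.length_replicate, List.length_cons]
      omega
    · rw [hgw]; exact (convS u k hgc).1
    · rw [hgw]; exact (convS u k hgc).2
    · rw [hgw2, compute_f v₀ c k (hgc'.imp fun a b h => h.2), ← hvc, rep_shift, ← hw]

end Stmt15

theorem stmt_15 (n : ℕ) :
    (CW n (· = ·) (· ≠ ·)).ncard = (CW n (· ≠ ·) (· = ·)).ncard ∧
    ∃ e : CW n (· = ·) (· ≠ ·) ≃ CW n (· ≠ ·) (· = ·),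
      ∀ w : CW n (· = ·) (· ≠ ·), descents (e w : List ℕ) = descents (w : List ℕ) := by
  let e : CW n (· = ·) (· ≠ ·) ≃ CW n (· ≠ ·) (· = ·) :=
    { toFun := fun w => ⟨Stmt15.fmap w.1, by
        obtain ⟨h1, h2, h3⟩ := w.2
        obtain ⟨hl, hc, ha, _, _⟩ := Stmt15.main_f h2 h3
        exact ⟨by rw [hl, h1], hc, ha⟩⟩
      invFun := fun w => ⟨Stmt15.gmap w.1, by
        obtain ⟨h1, h2, h3⟩ := w.2
        obtain ⟨hl, hc, ha, _⟩ := Stmt15.main_g h2 h3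
        exact ⟨by rw [hl, h1], hc, ha⟩⟩
      left_inv := fun w => by
        obtain ⟨h1, h2, h3⟩ := w.2
        exact Subtype.ext (Stmt15.main_f h2 h3).2.2.2.1
      right_inv := fun w => by
        obtain ⟨h1, h2, h3⟩ := w.2
        exact Subtype.ext (Stmt15.main_g h2 h3).2.2.2 }
  refine ⟨?_, e, ?_⟩
  · rw [← Nat.card_coe_set_eq, ← Nat.card_coe_set_eq]
    exact Nat.card_congr e
  · intro w
    obtain ⟨h1, h2, h3⟩ := w.2
    exact (Stmt15.main_f h2 h3).2.2.2.2
end
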